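/- arXiv:0804.3421 — 11 statements merged into one kernel-verified Lean document; each statement's English description precedes it below -/
import Mathlib

section
/- For any n × n complex Hermitian positive semidefinite matrices A and B, det(I + A + B) ≤ det(I + A) · det(I + B), where I is the n × n identity matrix and all three determinants are positive reals. -/
open Matrix ComplexOrder

open ComplexOrder

/-- For PSD `E`, `1 ≤ det (1 + E)`. -/
lemma aux_one_le_det_one_add {n : ℕ} {E : Matrix (Fin n) (Fin n) ℂ}
    (hE : E.PosSemidef) : (1 : ℂ) ≤ (1 + E).det := by
  have hH := hE.isHermitian
  set U : Matrix (Fin n) (Fin n) ℂ := (Matrix.IsHermitian.eigenvectorUnitary hH : Matrix (Fin n) (Fin n) ℂ) with hU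
  have hUU : U * star U = 1 := (Matrix.mem_unitaryGroup_iff).mp (Matrix.IsHermitian.eigenvectorUnitary hH).2
  have hdecomp : 1 + E = U * (1 + Matrix.diagonal (RCLike.ofReal ∘ hH.eigenvalues)) * star U := by
    rw [Matrix.mul_add, Matrix.add_mul, Matrix.mul_one, hUU]
    congr 1
    exact hH.spectral_theorem
  rw [hdecomp, Matrix.det_mul, Matrix.det_mul, mul_comm (U.det), mul_assoc,
    ← Matrix.det_mul, hUU, Matrix.det_one, mul_one]
  have h1 : (1 : Matrix (Fin n) (Fin n) ℂ) + Matrix.diagonal (RCLike.ofReal ∘ hH.eigenvalues)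
      = Matrix.diagonal (fun i => ((1 + hH.eigenvalues i : ℝ) : ℂ)) := by
    rw [← Matrix.diagonal_one, Matrix.diagonal_add]
    congr! 1 with i
    push_cast
    rfl
  rw [h1, Matrix.det_diagonal]
  have : (∏ i, ((1 + hH.eigenvalues i : ℝ) : ℂ)) = ((∏ i, (1 + hH.eigenvalues i) : ℝ) : ℂ) := by
    push_cast; rfl
  rw [this]
  rw [show (1 : ℂ) = ((1 : ℝ) : ℂ) from rfl, Complex.real_le_real]
  calc (1:ℝ) = ∏ _i : Fin n, (1:ℝ) := by simp
    _ ≤ ∏ i, (1 + hH.eigenvalues i) :=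
      Finset.prod_le_prod (fun i _ => zero_le_one)
        (fun i _ => by linarith [hE.eigenvalues_nonneg i])

/-- Determinant monotonicity: for posdef `P` and PSD `D`, `det P ≤ det (P + D)`. -/
lemma aux_det_le_det_add {n : ℕ} {P D : Matrix (Fin n) (Fin n) ℂ}
    (hP : P.PosDef) (hD : D.PosSemidef) : P.det ≤ (P + D).det := by
  have hPdet : IsUnit P.det := hP.det_pos.ne'.isUnit
  open scoped MatrixOrder in
  set S := CFC.sqrt D with hS
  have hSS : S * S = D := by open scoped MatrixOrder in exact CFC.sqrt_mul_sqrt_self D hD.nonneg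
  have hSH : S.IsHermitian := by open scoped MatrixOrder in exact (CFC.sqrt_nonneg D).posSemidef.isHermitian
  have hkey : (P + D).det = P.det * (1 + S * P⁻¹ * S).det := by
    rw [← hSS]
    exact Matrix.det_add_mul S S hPdet
  have hX : (S * P⁻¹ * S).PosSemidef := by
    have := hP.inv.posSemidef.conjTranspose_mul_mul_same S
    rwa [hSH.eq] at this
  rw [hkey]
  calc P.det = P.det * 1 := (mul_one _).symm
    _ ≤ P.det * (1 + S * P⁻¹ * S).det :=
      mul_le_mul_of_nonneg_left (aux_one_le_det_one_add hX) hP.det_pos.le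

/-- For Hermitian positive semidefinite complex matrices `A`, `B`,
`det (I + A + B) ≤ det (I + A) * det (I + B)`, all three determinants being
positive reals (positivity expressed via the complex order). -/
theorem det_one_add_add_le_det_mul_det {n : ℕ}
    (A B : Matrix (Fin n) (Fin n) ℂ)
    (hA : A.PosSemidef) (hB : B.PosSemidef) :
    0 < (1 + A).det ∧ 0 < (1 + B).det ∧ 0 < (1 + A + B).det ∧
      (1 + A + B).det ≤ (1 + A).det * (1 + B).det := by
  have hA1 : (1 + A).PosDef := Matrix.PosDef.one.add_posSemidef hA
  have hB1 : (1 + B).PosDef := Matrix.PosDef.one.add_posSemidef hB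
  have hAB1 : (1 + A + B).PosDef := hA1.add_posSemidef hB
  refine ⟨hA1.det_pos, hB1.det_pos, hAB1.det_pos, ?_⟩
  have hBdet : IsUnit (1 + B).det := hB1.det_pos.ne'.isUnit
  have hBmul : (1 + B) * (1 + B)⁻¹ = 1 := Matrix.mul_nonsing_inv _ hBdet
  have hBmul' : (1 + B)⁻¹ * (1 + B) = 1 := Matrix.nonsing_inv_mul _ hBdet
  open scoped MatrixOrder in
  set S := CFC.sqrt A with hS
  have hSS : S * S = A := by open scoped MatrixOrder in exact CFC.sqrt_mul_sqrt_self A hA.nonneg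
  have hSH : S.IsHermitian := by open scoped MatrixOrder in exact (CFC.sqrt_nonneg A).posSemidef.isHermitian
  set X := S * (1 + B)⁻¹ * S with hXdef
  -- det (1+A+B) = det (1+B) * det (1+X)
  have hsplit : (1 : Matrix (Fin n) (Fin n) ℂ) + A + B = (1 + B) + S * S := by
    rw [hSS]; abel
  have hdet1 : (1 + A + B).det = (1 + B).det * (1 + X).det := by
    rw [hsplit]
    exact Matrix.det_add_mul S S hBdet
  -- X is PSD
  have hX : X.PosSemidef := by
    have := hB1.inv.posSemidef.conjTranspose_mul_mul_same S
    rwa [hSH.eq] at this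
  -- A - X is PSD
  have hG : ((1 : Matrix (Fin n) (Fin n) ℂ) - (1 + B)⁻¹).PosSemidef := by
    have hBB : (B + B * B).PosSemidef := by
      have : B * B = Bᴴ * B := by rw [hB.isHermitian.eq]
      rw [this]
      exact hB.add (Matrix.posSemidef_conjTranspose_mul_self B)
    have hInvH : ((1 + B)⁻¹).IsHermitian := hB1.inv.isHermitian
    have heq : (1 : Matrix (Fin n) (Fin n) ℂ) - (1 + B)⁻¹
        = ((1 + B)⁻¹)ᴴ * (B + B * B) * (1 + B)⁻¹ := by
      rw [hInvH.eq]
      have h1 : B + B * B = B * (1 + B) := by noncomm_ring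
      rw [h1, Matrix.mul_assoc, Matrix.mul_assoc, hBmul, Matrix.mul_one]
      have h2 : (1 : Matrix (Fin n) (Fin n) ℂ) - (1 + B)⁻¹ = (1 + B)⁻¹ * (1 + B) - (1 + B)⁻¹ * 1 := by
        rw [hBmul', Matrix.mul_one]
      rw [h2, ← Matrix.mul_sub]
      congr 1
      abel
    rw [heq]
    exact hBB.conjTranspose_mul_mul_same _
  have hAX : (A - X).PosSemidef := by
    have heq : A - X = Sᴴ * ((1 : Matrix (Fin n) (Fin n) ℂ) - (1 + B)⁻¹) * S := by
      rw [hSH.eq, Matrix.mul_sub, Matrix.sub_mul, Matrix.mul_one, hSS, hXdef]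
    rw [heq]
    exact hG.conjTranspose_mul_mul_same S
  -- det (1+X) ≤ det (1+A)
  have h1X : (1 + X).PosDef := Matrix.PosDef.one.add_posSemidef hX
  have hmono : (1 + X).det ≤ (1 + A).det := by
    have heq : (1 : Matrix (Fin n) (Fin n) ℂ) + A = (1 + X) + (A - X) := by abel
    rw [heq]
    exact aux_det_le_det_add h1X hAX
  rw [hdet1, mul_comm ((1 + A).det)]
  exact mul_le_mul_of_nonneg_left hmono hB1.det_pos.le
end

section
/- (The grand coalition maximizes spectrum utilization in the joint-decoding receiver cooperation game.) For every partition S₁, …, S_N of {1,…,K}, Σ_{n=1}^{N} v(S_n) ≤ v({1,…,K}), where v({1,…,K}) = log det(I_K + Σ_{k=1}^{K} P_k h_k h_k†) with h_k the k-th column of H; i.e., the game is cohesive and the grand coalition achieves the maximum total sum rate. -/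
open Matrix

/-- Interference-plus-noise covariance `N_S = I + ∑_{k∉S} P_k c_k(S) c_k(S)†` at the
receivers of coalition `S`, where `c_k(S) = (H_{m,k})_{m∈S}`. -/
noncomputable def noiseCov {K : ℕ} (H : Matrix (Fin K) (Fin K) ℂ) (P : Fin K → ℝ)
    (S : Finset (Fin K)) : Matrix ↥S ↥S ℂ :=
  1 + ∑ k ∈ Sᶜ, (P k : ℂ) • vecMulVec (fun m : ↥S => H m.1 k) (star fun m : ↥S => H m.1 k)

/-- Signal covariance `∑_{k∈S} P_k c_k(S) c_k(S)†` of coalition `S`. -/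
noncomputable def sigCov {K : ℕ} (H : Matrix (Fin K) (Fin K) ℂ) (P : Fin K → ℝ)
    (S : Finset (Fin K)) : Matrix ↥S ↥S ℂ :=
  ∑ k ∈ S, (P k : ℂ) • vecMulVec (fun m : ↥S => H m.1 k) (star fun m : ↥S => H m.1 k)

/-- Value of a coalition of jointly decoding receivers:
`v(S) = log det(N_S + ∑_{k∈S} P_k c_k c_k†) − log det N_S`. -/
noncomputable def rxValue {K : ℕ} (H : Matrix (Fin K) (Fin K) ℂ) (P : Fin K → ℝ)
    (S : Finset (Fin K)) : ℝ :=
  Real.log ((noiseCov H P S + sigCov H P S).det.re) - Real.log ((noiseCov H P S).det.re)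


section Helpers
open ComplexOrder
namespace RxGame


variable {K : ℕ} {ι : Type*} [Fintype ι] [DecidableEq ι]

noncomputable def gmat (P : Fin K → ℝ) (v : Fin K → ι → ℂ) (R : Finset (Fin K)) :
    Matrix ι ι ℂ :=
  1 + ∑ k ∈ R, (P k : ℂ) • vecMulVec (v k) (star (v k))

lemma gmat_mulVec (P : Fin K → ℝ) (v : Fin K → ι → ℂ) (R : Finset (Fin K)) (x : ι → ℂ) :
    gmat P v R *ᵥ x = x + ∑ k ∈ R, ((P k : ℂ) * (dotProduct (star (v k)) x)) • (v k) := by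
  unfold gmat
  rw [add_mulVec, one_mulVec]
  congr 1
  ext i
  simp only [mulVec, dotProduct, Matrix.sum_apply, Matrix.smul_apply, Finset.sum_apply,
    Pi.smul_apply, vecMulVec_apply, smul_eq_mul, Finset.sum_mul, Finset.mul_sum, Pi.star_apply]
  rw [Finset.sum_comm]
  exact Finset.sum_congr rfl fun k _ => Finset.sum_congr rfl fun j _ => by ring

lemma star_dot_conj (u w : ι → ℂ) :
    dotProduct (star u) w = starRingEnd ℂ (dotProduct (star w) u) := by
  rw [star_dotProduct]
  simp

lemma quadform (P : Fin K → ℝ) (v : Fin K → ι → ℂ) (R : Finset (Fin K)) (x : ι → ℂ) :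
    dotProduct (star x) (gmat P v R *ᵥ x) =
      (((∑ i, Complex.normSq (x i)) + ∑ k ∈ R, P k * Complex.normSq (dotProduct (star (v k)) x) : ℝ) : ℂ) := by
  rw [gmat_mulVec, dotProduct_add]
  push_cast
  congr 1
  · simp only [dotProduct, Pi.star_apply, Complex.star_def]
    exact Finset.sum_congr rfl fun i _ => by
      rw [← Complex.normSq_eq_conj_mul_self]
  · rw [dotProduct]
    simp only [Pi.star_apply, Finset.sum_apply, Pi.smul_apply, smul_eq_mul, Finset.mul_sum,
      Complex.star_def]
    rw [Finset.sum_comm]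
    refine Finset.sum_congr rfl fun k _ => ?_
    have : ∑ i, starRingEnd ℂ (x i) * ((P k : ℂ) * (dotProduct (star (v k)) x) * v k i)
        = (P k : ℂ) * ((dotProduct (star (v k)) x) * ∑ i, starRingEnd ℂ (x i) * v k i) := by
      rw [Finset.mul_sum, Finset.mul_sum]
      exact Finset.sum_congr rfl fun i _ => by ring
    rw [this]
    have h2 : ∑ i, starRingEnd ℂ (x i) * v k i = starRingEnd ℂ (dotProduct (star (v k)) x) := by
      rw [dotProduct, map_sum]
      exact Finset.sum_congr rfl fun i _ => by
        simp only [Pi.star_apply, Complex.star_def, RingHom.map_mul, Complex.conj_conj]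
        ring
    rw [h2, Complex.mul_conj]

lemma gmat_herm (P : Fin K → ℝ) (v : Fin K → ι → ℂ) (R : Finset (Fin K)) :
    (gmat P v R).IsHermitian := by
  unfold gmat
  apply Matrix.IsHermitian.add Matrix.isHermitian_one
  apply Finset.sum_induction _ _ (fun A B hA hB => hA.add hB) Matrix.isHermitian_zero
  intro k _
  unfold Matrix.IsHermitian
  ext i j
  simp only [conjTranspose_apply, Matrix.smul_apply, vecMulVec_apply, Pi.star_apply,
    Complex.star_def, smul_eq_mul, _root_.map_mul, Complex.conj_conj, Complex.conj_ofReal]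
  ring

lemma gmat_psd (P : Fin K → ℝ) (hP : ∀ k, 0 ≤ P k) (v : Fin K → ι → ℂ) (R : Finset (Fin K)) :
    (gmat P v R).PosSemidef := by
  refine Matrix.PosSemidef.of_dotProduct_mulVec_nonneg (gmat_herm P v R) fun x => ?_
  rw [quadform]
  rw [Complex.zero_le_real]
  have h1 : (0:ℝ) ≤ ∑ i, Complex.normSq (x i) :=
    Finset.sum_nonneg fun i _ => Complex.normSq_nonneg _
  have h2 : (0:ℝ) ≤ ∑ k ∈ R, P k * Complex.normSq (dotProduct (star (v k)) x) :=
    Finset.sum_nonneg fun k _ => mul_nonneg (hP k) (Complex.normSq_nonneg _)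
  linarith

lemma var_ineq {M : Matrix ι ι ℂ} (hM : M.PosSemidef) (hdet : IsUnit M.det) (x y : ι → ℂ) :
    (dotProduct (star y) x).re + (dotProduct (star x) y).re
      - (dotProduct (star y) (M *ᵥ y)).re ≤ (dotProduct (star x) (M⁻¹ *ᵥ x)).re := by
  set z := y - M⁻¹ *ᵥ x with hz
  have h0 : 0 ≤ (dotProduct (star z) (M *ᵥ z)).re := by
    have := hM.re_dotProduct_nonneg z
    simpa using this
  have hMz : M *ᵥ z = M *ᵥ y - x := by
    rw [hz, mulVec_sub, mulVec_mulVec, Matrix.mul_nonsing_inv _ hdet, one_mulVec]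
  have hw1 : dotProduct (star (M⁻¹ *ᵥ x)) (M *ᵥ y) = dotProduct (star x) y := by
    rw [star_mulVec, hM.1.inv.eq, Matrix.dotProduct_mulVec, vecMul_vecMul,
      Matrix.nonsing_inv_mul _ hdet, vecMul_one]
  have hw2 : dotProduct (star (M⁻¹ *ᵥ x)) x = dotProduct (star x) (M⁻¹ *ᵥ x) := by
    rw [star_mulVec, hM.1.inv.eq, Matrix.dotProduct_mulVec]
  have hexp : dotProduct (star z) (M *ᵥ z)
      = dotProduct (star y) (M *ᵥ y) - dotProduct (star y) x
        - dotProduct (star x) y + dotProduct (star x) (M⁻¹ *ᵥ x) := by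
    rw [hz, hMz]
    have : star (y - M⁻¹ *ᵥ x) = star y - star (M⁻¹ *ᵥ x) := by
      ext i; simp [sub_eq_add_neg]
    rw [this, sub_dotProduct, dotProduct_sub, dotProduct_sub, hw1, hw2]
    ring
  rw [hexp] at h0
  simp only [Complex.sub_re, Complex.add_re] at h0
  linarith

noncomputable def Qf (P : Fin K → ℝ) (v : Fin K → ι → ℂ) (R : Finset (Fin K)) (k : Fin K) : ℝ :=
  (dotProduct (star (v k)) ((gmat P v R)⁻¹ *ᵥ (v k))).re

lemma herm_dot_real {N : Matrix ι ι ℂ} (hN : N.IsHermitian) (x : ι → ℂ) :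
    (((dotProduct (star x) (N *ᵥ x)).re : ℝ) : ℂ) = dotProduct (star x) (N *ᵥ x) := by
  have h : star (dotProduct (star x) (N *ᵥ x)) = dotProduct (star x) (N *ᵥ x) := by
    rw [← star_dotProduct, star_mulVec, hN.eq, ← Matrix.dotProduct_mulVec]
  rw [Complex.star_def] at h
  exact Complex.conj_eq_iff_re.mp h

noncomputable def dre (P : Fin K → ℝ) (v : Fin K → ι → ℂ) (R : Finset (Fin K)) : ℝ :=
  (gmat P v R).det.re

lemma gmat_det_real (P : Fin K → ℝ) (v : Fin K → ι → ℂ) (R : Finset (Fin K)) :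
    (gmat P v R).det = ((dre P v R : ℝ) : ℂ) := by
  have h := Matrix.det_conjTranspose (gmat P v R)
  rw [(gmat_herm P v R).eq] at h
  rw [Complex.star_def] at h
  exact (Complex.conj_eq_iff_re.mp h.symm).symm

lemma Qf_nonneg (P : Fin K → ℝ) (hP : ∀ k, 0 ≤ P k) (v : Fin K → ι → ℂ)
    (R : Finset (Fin K)) (k : Fin K) (hdet : IsUnit (gmat P v R).det) :
    0 ≤ Qf P v R k := by
  have := var_ineq (gmat_psd P hP v R) hdet (v k) 0
  simpa [Qf] using this

lemma smul_vecMulVec (c : ℂ) (u w : ι → ℂ) :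
    c • vecMulVec u w = vecMulVec (c • u) w := by
  ext i j
  simp [vecMulVec_apply, mul_assoc]

lemma det_insert (P : Fin K → ℝ) (v : Fin K → ι → ℂ) {R : Finset (Fin K)} {k : Fin K}
    (hk : k ∉ R) (hdet : IsUnit (gmat P v R).det) :
    (gmat P v (insert k R)).det = (gmat P v R).det
      * (1 + (P k : ℂ) * dotProduct (star (v k)) ((gmat P v R)⁻¹ *ᵥ (v k))) := by
  have hins : gmat P v (insert k R)
      = gmat P v R + replicateCol Unit ((P k : ℂ) • v k) * replicateRow Unit (star (v k)) := by
    rw [← vecMulVec_eq Unit, ← smul_vecMulVec]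
    unfold gmat
    rw [Finset.sum_insert hk]
    abel
  rw [hins, Matrix.det_add_replicateCol_mul_replicateRow (ι := Unit) hdet]
  congr 1
  rw [det_unique]
  simp only [Matrix.add_apply, Matrix.one_apply_eq]
  rw [← Matrix.replicateRow_vecMul, replicateRow_mul_replicateCol_apply, ← Matrix.dotProduct_mulVec, mulVec_smul,
    dotProduct_smul, smul_eq_mul]

lemma dre_insert (P : Fin K → ℝ) (v : Fin K → ι → ℂ) {R : Finset (Fin K)} {k : Fin K}
    (hk : k ∉ R) (hpos : 0 < dre P v R) :
    dre P v (insert k R) = dre P v R * (1 + P k * Qf P v R k) := by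
  have hdet : IsUnit (gmat P v R).det := by
    rw [gmat_det_real, isUnit_iff_ne_zero]
    exact_mod_cast hpos.ne'
  have h := det_insert P v hk hdet
  rw [gmat_det_real, gmat_det_real, ← herm_dot_real ((gmat_herm P v R).inv) (v k)] at h
  unfold Qf
  exact_mod_cast h

lemma dre_pos (P : Fin K → ℝ) (hP : ∀ k, 0 ≤ P k) (v : Fin K → ι → ℂ)
    (R : Finset (Fin K)) : 0 < dre P v R := by
  induction R using Finset.induction_on with
  | empty => simp [dre, gmat]
  | @insert k R hk ih =>
    have hdet : IsUnit (gmat P v R).det := by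
      rw [gmat_det_real, isUnit_iff_ne_zero]
      exact_mod_cast ih.ne'
    have hQ := Qf_nonneg P hP v R k hdet
    rw [dre_insert P v hk ih]
    have : (0:ℝ) < 1 + P k * Qf P v R k := by nlinarith [hP k]
    exact mul_pos ih this

lemma gmat_isUnit_det (P : Fin K → ℝ) (hP : ∀ k, 0 ≤ P k) (v : Fin K → ι → ℂ)
    (R : Finset (Fin K)) : IsUnit (gmat P v R).det := by
  rw [gmat_det_real, isUnit_iff_ne_zero]
  exact_mod_cast (dre_pos P hP v R).ne'

noncomputable def chainSum (P : Fin K → ℝ) (v : Fin K → ι → ℂ) (R₀ : Finset (Fin K)) :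
    List (Fin K) → ℝ
  | [] => 0
  | k :: L => Real.log (1 + P k * Qf P v (R₀ ∪ L.toFinset) k) + chainSum P v R₀ L

@[simp] lemma chainSum_nil (P : Fin K → ℝ) (v : Fin K → ι → ℂ) (R₀ : Finset (Fin K)) :
    chainSum P v R₀ [] = 0 := rfl

@[simp] lemma chainSum_cons (P : Fin K → ℝ) (v : Fin K → ι → ℂ) (R₀ : Finset (Fin K))
    (k : Fin K) (L : List (Fin K)) :
    chainSum P v R₀ (k :: L)
      = Real.log (1 + P k * Qf P v (R₀ ∪ L.toFinset) k) + chainSum P v R₀ L := rfl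

lemma chain (P : Fin K → ℝ) (hP : ∀ k, 0 ≤ P k) (v : Fin K → ι → ℂ) (R₀ : Finset (Fin K))
    (L : List (Fin K)) (hnd : L.Nodup) (hdis : ∀ k ∈ L, k ∉ R₀) :
    Real.log (dre P v (R₀ ∪ L.toFinset)) = Real.log (dre P v R₀) + chainSum P v R₀ L := by
  induction L with
  | nil => simp [chainSum]
  | cons k L ih =>
    have hndL : L.Nodup := (List.nodup_cons.mp hnd).2
    have hkL : k ∉ L := (List.nodup_cons.mp hnd).1
    have hk : k ∉ R₀ ∪ L.toFinset := by
      simp only [Finset.mem_union, List.mem_toFinset]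
      rintro (h | h)
      · exact hdis k List.mem_cons_self h
      · exact hkL h
    have hprev : 0 < dre P v (R₀ ∪ L.toFinset) := dre_pos P hP v _
    have hfac : (0:ℝ) < 1 + P k * Qf P v (R₀ ∪ L.toFinset) k := by
      have hQ := Qf_nonneg P hP v (R₀ ∪ L.toFinset) k (gmat_isUnit_det P hP v _)
      nlinarith [hP k]
    have hset : R₀ ∪ (k :: L).toFinset = insert k (R₀ ∪ L.toFinset) := by
      rw [List.toFinset_cons, Finset.union_insert]
    rw [hset, dre_insert P v hk hprev, Real.log_mul hprev.ne' hfac.ne',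
      ih hndL (fun j hj => hdis j (List.mem_cons_of_mem k hj))]
    rw [chainSum_cons]
    ring

lemma dot_re_symm (a b : ι → ℂ) :
    (dotProduct (star a) b).re = (dotProduct (star b) a).re := by
  rw [star_dot_conj]
  simp

variable {S : Finset (Fin K)}

noncomputable def ext0 (S : Finset (Fin K)) (y : ↥S → ℂ) : Fin K → ℂ :=
  fun j => if h : j ∈ S then y ⟨j, h⟩ else 0

lemma dot_ext (y : ↥S → ℂ) (w : Fin K → ℂ) :
    dotProduct (star (ext0 S y)) w = dotProduct (star y) (fun m : ↥S => w m.1) := by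
  rw [dotProduct, dotProduct]
  have hz : ∀ j ∈ Finset.univ, j ∉ S → star (ext0 S y) j * w j = 0 := by
    intro j _ hj
    simp [ext0, dif_neg hj]
  rw [← Finset.sum_subset (Finset.subset_univ S) hz, ← Finset.sum_coe_sort]
  exact Finset.sum_congr rfl fun m _ => by simp [ext0]

lemma normSq_ext (y : ↥S → ℂ) :
    ∑ j, Complex.normSq (ext0 S y j) = ∑ m : ↥S, Complex.normSq (y m) := by
  have hz : ∀ j ∈ Finset.univ, j ∉ S → Complex.normSq (ext0 S y j) = 0 := by
    intro j _ hj
    simp [ext0, dif_neg hj]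
  rw [← Finset.sum_subset (Finset.subset_univ S) hz, ← Finset.sum_coe_sort]
  exact Finset.sum_congr rfl fun m _ => by simp [ext0]

lemma quad_ext (P : Fin K → ℝ) (u : Fin K → Fin K → ℂ) (R : Finset (Fin K)) (y : ↥S → ℂ) :
    (dotProduct (star (ext0 S y)) (gmat P u R *ᵥ ext0 S y)).re
      = (dotProduct (star y) (gmat P (fun k (m : ↥S) => u k m.1) R *ᵥ y)).re := by
  rw [quadform, quadform, Complex.ofReal_re, Complex.ofReal_re]
  congr 1
  · exact normSq_ext y
  · refine Finset.sum_congr rfl fun j _ => ?_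
    congr 1
    calc Complex.normSq (dotProduct (star (u j)) (ext0 S y))
        = Complex.normSq (dotProduct (star (ext0 S y)) (u j)) := by
          rw [star_dot_conj]; exact Complex.normSq_conj _
      _ = Complex.normSq (dotProduct (star y) (fun m : ↥S => u j m.1)) := by rw [dot_ext]
      _ = Complex.normSq (dotProduct (star (fun m : ↥S => u j m.1)) y) := by
          rw [star_dot_conj (fun m : ↥S => u j m.1) y]; exact (Complex.normSq_conj _).symm

lemma quad_mono (P : Fin K → ℝ) (hP : ∀ k, 0 ≤ P k) (u : Fin K → ι → ℂ)
    {Rg Rc : Finset (Fin K)} (hsub : Rg ⊆ Rc) (x : ι → ℂ) :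
    (dotProduct (star x) (gmat P u Rg *ᵥ x)).re ≤ (dotProduct (star x) (gmat P u Rc *ᵥ x)).re := by
  rw [quadform, quadform, Complex.ofReal_re, Complex.ofReal_re]
  have := Finset.sum_le_sum_of_subset_of_nonneg hsub
    (fun k _ _ => mul_nonneg (hP k) (Complex.normSq_nonneg (dotProduct (star (u k)) x)))
  linarith

lemma Qf_compare (P : Fin K → ℝ) (hP : ∀ k, 0 ≤ P k) (u : Fin K → Fin K → ℂ)
    (S : Finset (Fin K)) {Rg Rc : Finset (Fin K)} (hsub : Rg ⊆ Rc) (k : Fin K) :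
    Qf P (fun k (m : ↥S) => u k m.1) Rc k ≤ Qf P u Rg k := by
  set uS : Fin K → ↥S → ℂ := fun k m => u k m.1 with huS
  set Mc := gmat P uS Rc with hMc
  have hdetc := gmat_isUnit_det P hP uS Rc
  have hdetg := gmat_isUnit_det P hP u Rg
  set y := Mc⁻¹ *ᵥ (uS k) with hy
  have hMy : Mc *ᵥ y = uS k := by
    rw [hy, mulVec_mulVec, Matrix.mul_nonsing_inv _ hdetc, one_mulVec]
  have hQc : Qf P uS Rc k = (dotProduct (star (uS k)) y).re := rfl
  have hvar := var_ineq (gmat_psd P hP u Rg) hdetg (u k) (ext0 S y)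
  have e1 : (dotProduct (star (ext0 S y)) (u k)).re = (dotProduct (star y) (uS k)).re := by
    rw [dot_ext]
  have e2 : (dotProduct (star (u k)) (ext0 S y)).re = (dotProduct (star y) (uS k)).re := by
    rw [dot_re_symm, dot_ext]
  have e3 : (dotProduct (star (ext0 S y)) (gmat P u Rg *ᵥ ext0 S y)).re
      ≤ (dotProduct (star y) (Mc *ᵥ y)).re :=
    (quad_mono P hP u hsub (ext0 S y)).trans_eq (quad_ext P u Rc y)
  have e4 : (dotProduct (star y) (Mc *ᵥ y)).re = (dotProduct (star (uS k)) y).re := by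
    rw [hMy, dot_re_symm]
  have e5 : (dotProduct (star y) (uS k)).re = (dotProduct (star (uS k)) y).re :=
    dot_re_symm y (uS k)
  rw [hQc]
  unfold Qf
  linarith

lemma chainSum_nonneg_mono (P : Fin K → ℝ) (hP : ∀ k, 0 ≤ P k) (u : Fin K → Fin K → ℂ)
    (S : Finset (Fin K)) {Rg Rc : Finset (Fin K)} (hsub : Rg ⊆ Rc) (L : List (Fin K)) :
    chainSum P (fun k (m : ↥S) => u k m.1) Rc L ≤ chainSum P u Rg L := by
  induction L with
  | nil => simp
  | cons k L ih =>
    simp only [chainSum_cons]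
    have hQc0 : 0 ≤ Qf P (fun k (m : ↥S) => u k m.1) (Rc ∪ L.toFinset) k :=
      Qf_nonneg P hP _ _ k (gmat_isUnit_det P hP _ _)
    have hcmp : Qf P (fun k (m : ↥S) => u k m.1) (Rc ∪ L.toFinset) k
        ≤ Qf P u (Rg ∪ L.toFinset) k :=
      Qf_compare P hP u S (Finset.union_subset_union hsub (le_refl _)) k
    have h1 : (0:ℝ) < 1 + P k * Qf P (fun k (m : ↥S) => u k m.1) (Rc ∪ L.toFinset) k := by
      nlinarith [hP k]
    have hxy : 1 + P k * Qf P (fun k (m : ↥S) => u k m.1) (Rc ∪ L.toFinset) k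
        ≤ 1 + P k * Qf P u (Rg ∪ L.toFinset) k := by nlinarith [hP k]
    have hlog := Real.log_le_log h1 hxy
    linarith [ih]

lemma chainSum_append (P : Fin K → ℝ) (v : Fin K → ι → ℂ) (R₀ : Finset (Fin K))
    (L₁ L₂ : List (Fin K)) :
    chainSum P v R₀ (L₁ ++ L₂)
      = chainSum P v (R₀ ∪ L₂.toFinset) L₁ + chainSum P v R₀ L₂ := by
  induction L₁ with
  | nil => simp
  | cons k L ih =>
    simp only [List.cons_append, chainSum_cons, ih]
    have hset : R₀ ∪ (L ++ L₂).toFinset = (R₀ ∪ L₂.toFinset) ∪ L.toFinset := by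
      ext j
      simp only [List.toFinset_append, Finset.mem_union, List.mem_toFinset]
      tauto
    rw [hset]
    ring

lemma main_ind (P : Fin K → ℝ) (hP : ∀ k, 0 ≤ P k) (u : Fin K → Fin K → ℂ) {N : ℕ}
    (S : Fin N → Finset (Fin K)) (hdisj : ∀ i j, i ≠ j → Disjoint (S i) (S j))
    (ns : List (Fin N)) (hnd : ns.Nodup) :
    (ns.map (fun n => chainSum P (fun k (m : ↥(S n)) => u k m.1) ((S n)ᶜ)
        ((S n).sort (· ≤ ·)))).sum
      ≤ chainSum P u ∅ (ns.flatMap (fun n => (S n).sort (· ≤ ·))) := by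
  induction ns with
  | nil => simp
  | cons n ns ih =>
    have hndt : ns.Nodup := (List.nodup_cons.mp hnd).2
    have hnmem : n ∉ ns := (List.nodup_cons.mp hnd).1
    rw [List.flatMap_cons, chainSum_append, List.map_cons, List.sum_cons]
    have hsub : ∅ ∪ (ns.flatMap (fun n => (S n).sort (· ≤ ·))).toFinset ⊆ (S n)ᶜ := by
      intro j hj
      simp only [Finset.empty_union, List.mem_toFinset, List.mem_flatMap,
        Finset.mem_sort] at hj
      obtain ⟨m, hm, hjm⟩ := hj
      have hmn : m ≠ n := fun h => hnmem (h ▸ hm)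
      exact Finset.mem_compl.mpr (Finset.disjoint_left.mp (hdisj m n hmn) hjm)
    have h1 : chainSum P (fun k (m : ↥(S n)) => u k m.1) ((S n)ᶜ) ((S n).sort (· ≤ ·))
        ≤ chainSum P u (∅ ∪ (ns.flatMap (fun n => (S n).sort (· ≤ ·))).toFinset)
            ((S n).sort (· ≤ ·)) := by
      have := chainSum_nonneg_mono P hP u (S n) hsub ((S n).sort (· ≤ ·))
      exact this
    have h2 := ih hndt
    linarith

end RxGame
end Helpers

/-- The grand coalition maximizes spectrum utilization (cohesiveness): for every
partition `S₁, …, S_N` of `{1,…,K}`,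
`∑ₙ v(Sₙ) ≤ v({1,…,K}) = log det(I_K + ∑ₖ P_k h_k h_k†)` where `h_k` is the
`k`-th column of `H`. -/
theorem rx_game_cohesive {K N : ℕ} (H : Matrix (Fin K) (Fin K) ℂ)
    (P : Fin K → ℝ) (hP : ∀ k, 0 < P k)
    (S : Fin N → Finset (Fin K)) (hne : ∀ n, (S n).Nonempty)
    (hdisj : ∀ i j, i ≠ j → Disjoint (S i) (S j))
    (hcover : Finset.univ.biUnion S = Finset.univ) :
    ∑ n, rxValue H P (S n) ≤
      Real.log ((1 + ∑ k, (P k : ℂ) •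
        vecMulVec (fun m : Fin K => H m k) (star fun m : Fin K => H m k)).det.re) := by
  classical
  have hP0 : ∀ k, 0 ≤ P k := fun k => (hP k).le
  have hA : ∀ n, rxValue H P (S n) =
      RxGame.chainSum P (fun k (m : ↥(S n)) => H m.1 k) ((S n)ᶜ) ((S n).sort (· ≤ ·)) := by
    intro n
    have hfull : noiseCov H P (S n) + sigCov H P (S n)
        = RxGame.gmat P (fun k (m : ↥(S n)) => H m.1 k) Finset.univ := by
      unfold noiseCov sigCov RxGame.gmat
      rw [add_assoc, Finset.sum_compl_add_sum]
    have hu : (S n)ᶜ ∪ ((S n).sort (· ≤ ·)).toFinset = Finset.univ := by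
      rw [Finset.sort_toFinset]
      ext j
      by_cases h : j ∈ S n <;> simp [h]
    have hchain := RxGame.chain P hP0 (fun k (m : ↥(S n)) => H m.1 k) ((S n)ᶜ)
      ((S n).sort (· ≤ ·)) (Finset.sort_nodup _ _)
      (fun k hk => by
        rw [Finset.mem_sort] at hk
        simpa using hk)
    rw [hu] at hchain
    unfold rxValue
    rw [hfull]
    show Real.log (RxGame.dre P (fun k (m : ↥(S n)) => H m.1 k) Finset.univ)
        - Real.log (RxGame.dre P (fun k (m : ↥(S n)) => H m.1 k) (S n)ᶜ) = _
    rw [hchain]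
    ring
  set colF : Fin K → Fin K → ℂ := fun k m => H m k with hcolF
  set Lg := (List.finRange N).flatMap (fun n => (S n).sort (· ≤ ·)) with hLg
  have hLgnd : Lg.Nodup := by
    rw [hLg, List.nodup_flatMap]
    refine ⟨fun n _ => Finset.sort_nodup _ _, ?_⟩
    refine (List.nodup_finRange N).imp ?_
    intro a b hab x hxa hxb
    rw [Finset.mem_sort] at hxa hxb
    exact Finset.disjoint_left.mp (hdisj a b hab) hxa hxb
  have hLgfin : (∅ : Finset (Fin K)) ∪ Lg.toFinset = Finset.univ := by
    ext j
    simp only [Finset.mem_union, Finset.notMem_empty, List.mem_toFinset, hLg,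
      List.mem_flatMap, Finset.mem_sort, List.mem_finRange, true_and, Finset.mem_univ,
      iff_true, false_or]
    have hj : j ∈ Finset.univ.biUnion S := by rw [hcover]; exact Finset.mem_univ j
    obtain ⟨n, _, hn⟩ := Finset.mem_biUnion.mp hj
    exact ⟨n, hn⟩
  have hchainU := RxGame.chain P hP0 colF ∅ Lg hLgnd (fun k _ => Finset.notMem_empty k)
  rw [hLgfin] at hchainU
  have hdre0 : RxGame.dre P colF ∅ = 1 := by
    simp [RxGame.dre, RxGame.gmat]
  have hRHS : Real.log ((1 + ∑ k, (P k : ℂ) •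
        vecMulVec (fun m : Fin K => H m k) (star fun m : Fin K => H m k)).det.re)
      = RxGame.chainSum P colF ∅ Lg := by
    show Real.log (RxGame.dre P colF Finset.univ) = _
    rw [hchainU, hdre0, Real.log_one]
    ring
  rw [hRHS]
  have hsum : ∑ n, rxValue H P (S n)
      = ((List.finRange N).map (fun n => RxGame.chainSum P (fun k (m : ↥(S n)) => H m.1 k)
          ((S n)ᶜ) ((S n).sort (· ≤ ·)))).sum := by
    rw [Fin.sum_univ_def]
    exact congrArg List.sum (List.map_congr_left (fun n _ => hA n))
  rw [hsum]
  exact RxGame.main_ind P hP0 colF S hdisj (List.finRange N) (List.nodup_finRange N)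
end

section
/- (Every rate point on the dominant face of the SIMO-MAC capacity region lies in the core of the joint-decoding receiver cooperation game.) Let R ∈ ℝ^K satisfy Σ_{k∈T} R_k ≤ C(T) for every T ⊆ {1,…,K} and Σ_{k=1}^{K} R_k = C({1,…,K}), where C(T) = log det(I_K + Σ_{k∈T} P_k h_k h_k†) and h_k is the k-th column of H. Then for every coalition S ⊆ {1,…,K}, Σ_{k∈S} R_k ≥ v(S). Consequently the core of the game is non-empty. -/
open Matrix

/-- SIMO-MAC capacity bound `C(T) = log det(I_K + ∑_{k∈T} P_k h_k h_k†)`, with `h_k`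
the `k`-th column of `H`. -/
noncomputable def macBound {K : ℕ} (H : Matrix (Fin K) (Fin K) ℂ) (P : Fin K → ℝ)
    (T : Finset (Fin K)) : ℝ :=
  Real.log ((1 + ∑ k ∈ T, (P k : ℂ) •
    vecMulVec (fun m : Fin K => H m k) (star fun m : Fin K => H m k)).det.re)

open scoped ComplexOrder

section basic
variable {n : Type*} [Fintype n] [DecidableEq n]

lemma outer_psd (p : ℝ) (hp : 0 ≤ p) (v : n → ℂ) :
    ((p : ℂ) • vecMulVec v (star v)).PosSemidef := by
  have hps : (Real.sqrt p : ℂ) * (Real.sqrt p : ℂ) = (p : ℂ) := by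
    norm_cast; exact Real.mul_self_sqrt hp
  have h1 : (p : ℂ) • vecMulVec v (star v)
      = replicateCol Unit ((Real.sqrt p : ℂ) • v) * (replicateCol Unit ((Real.sqrt p : ℂ) • v))ᴴ := by
    rw [conjTranspose_replicateCol, ← vecMulVec_eq]
    ext i j
    simp only [Pi.smul_apply, smul_eq_mul, vecMulVec_apply, Pi.star_apply, star_mul',
      RCLike.star_def, Complex.conj_ofReal, Matrix.smul_apply]
    ring_nf
    rw [sq, hps]
    ring
  rw [h1]
  exact posSemidef_self_mul_conjTranspose _

lemma sum_psd {ι : Type*} (s : Finset ι) (f : ι → Matrix n n ℂ)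
    (h : ∀ i ∈ s, (f i).PosSemidef) : (∑ i ∈ s, f i).PosSemidef := by
  classical
  induction s using Finset.induction_on with
  | empty => simpa using (Matrix.PosSemidef.zero (n := n) (R := ℂ))
  | @insert a s ha ih =>
      rw [Finset.sum_insert ha]
      exact (h a (Finset.mem_insert_self a s)).add
        (ih fun i hi => h i (Finset.mem_insert_of_mem hi))

open scoped MatrixOrder in
lemma psd_cs {N : Matrix n n ℂ} (hN : N.PosSemidef) (a b : n → ℂ) :
    ‖star a ⬝ᵥ N *ᵥ b‖ ^ 2 ≤ (star a ⬝ᵥ N *ᵥ a).re * (star b ⬝ᵥ N *ᵥ b).re := by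
  have key : ∀ x y : n → ℂ,
      star x ⬝ᵥ N *ᵥ y = star (CFC.sqrt N *ᵥ x) ⬝ᵥ (CFC.sqrt N *ᵥ y) := by
    intro x y
    conv_lhs => rw [← CFC.sqrt_mul_sqrt_self N hN.nonneg]
    rw [← mulVec_mulVec, dotProduct_mulVec, star_mulVec, (CFC.sqrt_nonneg N).posSemidef.isHermitian.eq]
  have h1 := inner_mul_inner_self_le (𝕜 := ℂ)
    ((WithLp.equiv 2 (n → ℂ)).symm (CFC.sqrt N *ᵥ a)) ((WithLp.equiv 2 (n → ℂ)).symm (CFC.sqrt N *ᵥ b))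
  rw [WithLp.equiv_symm_apply, EuclideanSpace.inner_toLp_toLp, EuclideanSpace.inner_toLp_toLp,
    EuclideanSpace.inner_toLp_toLp, EuclideanSpace.inner_toLp_toLp] at h1
  have h2 : star (CFC.sqrt N *ᵥ b) ⬝ᵥ (CFC.sqrt N *ᵥ a)
      = starRingEnd ℂ (star (CFC.sqrt N *ᵥ a) ⬝ᵥ (CFC.sqrt N *ᵥ b)) := by
    rw [star_dotProduct]
    rfl
  rw [key a b, key a a, key b b]
  calc ‖star (CFC.sqrt N *ᵥ a) ⬝ᵥ (CFC.sqrt N *ᵥ b)‖ ^ 2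
      = ‖star (CFC.sqrt N *ᵥ a) ⬝ᵥ (CFC.sqrt N *ᵥ b)‖ * ‖star (CFC.sqrt N *ᵥ b) ⬝ᵥ (CFC.sqrt N *ᵥ a)‖ := by
        rw [h2, RCLike.norm_conj]; ring
    _ ≤ _ := by
        have := h1
        simp only [dotProduct_comm _ (star _)] at this
        simpa [RCLike.re_to_complex] using this

end basic

section det1
variable {n : Type*} [Fintype n] [DecidableEq n]

lemma quad_real {N : Matrix n n ℂ} (hN : N.PosSemidef) (v : n → ℂ) :
    star v ⬝ᵥ N *ᵥ v = ((star v ⬝ᵥ N *ᵥ v).re : ℂ) := by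
  have h := hN.dotProduct_mulVec_nonneg v
  rw [Complex.le_def] at h
  exact Complex.ext rfl (by simpa using h.2.symm)

lemma det_rank_one {N : Matrix n n ℂ} (hN : N.PosDef) (p : ℝ) (v : n → ℂ) :
    (N + (p : ℂ) • vecMulVec v (star v)).det.re
      = N.det.re * (1 + p * (star v ⬝ᵥ N⁻¹ *ᵥ v).re) := by
  have hA : IsUnit N.det := hN.det_pos.ne'.isUnit
  have h1 : (p : ℂ) • vecMulVec v (star v) = replicateCol Unit ((p : ℂ) • v) * replicateRow Unit (star v) := by
    rw [← vecMulVec_eq]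
    ext i j
    simp [vecMulVec_apply]
    ring
  have h2 : ((1 + replicateRow Unit (star v) * N⁻¹ * replicateCol Unit ((p : ℂ) • v) : Matrix Unit Unit ℂ))
        (default : Unit) (default : Unit)
      = 1 + (p : ℂ) * (star v ⬝ᵥ N⁻¹ *ᵥ v) := by
    rw [Matrix.add_apply, Matrix.one_apply_eq]
    congr 1
    rw [← replicateRow_vecMul, replicateRow_mul_replicateCol_apply, dotProduct_smul, ← dotProduct_mulVec]
    simp [smul_eq_mul]
  have h3 : (N + replicateCol Unit ((p : ℂ) • v) * replicateRow Unit (star v)).det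
      = N.det * (1 + (p : ℂ) * (star v ⬝ᵥ N⁻¹ *ᵥ v)) := by
    rw [det_add_replicateCol_mul_replicateRow hA,
      Matrix.det_unique (1 + replicateRow Unit (star v) * N⁻¹ * replicateCol Unit ((p : ℂ) • v)), h2]
  rw [h1, h3]
  have hq := quad_real hN.inv.posSemidef v
  have hdet : N.det.im = 0 := ((Complex.lt_def).mp hN.det_pos).2.symm
  rw [hq]
  rw [show ((1 : ℂ) + (p : ℂ) * ((star v ⬝ᵥ N⁻¹ *ᵥ v).re : ℂ))
      = ((1 + p * (star v ⬝ᵥ N⁻¹ *ᵥ v).re : ℝ) : ℂ) by push_cast; ring]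
  rw [Complex.mul_re, Complex.ofReal_re, Complex.ofReal_im, hdet]
  simp

end det1

section sub
variable {K : ℕ} (S : Finset (Fin K))

/-- Extension of a vector on a coalition by zero. -/
noncomputable def extz (x : ↥S → ℂ) : Fin K → ℂ :=
  fun j => if h : j ∈ S then x ⟨j, h⟩ else 0

lemma extz_coe (x : ↥S → ℂ) (i : ↥S) : extz S x i.1 = x i := by
  simp [extz, Subtype.coe_eta]

lemma sum_ext (g : Fin K → ℂ) (hg : ∀ j ∉ S, g j = 0) :
    ∑ j, g j = ∑ i : ↥S, g i.1 := by
  rw [Finset.sum_coe_sort S g]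
  exact (Finset.sum_subset (Finset.subset_univ S) (fun j _ hj => hg j hj)).symm

lemma dot_extz (x : ↥S → ℂ) (y : Fin K → ℂ) :
    star (extz S x) ⬝ᵥ y = star x ⬝ᵥ (fun i : ↥S => y i.1) := by
  rw [dotProduct, dotProduct]
  rw [sum_ext S (fun j => star (extz S x) j * y j)
    (fun j hj => by simp [extz, Pi.star_apply, dif_neg hj])]
  refine Finset.sum_congr rfl fun i _ => ?_
  simp [extz_coe]

lemma mulVec_sub_ext (N : Matrix (Fin K) (Fin K) ℂ) (x : ↥S → ℂ) (i : ↥S) :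
    ((N.submatrix (Subtype.val : ↥S → Fin K) Subtype.val) *ᵥ x) i
      = (N *ᵥ extz S x) i.1 := by
  rw [mulVec, mulVec, dotProduct, dotProduct]
  rw [sum_ext S (fun j => N i.1 j * extz S x j)
    (fun j hj => by simp [extz, dif_neg hj])]
  refine Finset.sum_congr rfl fun j _ => ?_
  simp [extz_coe, submatrix_apply]

lemma quad_extz (N : Matrix (Fin K) (Fin K) ℂ) (x : ↥S → ℂ) :
    star x ⬝ᵥ (N.submatrix (Subtype.val : ↥S → Fin K) Subtype.val) *ᵥ x
      = star (extz S x) ⬝ᵥ N *ᵥ (extz S x) := by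
  rw [dot_extz]
  congr 1
  funext i
  exact mulVec_sub_ext S N x i

lemma extz_ne_zero {x : ↥S → ℂ} (hx : x ≠ 0) : extz S x ≠ 0 := by
  obtain ⟨i, hi⟩ := Function.ne_iff.mp hx
  exact Function.ne_iff.mpr ⟨i.1, by rw [extz_coe]; simpa using hi⟩

lemma sub_posDef {N : Matrix (Fin K) (Fin K) ℂ} (hN : N.PosDef) :
    (N.submatrix (Subtype.val : ↥S → Fin K) Subtype.val).PosDef := by
  refine Matrix.PosDef.of_dotProduct_mulVec_pos ?_ (fun x hx => ?_)
  · have := hN.isHermitian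
    rw [Matrix.IsHermitian, conjTranspose_submatrix, this.eq]
  · rw [quad_extz]
    exact hN.dotProduct_mulVec_pos (extz_ne_zero S hx)

lemma herm_inv_quad {m : Type*} [Fintype m] [DecidableEq m] {M : Matrix m m ℂ}
    (hM : M.PosDef) (c : m → ℂ) :
    star (M⁻¹ *ᵥ c) ⬝ᵥ c = star c ⬝ᵥ M⁻¹ *ᵥ c := by
  rw [star_mulVec, hM.isHermitian.inv.eq, ← dotProduct_mulVec]

lemma mulVec_inv_cancel {m : Type*} [Fintype m] [DecidableEq m] {M : Matrix m m ℂ}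
    (hM : M.PosDef) (c : m → ℂ) : M *ᵥ (M⁻¹ *ᵥ c) = c := by
  rw [mulVec_mulVec, Matrix.mul_nonsing_inv _ hM.det_pos.ne'.isUnit, one_mulVec]

lemma quad_inv_le {N : Matrix (Fin K) (Fin K) ℂ} (hN : N.PosDef) (v : Fin K → ℂ) :
    (star (fun i : ↥S => v i.1) ⬝ᵥ
        (N.submatrix (Subtype.val : ↥S → Fin K) Subtype.val)⁻¹ *ᵥ (fun i : ↥S => v i.1)).re
      ≤ (star v ⬝ᵥ N⁻¹ *ᵥ v).re := by
  classical
  have hM : (N.submatrix (Subtype.val : ↥S → Fin K) Subtype.val).PosDef := sub_posDef S hN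
  -- abbreviations (purely notational)
  let M : Matrix ↥S ↥S ℂ := N.submatrix (Subtype.val : ↥S → Fin K) Subtype.val
  let c : ↥S → ℂ := fun i => v i.1
  let q : ℂ := star c ⬝ᵥ M⁻¹ *ᵥ c
  let w : Fin K → ℂ := extz S (M⁻¹ *ᵥ c)
  have h1 : star w ⬝ᵥ N *ᵥ w = q := by
    show star (extz S (M⁻¹ *ᵥ c)) ⬝ᵥ N *ᵥ (extz S (M⁻¹ *ᵥ c)) = q
    rw [← quad_extz, mulVec_inv_cancel hM c]
    exact herm_inv_quad hM c
  have h2 : star w ⬝ᵥ v = q := by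
    show star (extz S (M⁻¹ *ᵥ c)) ⬝ᵥ v = q
    rw [dot_extz]
    exact herm_inv_quad hM c
  have hz : N *ᵥ (N⁻¹ *ᵥ v) = v := mulVec_inv_cancel hN v
  have h4 : star (N⁻¹ *ᵥ v) ⬝ᵥ N *ᵥ (N⁻¹ *ᵥ v) = star v ⬝ᵥ N⁻¹ *ᵥ v := by
    rw [hz]
    exact herm_inv_quad hN v
  have hcs := psd_cs hN.posSemidef w (N⁻¹ *ᵥ v)
  rw [mulVec_mulVec] at hcs
  rw [← mulVec_mulVec, hz, h2, h1] at hcs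
  rw [herm_inv_quad hN v] at hcs
  -- q is a nonnegative real
  have hq0 : (0 : ℂ) ≤ q := hM.inv.posSemidef.dotProduct_mulVec_nonneg c
  obtain ⟨hqre, hqim⟩ := Complex.le_def.mp hq0
  have hnq : ‖q‖ = q.re := by
    rw [show q = ((q.re : ℝ) : ℂ) from Complex.ext rfl (by simpa using hqim.symm)]
    simp [abs_of_nonneg (by simpa using hqre)]
  rw [hnq] at hcs
  have hp0 : 0 ≤ (star v ⬝ᵥ N⁻¹ *ᵥ v).re := by
    have := hN.inv.posSemidef.re_dotProduct_nonneg v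
    simpa [RCLike.re_to_complex] using this
  show q.re ≤ (star v ⬝ᵥ N⁻¹ *ᵥ v).re
  rcases eq_or_lt_of_le (by simpa using hqre : (0:ℝ) ≤ q.re) with h | h
  · rw [← h]; exact hp0
  · nlinarith [hcs]

end sub

section main
variable {K : ℕ}

lemma submatrix_sum' {ι : Type*} (t : Finset ι) (f : ι → Matrix (Fin K) (Fin K) ℂ)
    (S : Finset (Fin K)) :
    (∑ k ∈ t, f k).submatrix (Subtype.val : ↥S → Fin K) (Subtype.val : ↥S → Fin K)
      = ∑ k ∈ t, (f k).submatrix (Subtype.val : ↥S → Fin K) (Subtype.val : ↥S → Fin K) := by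
  ext i j
  simp [Matrix.sum_apply, submatrix_apply]

lemma outer_submatrix (S : Finset (Fin K)) (p : ℝ) (v : Fin K → ℂ) :
    ((p : ℂ) • vecMulVec v (star v)).submatrix (Subtype.val : ↥S → Fin K)
        (Subtype.val : ↥S → Fin K)
      = (p : ℂ) • vecMulVec (fun i : ↥S => v i.1) (star fun i : ↥S => v i.1) := by
  ext i j
  simp [vecMulVec_apply, submatrix_apply]

lemma re_quad_nonneg {n : Type*} [Fintype n] {N : Matrix n n ℂ} (hN : N.PosSemidef)
    (v : n → ℂ) : 0 ≤ (star v ⬝ᵥ N *ᵥ v).re := by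
  have := hN.re_dotProduct_nonneg v
  simpa [RCLike.re_to_complex] using this

lemma det_re_pos {n : Type*} [Fintype n] [DecidableEq n] {N : Matrix n n ℂ}
    (hN : N.PosDef) : 0 < N.det.re :=
  (Complex.lt_def.mp hN.det_pos).1

lemma det_step (S : Finset (Fin K)) {N : Matrix (Fin K) (Fin K) ℂ} (hN : N.PosDef)
    {p : ℝ} (hp : 0 < p) (v : Fin K → ℂ) :
    Real.log (((N + (p : ℂ) • vecMulVec v (star v)).submatrix
        (Subtype.val : ↥S → Fin K) Subtype.val).det.re)
      - Real.log ((N.submatrix (Subtype.val : ↥S → Fin K) Subtype.val).det.re)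
    ≤ Real.log ((N + (p : ℂ) • vecMulVec v (star v)).det.re) - Real.log (N.det.re) := by
  classical
  have hM := sub_posDef S hN
  have hsub : (N + (p : ℂ) • vecMulVec v (star v)).submatrix
        (Subtype.val : ↥S → Fin K) Subtype.val
      = N.submatrix (Subtype.val : ↥S → Fin K) Subtype.val
        + (p : ℂ) • vecMulVec (fun i : ↥S => v i.1) (star fun i : ↥S => v i.1) := by
    ext i j
    simp [submatrix_apply, Matrix.add_apply, vecMulVec_apply]
  rw [hsub, det_rank_one hM p _, det_rank_one hN p v]
  have hq0 : 0 ≤ (star (fun i : ↥S => v i.1) ⬝ᵥ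
      (N.submatrix (Subtype.val : ↥S → Fin K) Subtype.val)⁻¹ *ᵥ (fun i : ↥S => v i.1)).re :=
    re_quad_nonneg hM.inv.posSemidef _
  have hqle := quad_inv_le S hN v
  have hd1 := det_re_pos hN
  have hd2 := det_re_pos hM
  have hx : (0:ℝ) < 1 + p * (star (fun i : ↥S => v i.1) ⬝ᵥ
      (N.submatrix (Subtype.val : ↥S → Fin K) Subtype.val)⁻¹ *ᵥ (fun i : ↥S => v i.1)).re := by
    nlinarith
  have hy : (0:ℝ) < 1 + p * (star v ⬝ᵥ N⁻¹ *ᵥ v).re := by nlinarith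
  rw [Real.log_mul hd2.ne' hx.ne', Real.log_mul hd1.ne' hy.ne']
  have hlog : Real.log (1 + p * (star (fun i : ↥S => v i.1) ⬝ᵥ
      (N.submatrix (Subtype.val : ↥S → Fin K) Subtype.val)⁻¹ *ᵥ (fun i : ↥S => v i.1)).re)
      ≤ Real.log (1 + p * (star v ⬝ᵥ N⁻¹ *ᵥ v).re) :=
    Real.log_le_log hx (by nlinarith)
  linarith

lemma main_ind (S : Finset (Fin K)) (w : Fin K → ℝ) (hw : ∀ k, 0 < w k)
    (g : Fin K → Fin K → ℂ) (T : Finset (Fin K)) :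
    ∀ {N : Matrix (Fin K) (Fin K) ℂ}, N.PosDef →
    Real.log (((N + ∑ k ∈ T, (w k : ℂ) • vecMulVec (g k) (star (g k))).submatrix
        (Subtype.val : ↥S → Fin K) Subtype.val).det.re)
      - Real.log ((N.submatrix (Subtype.val : ↥S → Fin K) Subtype.val).det.re)
    ≤ Real.log ((N + ∑ k ∈ T, (w k : ℂ) • vecMulVec (g k) (star (g k))).det.re)
      - Real.log (N.det.re) := by
  classical
  induction T using Finset.induction_on with
  | empty => intro N hN; simp
  | @insert a T ha ih =>
      intro N hN
      have hpsd : (∑ k ∈ T, (w k : ℂ) • vecMulVec (g k) (star (g k))).PosSemidef :=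
        sum_psd _ _ (fun k _ => outer_psd (w k) (hw k).le (g k))
      have hA : (N + ∑ k ∈ T, (w k : ℂ) • vecMulVec (g k) (star (g k))).PosDef :=
        hN.add_posSemidef hpsd
      have hins : N + ∑ k ∈ insert a T, (w k : ℂ) • vecMulVec (g k) (star (g k))
          = (N + ∑ k ∈ T, (w k : ℂ) • vecMulVec (g k) (star (g k)))
            + (w a : ℂ) • vecMulVec (g a) (star (g a)) := by
        rw [Finset.sum_insert ha]
        abel
      rw [hins]
      have h1 := det_step S hA (hw a) (g a)
      have h2 := ih hN
      linarith

end main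

/-- Every rate point on the dominant face of the SIMO-MAC capacity region lies in the
core of the joint-decoding receiver cooperation game: if `R` satisfies
`∑_{k∈T} R_k ≤ C(T)` for all `T` and `∑ₖ R_k = C({1,…,K})`, then
`∑_{k∈S} R_k ≥ v(S)` for every coalition `S`. -/
theorem rx_dominant_face_in_core {K : ℕ} (H : Matrix (Fin K) (Fin K) ℂ)
    (P : Fin K → ℝ) (hP : ∀ k, 0 < P k) (R : Fin K → ℝ)
    (hR : ∀ T : Finset (Fin K), ∑ k ∈ T, R k ≤ macBound H P T)
    (hsum : ∑ k, R k = macBound H P Finset.univ) :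
    ∀ S : Finset (Fin K), ∑ k ∈ S, R k ≥ rxValue H P S := by
  classical
  intro S
  have hNpd : (1 + ∑ k ∈ Sᶜ, (P k : ℂ) •
      vecMulVec (fun m : Fin K => H m k) (star fun m : Fin K => H m k)).PosDef :=
    Matrix.PosDef.add_posSemidef Matrix.PosDef.one
      (sum_psd _ _ fun k _ => outer_psd (P k) (hP k).le _)
  have key := main_ind S P hP (fun k => fun m : Fin K => H m k) S hNpd
  have hfull : (1 + ∑ k ∈ Sᶜ, (P k : ℂ) •
        vecMulVec (fun m : Fin K => H m k) (star fun m : Fin K => H m k))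
      + ∑ k ∈ S, (P k : ℂ) •
        vecMulVec (fun m : Fin K => H m k) (star fun m : Fin K => H m k)
      = 1 + ∑ k, (P k : ℂ) •
        vecMulVec (fun m : Fin K => H m k) (star fun m : Fin K => H m k) := by
    rw [add_assoc, Finset.sum_compl_add_sum]
  have hnoise : noiseCov H P S = (1 + ∑ k ∈ Sᶜ, (P k : ℂ) •
      vecMulVec (fun m : Fin K => H m k) (star fun m : Fin K => H m k)).submatrix
      (Subtype.val : ↥S → Fin K) Subtype.val := by
    ext i j
    simp [noiseCov, Matrix.add_apply, Matrix.sum_apply, Matrix.smul_apply, vecMulVec_apply,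
      Matrix.one_apply, submatrix_apply, Subtype.coe_inj]
  have hsigg : noiseCov H P S + sigCov H P S
      = ((1 + ∑ k ∈ Sᶜ, (P k : ℂ) •
          vecMulVec (fun m : Fin K => H m k) (star fun m : Fin K => H m k))
        + ∑ k ∈ S, (P k : ℂ) •
          vecMulVec (fun m : Fin K => H m k) (star fun m : Fin K => H m k)).submatrix
      (Subtype.val : ↥S → Fin K) Subtype.val := by
    ext i j
    simp [noiseCov, sigCov, Matrix.add_apply, Matrix.sum_apply, Matrix.smul_apply,
      vecMulVec_apply, Matrix.one_apply, submatrix_apply, Subtype.coe_inj]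
  rw [← hsigg, ← hnoise, hfull] at key
  have e1 : macBound H P Sᶜ = Real.log ((1 + ∑ k ∈ Sᶜ, (P k : ℂ) •
      vecMulVec (fun m : Fin K => H m k) (star fun m : Fin K => H m k)).det.re) := rfl
  have e2 : macBound H P Finset.univ = Real.log ((1 + ∑ k, (P k : ℂ) •
      vecMulVec (fun m : Fin K => H m k) (star fun m : Fin K => H m k)).det.re) := rfl
  have e3 : rxValue H P S = Real.log ((noiseCov H P S + sigCov H P S).det.re)
      - Real.log ((noiseCov H P S).det.re) := rfl
  have h1 : ∑ k ∈ Sᶜ, R k + ∑ k ∈ S, R k = ∑ k, R k := Finset.sum_compl_add_sum S R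
  have h2 := hR Sᶜ
  rw [ge_iff_le, e3]
  linarith [key]
end

section
/- (Grand-coalition optimality for the MMSE detector game.) Fix K ≥ 1, correlation ρ with 0 ≤ ρ < 1, noise level σ > 0, common power P > 0, and nonzero real channel gains h₁,…,h_K. For a coalition S ⊆ {1,…,K} let R_S be the principal submatrix indexed by S of the K × K matrix R with unit diagonal and all off-diagonal entries ρ, let A_S = diag(√P h_k)_{k∈S}, let L_S = (R_S + σ² A_S^{-2})^{-1}, let e_S be the all-ones vector indexed by S, and define the MMSE SINR of user k ∈ S as γ_k(S) = ((L_S R_S)_{kk})² h_k² P / ( σ² (L_S R_S L_S)_{kk} + ρ² ((L_S e_S)_k)² Σ_{j∉S} h_j² P + Σ_{j∈S, j≠k} ((L_S R_S)_{kj})² h_j² P ). Then for every coalition S containing k, γ_k(S) ≤ γ_k({1,…,K}); that is, every user's SINR (and hence rate) is maximized in the grand coalition. -/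
open Matrix

/-- Cross-correlation matrix of the signature sequences of the users in `S`:
unit diagonal and all off-diagonal entries `ρ`. -/
def corrMat {K : ℕ} (ρ : ℝ) (S : Finset (Fin K)) : Matrix ↥S ↥S ℝ :=
  Matrix.of fun i j => if i = j then (1 : ℝ) else ρ

/-- Diagonal matrix of received amplitudes `√P h_k`, `k ∈ S`. -/
noncomputable def ampMat {K : ℕ} (P : ℝ) (h : Fin K → ℝ) (S : Finset (Fin K)) :
    Matrix ↥S ↥S ℝ :=
  Matrix.diagonal fun k : ↥S => Real.sqrt P * h k.1

/-- The linear MMSE detector `L_S = (R_S + σ² A_S⁻²)⁻¹` of coalition `S`. -/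
noncomputable def mmseMat {K : ℕ} (ρ σ P : ℝ) (h : Fin K → ℝ) (S : Finset (Fin K)) :
    Matrix ↥S ↥S ℝ :=
  (corrMat ρ S + σ ^ 2 • ((ampMat P h S) ^ 2)⁻¹)⁻¹

/-- MMSE SINR of user `k` in coalition `S`:
`γ_k(S) = ((L_S R_S)_{kk})² h_k² P / (σ² (L_S R_S L_S)_{kk}
  + ρ² ((L_S e_S)_k)² ∑_{j∉S} h_j² P + ∑_{j∈S, j≠k} ((L_S R_S)_{kj})² h_j² P)`. -/
noncomputable def mmseSinr {K : ℕ} (ρ σ P : ℝ) (h : Fin K → ℝ)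
    (S : Finset (Fin K)) (k : Fin K) (hk : k ∈ S) : ℝ :=
  let L := mmseMat ρ σ P h S
  let R := corrMat ρ S
  let kk : ↥S := ⟨k, hk⟩
  ((L * R) kk kk) ^ 2 * (h k) ^ 2 * P /
    (σ ^ 2 * ((L * R * L) kk kk)
      + ρ ^ 2 * ((L.mulVec fun _ => (1 : ℝ)) kk) ^ 2 * ∑ j ∈ Sᶜ, (h j) ^ 2 * P
      + ∑ j ∈ Finset.univ.erase kk, ((L * R) kk j) ^ 2 * (h j.1) ^ 2 * P)

section Aux

variable {K : ℕ} (ρ σ P : ℝ) (h : Fin K → ℝ)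

/-- `u_j = 1/d_j` with `d_j = (1-ρ) + σ²/(P h_j²)`. -/
noncomputable def uu (j : Fin K) : ℝ := ((1 - ρ) + σ ^ 2 / (P * h j ^ 2))⁻¹

variable (S : Finset (Fin K))

/-- `c_S = 1 + ρ ∑_{j∈S} u_j`. -/
noncomputable def cc : ℝ := 1 + ρ * ∑ m : ↥S, uu ρ σ P h m.1

/-- Explicit Sherman–Morrison form of the MMSE detector. -/
noncomputable def Lm : Matrix ↥S ↥S ℝ :=
  Matrix.of fun i j =>
    (if i = j then uu ρ σ P h i.1 else 0)
      - ρ * uu ρ σ P h i.1 * uu ρ σ P h j.1 / cc ρ σ P h S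

variable {ρ σ P h S}
variable (hρ0 : 0 ≤ ρ) (hρ1 : ρ < 1) (hσ : 0 < σ) (hP : 0 < P) (hh : ∀ k, h k ≠ 0)

section
include hP hh

lemma p_pos (j : Fin K) : 0 < P * h j ^ 2 := by
  have := hh j; positivity

include hρ1 hσ

lemma dd_pos (j : Fin K) : 0 < (1 - ρ) + σ ^ 2 / (P * h j ^ 2) := by
  have h1 : 0 < 1 - ρ := by linarith
  have h2 : 0 < σ ^ 2 / (P * h j ^ 2) := div_pos (by positivity) (p_pos hP hh j)
  linarith

lemma uu_pos (j : Fin K) : 0 < uu ρ σ P h j :=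
  inv_pos.mpr (dd_pos hρ1 hσ hP hh j)

/-- `u_j · d_j = 1`. -/
lemma uu_mul_dd (j : Fin K) :
    uu ρ σ P h j * ((1 - ρ) + σ ^ 2 / (P * h j ^ 2)) = 1 :=
  inv_mul_cancel₀ (dd_pos hρ1 hσ hP hh j).ne'

/-- The key per-user identity `p_j (1 - (1-ρ) u_j) = σ² u_j`. -/
lemma key_id (j : Fin K) :
    (P * h j ^ 2) * (1 - (1 - ρ) * uu ρ σ P h j) = σ ^ 2 * uu ρ σ P h j := by
  have hp := (p_pos hP hh j).ne'
  have hu := uu_mul_dd (j := j) hρ1 hσ hP hh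
  have hu' : uu ρ σ P h j * ((1 - ρ) * (P * h j ^ 2) + σ ^ 2) = P * h j ^ 2 := by
    have e : (1 - ρ) * (P * h j ^ 2) + σ ^ 2
        = ((1 - ρ) + σ ^ 2 / (P * h j ^ 2)) * (P * h j ^ 2) := by
      rw [add_mul, div_mul_cancel₀ _ hp]
    rw [e, ← mul_assoc, hu, one_mul]
  linear_combination -hu'

include hρ0

lemma cc_pos : 0 < cc ρ σ P h S := by
  have : 0 ≤ ∑ m : ↥S, uu ρ σ P h m.1 :=
    Finset.sum_nonneg fun m _ => (uu_pos hρ1 hσ hP hh m.1).le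
  have : 0 ≤ ρ * ∑ m : ↥S, uu ρ σ P h m.1 := mul_nonneg hρ0 this
  rw [cc]; linarith

/-- Row sums of `Lm`: `∑_m L i m = u_i / c`. -/
lemma Lm_row_sum (i : ↥S) :
    ∑ m : ↥S, Lm ρ σ P h S i m = uu ρ σ P h i.1 / cc ρ σ P h S := by
  have hc := (cc_pos (S := S) hρ0 hρ1 hσ hP hh).ne'
  simp only [Lm, of_apply]
  rw [Finset.sum_sub_distrib, Finset.sum_ite_eq]
  simp only [Finset.mem_univ, if_true]
  have : ∀ m : ↥S, ρ * uu ρ σ P h i.1 * uu ρ σ P h m.1 / cc ρ σ P h S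
      = (ρ * uu ρ σ P h i.1 / cc ρ σ P h S) * uu ρ σ P h m.1 := fun m => by ring
  rw [Finset.sum_congr rfl fun m _ => this m, ← Finset.mul_sum]
  have hcc : cc ρ σ P h S = 1 + ρ * ∑ m : ↥S, uu ρ σ P h m.1 := rfl
  field_simp
  linear_combination (uu ρ σ P h i.1) * hcc

/-- Column sums of `Lm`: `∑_m L m j = u_j / c`. -/
lemma Lm_col_sum (j : ↥S) :
    ∑ m : ↥S, Lm ρ σ P h S m j = uu ρ σ P h j.1 / cc ρ σ P h S := by
  have hc := (cc_pos (S := S) hρ0 hρ1 hσ hP hh).ne'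
  simp only [Lm, of_apply]
  rw [Finset.sum_sub_distrib, Finset.sum_ite_eq']
  simp only [Finset.mem_univ, if_true]
  have : ∀ m : ↥S, ρ * uu ρ σ P h m.1 * uu ρ σ P h j.1 / cc ρ σ P h S
      = (ρ * uu ρ σ P h j.1 / cc ρ σ P h S) * uu ρ σ P h m.1 := fun m => by ring
  rw [Finset.sum_congr rfl fun m _ => this m, ← Finset.mul_sum]
  have hcc : cc ρ σ P h S = 1 + ρ * ∑ m : ↥S, uu ρ σ P h m.1 := rfl
  field_simp
  linear_combination (uu ρ σ P h j.1) * hcc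

/-- The entries of `R_S + σ² A_S⁻²`. -/
lemma M_entry (i j : ↥S) :
    (corrMat ρ S + σ ^ 2 • ((ampMat P h S) ^ 2)⁻¹) i j
      = (if i = j then (1 - ρ) + σ ^ 2 / (P * h i.1 ^ 2) else 0) + ρ := by
  have hamp : ((ampMat P h S) ^ 2)⁻¹
      = Matrix.diagonal fun k : ↥S => (P * h k.1 ^ 2)⁻¹ := by
    refine inv_eq_right_inv ?_
    rw [ampMat, diagonal_pow, diagonal_mul_diagonal]
    have hfun : (fun m : ↥S => ((fun k : ↥S => Real.sqrt P * h k.1) ^ 2) m * (P * h m.1 ^ 2)⁻¹)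
        = fun _ : ↥S => (1 : ℝ) := by
      funext m
      simp only [Pi.pow_apply]
      rw [mul_pow, Real.sq_sqrt hP.le]
      exact mul_inv_cancel₀ (p_pos hP hh m.1).ne'
    rw [hfun, diagonal_one]
  rw [hamp]
  simp only [Matrix.add_apply, corrMat, of_apply, Matrix.smul_apply, diagonal_apply, smul_eq_mul]
  split_ifs with hij
  · rw [div_eq_mul_inv]; ring
  · ring

/-- `(R_S + σ² A_S⁻²) · Lm = 1`. -/
lemma M_mul_Lm :
    (corrMat ρ S + σ ^ 2 • ((ampMat P h S) ^ 2)⁻¹) * Lm ρ σ P h S = 1 := by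
  ext i j
  rw [mul_apply]
  have hrw : ∀ m : ↥S,
      (corrMat ρ S + σ ^ 2 • ((ampMat P h S) ^ 2)⁻¹) i m * Lm ρ σ P h S m j
        = (if i = m then ((1 - ρ) + σ ^ 2 / (P * h i.1 ^ 2)) * Lm ρ σ P h S m j else 0)
          + ρ * Lm ρ σ P h S m j := by
    intro m
    rw [M_entry hρ0 hρ1 hσ hP hh]
    split_ifs <;> ring
  rw [Finset.sum_congr rfl fun m _ => hrw m, Finset.sum_add_distrib,
    Finset.sum_ite_eq]
  simp only [Finset.mem_univ, if_true]
  rw [← Finset.mul_sum, Lm_col_sum hρ0 hρ1 hσ hP hh]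
  have hc := (cc_pos (S := S) hρ0 hρ1 hσ hP hh).ne'
  have hu := uu_mul_dd (j := i.1) hρ1 hσ hP hh
  simp only [Lm, of_apply, one_apply]
  split_ifs with hij
  · subst hij
    linear_combination (1 - ρ * uu ρ σ P h i.1 / cc ρ σ P h S) * hu
  · linear_combination (-(ρ * uu ρ σ P h j.1 / cc ρ σ P h S)) * hu

/-- The MMSE detector equals the explicit Sherman–Morrison matrix. -/
lemma mmseMat_eq : mmseMat ρ σ P h S = Lm ρ σ P h S :=
  inv_eq_right_inv (M_mul_Lm hρ0 hρ1 hσ hP hh)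

/-- Entries of `Lm * R`. -/
lemma LmR_entry (i j : ↥S) :
    (Lm ρ σ P h S * corrMat ρ S) i j
      = ρ * uu ρ σ P h i.1 / cc ρ σ P h S + (1 - ρ) * Lm ρ σ P h S i j := by
  rw [mul_apply]
  have hrw : ∀ m : ↥S, Lm ρ σ P h S i m * corrMat ρ S m j
      = ρ * Lm ρ σ P h S i m + (if m = j then (1 - ρ) * Lm ρ σ P h S i m else 0) := by
    intro m
    simp only [corrMat, of_apply]
    split_ifs <;> ring
  rw [Finset.sum_congr rfl fun m _ => hrw m, Finset.sum_add_distrib,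
    Finset.sum_ite_eq', ← Finset.mul_sum, Lm_row_sum hρ0 hρ1 hσ hP hh]
  simp only [Finset.mem_univ, if_true]
  ring

lemma Lm_mulVec_one (i : ↥S) :
    ((Lm ρ σ P h S).mulVec fun _ => (1 : ℝ)) i = uu ρ σ P h i.1 / cc ρ σ P h S := by
  rw [mulVec, dotProduct]
  simp only [mul_one]
  exact Lm_row_sum hρ0 hρ1 hσ hP hh i

end

end Aux

set_option maxHeartbeats 1000000 in
/-- Closed form for the SINR:
`γ_k(S) = p_k A² / (σ² A B + ρ² I)` with `A = 1+ρ(1-ρ)s`, `B = 1+ρs`,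
`s = ∑_{j∈S∖{k}} u_j`, `I = ∑_{j∉S} p_j`. -/
lemma mmseSinr_closed {K : ℕ} {ρ σ P : ℝ} {h : Fin K → ℝ}
    (hρ0 : 0 ≤ ρ) (hρ1 : ρ < 1) (hσ : 0 < σ) (hP : 0 < P) (hh : ∀ k, h k ≠ 0)
    (S : Finset (Fin K)) (k : Fin K) (hk : k ∈ S) :
    mmseSinr ρ σ P h S k hk
      = (P * h k ^ 2) * (1 + ρ * (1 - ρ) * ∑ j ∈ S.erase k, uu ρ σ P h j) ^ 2
        / (σ ^ 2 * (1 + ρ * (1 - ρ) * ∑ j ∈ S.erase k, uu ρ σ P h j)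
            * (1 + ρ * ∑ j ∈ S.erase k, uu ρ σ P h j)
          + ρ ^ 2 * ∑ j ∈ Sᶜ, (h j) ^ 2 * P) := by
  classical
  have hc := cc_pos (S := S) hρ0 hρ1 hσ hP hh
  have hcne : cc ρ σ P h S ≠ 0 := hc.ne'
  set s : ℝ := ∑ j ∈ S.erase k, uu ρ σ P h j with hs
  set kk : ↥S := (⟨k, hk⟩ : ↥S) with hkk
  have hcT : cc ρ σ P h S = 1 + ρ * (uu ρ σ P h k + s) := by
    rw [cc, Finset.sum_coe_sort, ← Finset.add_sum_erase _ _ hk]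
  have hone : (0:ℝ) < 1 + ρ * (uu ρ σ P h k + s) := hcT ▸ hc
  have honene : (1:ℝ) + ρ * (uu ρ σ P h k + s) ≠ 0 := hone.ne'
  have hs0 : 0 ≤ s := Finset.sum_nonneg fun j _ => (uu_pos hρ1 hσ hP hh j).le
  have hu0 := uu_pos (j := k) hρ1 hσ hP hh
  -- entry computations
  have hA : (Lm ρ σ P h S * corrMat ρ S) kk kk
      = uu ρ σ P h k * (1 + ρ * (1 - ρ) * s) / cc ρ σ P h S := by
    rw [LmR_entry hρ0 hρ1 hσ hP hh]
    simp only [Lm, of_apply, if_true]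
    rw [hcT]
    field_simp
    ring
  have hB : Lm ρ σ P h S kk kk
      = uu ρ σ P h k * (1 + ρ * s) / cc ρ σ P h S := by
    simp only [Lm, of_apply, if_true]
    rw [hcT]
    field_simp
    ring
  have hoff : ∀ j ∈ (Finset.univ : Finset ↥S).erase kk,
      (Lm ρ σ P h S * corrMat ρ S) kk j
        = ρ * uu ρ σ P h k * (1 - (1 - ρ) * uu ρ σ P h j.1) / cc ρ σ P h S := by
    intro j hj
    have hne : kk ≠ j := (Finset.ne_of_mem_erase hj).symm
    rw [LmR_entry hρ0 hρ1 hσ hP hh]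
    simp only [Lm, of_apply]
    rw [if_neg hne]
    ring
  have hLjk : ∀ j ∈ (Finset.univ : Finset ↥S).erase kk,
      Lm ρ σ P h S j kk = -(ρ * uu ρ σ P h j.1 * uu ρ σ P h k) / cc ρ σ P h S := by
    intro j hj
    have hne : j ≠ kk := Finset.ne_of_mem_erase hj
    simp only [Lm, of_apply]
    rw [if_neg hne]
    ring
  have hmv : ((Lm ρ σ P h S).mulVec fun _ => (1 : ℝ)) kk
      = uu ρ σ P h k / cc ρ σ P h S := Lm_mulVec_one hρ0 hρ1 hσ hP hh kk
  have hLRL : (Lm ρ σ P h S * corrMat ρ S * Lm ρ σ P h S) kk kk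
      = (uu ρ σ P h k * (1 + ρ * (1 - ρ) * s) / cc ρ σ P h S)
          * (uu ρ σ P h k * (1 + ρ * s) / cc ρ σ P h S)
        + ∑ j ∈ (Finset.univ : Finset ↥S).erase kk,
            (ρ * uu ρ σ P h k * (1 - (1 - ρ) * uu ρ σ P h j.1) / cc ρ σ P h S)
              * (-(ρ * uu ρ σ P h j.1 * uu ρ σ P h k) / cc ρ σ P h S) := by
    rw [Matrix.mul_apply (M := Lm ρ σ P h S * corrMat ρ S) (N := Lm ρ σ P h S),
      ← Finset.add_sum_erase _ _ (Finset.mem_univ kk)]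
    congr 1
    · rw [hA, hB]
    · exact Finset.sum_congr rfl fun j hj => by rw [hoff j hj, hLjk j hj]
  have hsum3 : ∑ j ∈ (Finset.univ : Finset ↥S).erase kk,
      ((Lm ρ σ P h S * corrMat ρ S) kk j) ^ 2 * (h j.1) ^ 2 * P
      = ∑ j ∈ (Finset.univ : Finset ↥S).erase kk,
          (ρ * uu ρ σ P h k * (1 - (1 - ρ) * uu ρ σ P h j.1) / cc ρ σ P h S) ^ 2
            * (h j.1) ^ 2 * P :=
    Finset.sum_congr rfl fun j hj => by rw [hoff j hj]
  have hcancel : σ ^ 2 * ∑ j ∈ (Finset.univ : Finset ↥S).erase kk,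
        (ρ * uu ρ σ P h k * (1 - (1 - ρ) * uu ρ σ P h j.1) / cc ρ σ P h S)
          * (-(ρ * uu ρ σ P h j.1 * uu ρ σ P h k) / cc ρ σ P h S)
      + ∑ j ∈ (Finset.univ : Finset ↥S).erase kk,
          (ρ * uu ρ σ P h k * (1 - (1 - ρ) * uu ρ σ P h j.1) / cc ρ σ P h S) ^ 2
            * (h j.1) ^ 2 * P = 0 := by
    rw [Finset.mul_sum, ← Finset.sum_add_distrib]
    refine Finset.sum_eq_zero fun j hj => ?_
    linear_combination ((ρ * uu ρ σ P h k / cc ρ σ P h S) ^ 2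
      * (1 - (1 - ρ) * uu ρ σ P h j.1)) * key_id (j := j.1) hρ1 hσ hP hh
  -- positivity of the closed-form denominator
  have hAB : (0:ℝ) < σ ^ 2 * (1 + ρ * (1 - ρ) * s) * (1 + ρ * s)
      + ρ ^ 2 * ∑ j ∈ Sᶜ, (h j) ^ 2 * P := by
    have h1 : (0:ℝ) < 1 + ρ * (1 - ρ) * s := by
      nlinarith [mul_nonneg (mul_nonneg hρ0 (by linarith : (0:ℝ) ≤ 1 - ρ)) hs0]
    have h2 : (0:ℝ) < 1 + ρ * s := by nlinarith [mul_nonneg hρ0 hs0]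
    have h3 : (0:ℝ) ≤ ∑ j ∈ Sᶜ, (h j) ^ 2 * P :=
      Finset.sum_nonneg fun j _ => by positivity
    nlinarith [sq_nonneg σ, sq_nonneg ρ, mul_pos (mul_pos (pow_pos hσ 2) h1) h2,
      mul_nonneg (sq_nonneg ρ) h3]
  -- unfold the SINR and substitute
  show ((mmseMat ρ σ P h S * corrMat ρ S) kk kk) ^ 2 * (h k) ^ 2 * P /
      (σ ^ 2 * ((mmseMat ρ σ P h S * corrMat ρ S * mmseMat ρ σ P h S) kk kk)
        + ρ ^ 2 * (((mmseMat ρ σ P h S).mulVec fun _ => (1 : ℝ)) kk) ^ 2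
            * ∑ j ∈ Sᶜ, (h j) ^ 2 * P
        + ∑ j ∈ Finset.univ.erase kk, ((mmseMat ρ σ P h S * corrMat ρ S) kk j) ^ 2
            * (h j.1) ^ 2 * P) = _
  rw [mmseMat_eq hρ0 hρ1 hσ hP hh]
  rw [hA, hLRL, hmv, hsum3]
  have hden : σ ^ 2 * ((uu ρ σ P h k * (1 + ρ * (1 - ρ) * s) / cc ρ σ P h S)
          * (uu ρ σ P h k * (1 + ρ * s) / cc ρ σ P h S)
        + ∑ j ∈ (Finset.univ : Finset ↥S).erase kk,
            (ρ * uu ρ σ P h k * (1 - (1 - ρ) * uu ρ σ P h j.1) / cc ρ σ P h S)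
              * (-(ρ * uu ρ σ P h j.1 * uu ρ σ P h k) / cc ρ σ P h S))
      + ρ ^ 2 * (uu ρ σ P h k / cc ρ σ P h S) ^ 2 * ∑ j ∈ Sᶜ, (h j) ^ 2 * P
      + ∑ j ∈ (Finset.univ : Finset ↥S).erase kk,
          (ρ * uu ρ σ P h k * (1 - (1 - ρ) * uu ρ σ P h j.1) / cc ρ σ P h S) ^ 2
            * (h j.1) ^ 2 * P
      = (uu ρ σ P h k / cc ρ σ P h S) ^ 2
          * (σ ^ 2 * (1 + ρ * (1 - ρ) * s) * (1 + ρ * s)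
            + ρ ^ 2 * ∑ j ∈ Sᶜ, (h j) ^ 2 * P) := by
    linear_combination hcancel
  rw [hden]
  have hne2 : (uu ρ σ P h k / cc ρ σ P h S) ^ 2 ≠ 0 := by positivity
  rw [div_eq_div_iff (by positivity) hAB.ne']
  ring

set_option maxHeartbeats 2000000 in
/-- Grand-coalition optimality for the MMSE detector game: every user's SINR is
maximized in the grand coalition, i.e. `γ_k(S) ≤ γ_k({1,…,K})` for every coalition
`S` containing `k`. -/
theorem mmse_grand_coalition_optimal {K : ℕ} (hK : 1 ≤ K)
    (ρ σ P : ℝ) (h : Fin K → ℝ)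
    (hρ0 : 0 ≤ ρ) (hρ1 : ρ < 1) (hσ : 0 < σ) (hP : 0 < P)
    (hh : ∀ k, h k ≠ 0) :
    ∀ (k : Fin K) (S : Finset (Fin K)) (hk : k ∈ S),
      mmseSinr ρ σ P h S k hk ≤ mmseSinr ρ σ P h Finset.univ k (Finset.mem_univ k) := by
  intro k S hk
  classical
  rw [mmseSinr_closed hρ0 hρ1 hσ hP hh S k hk,
    mmseSinr_closed hρ0 hρ1 hσ hP hh Finset.univ k (Finset.mem_univ k)]
  set s : ℝ := ∑ j ∈ S.erase k, uu ρ σ P h j with hs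
  set s' : ℝ := ∑ j ∈ Finset.univ.erase k, uu ρ σ P h j with hs'
  have hIuniv : ∑ j ∈ (Finset.univ : Finset (Fin K))ᶜ, (h j) ^ 2 * P = 0 := by
    simp
  rw [hIuniv]
  set I : ℝ := ∑ j ∈ Sᶜ, (h j) ^ 2 * P with hI
  -- set relations
  have hsub : S.erase k ⊆ Finset.univ.erase k :=
    Finset.erase_subset_erase k (Finset.subset_univ S)
  have hsdiff : Finset.univ.erase k \ S.erase k = Sᶜ := by
    ext j
    simp only [Finset.mem_sdiff, Finset.mem_erase, Finset.mem_univ, and_true,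
      Finset.mem_compl, not_and]
    constructor
    · rintro ⟨hjk, hj⟩
      exact hj hjk
    · intro hj
      exact ⟨fun e => hj (e ▸ hk), fun _ => hj⟩
  have hdelta : s' - s = ∑ j ∈ Sᶜ, uu ρ σ P h j := by
    rw [hs, hs', ← Finset.sum_sdiff hsub, hsdiff]
    ring
  have hs0 : 0 ≤ s := Finset.sum_nonneg fun j _ => (uu_pos hρ1 hσ hP hh j).le
  have hss' : s ≤ s' :=
    Finset.sum_le_sum_of_subset_of_nonneg hsub fun j _ _ => (uu_pos hρ1 hσ hP hh j).le
  have hIge : σ ^ 2 * (s' - s) ≤ I := by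
    rw [hdelta, hI, Finset.mul_sum]
    refine Finset.sum_le_sum fun j _ => ?_
    have hkey := key_id (j := j) hρ1 hσ hP hh
    have hu0 := (uu_pos (j := j) hρ1 hσ hP hh).le
    have hp0 := (p_pos (j := j) hP hh).le
    nlinarith [mul_nonneg (mul_nonneg (by linarith : (0:ℝ) ≤ 1 - ρ) hp0) hu0]
  -- the scalar inequality
  have hpk : (0:ℝ) < P * h k ^ 2 := p_pos hP hh k
  have hρ1' : (0:ℝ) ≤ 1 - ρ := by linarith
  have hA1 : (0:ℝ) < 1 + ρ * (1 - ρ) * s := by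
    nlinarith [mul_nonneg (mul_nonneg hρ0 hρ1') hs0]
  have hB1 : (0:ℝ) < 1 + ρ * s := by nlinarith [mul_nonneg hρ0 hs0]
  have hs'0 : 0 ≤ s' := le_trans hs0 hss'
  have hA1' : (0:ℝ) < 1 + ρ * (1 - ρ) * s' := by
    nlinarith [mul_nonneg (mul_nonneg hρ0 hρ1') hs'0]
  have hB1' : (0:ℝ) < 1 + ρ * s' := by nlinarith [mul_nonneg hρ0 hs'0]
  have hI0 : (0:ℝ) ≤ I := le_trans (by nlinarith) hIge
  have hden1 : (0:ℝ) < σ ^ 2 * (1 + ρ * (1 - ρ) * s) * (1 + ρ * s) + ρ ^ 2 * I := by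
    nlinarith [mul_pos (mul_pos (pow_pos hσ 2) hA1) hB1, mul_nonneg (sq_nonneg ρ) hI0]
  have hden2 : (0:ℝ) < σ ^ 2 * (1 + ρ * (1 - ρ) * s') * (1 + ρ * s') + ρ ^ 2 * 0 := by
    nlinarith [mul_pos (mul_pos (pow_pos hσ 2) hA1') hB1']
  rw [div_le_div_iff₀ hden1 hden2]
  have hkeyineq : (1 + ρ * (1 - ρ) * s') * ((1 + ρ * (1 - ρ) * s) * (1 + ρ * s)
        + ρ ^ 2 * (s' - s)) - (1 + ρ * (1 - ρ) * s) ^ 2 * (1 + ρ * s')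
      = ρ ^ 3 * (1 - ρ) * (s' - s) ^ 2 := by ring
  nlinarith [mul_nonneg (mul_nonneg (mul_nonneg hpk.le (sq_nonneg σ))
      (mul_nonneg (mul_nonneg (pow_nonneg hρ0 3) (by linarith : (0:ℝ) ≤ 1 - ρ))
        (sq_nonneg (s' - s)))) hA1'.le,
    mul_nonneg (mul_nonneg (mul_nonneg hpk.le (sq_nonneg ρ))
      (sub_nonneg.mpr hIge)) (sq_nonneg (1 + ρ * (1 - ρ) * s')),
    hkeyineq, sq_nonneg (s' - s)]
end

section
/- (Grand-coalition stability of the decorrelator game at high SNR.) Fix 0 < ρ < 1, common power P > 0, and real channel gains h₁,…,h_K, and for a coalition S ⊆ {1,…,K} containing user k define the decorrelator SINR η_k(S, σ) = h_k² P / ( (σ²/(1−ρ)) · (1+ρ(|S|−2))/(1+ρ(|S|−1)) + (ρ/(1+ρ(|S|−1)))² Σ_{j∉S} h_j² P ). If k ∈ S ⊊ {1,…,K}, h_k ≠ 0, and Σ_{j∉S} h_j² > 0, then there exists σ₀ > 0 such that for all 0 < σ < σ₀, η_k(S, σ) < η_k({1,…,K}, σ); hence in the high-SNR regime every user achieves its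 largest SINR in the grand coalition. -/
/-- Decorrelator SINR of user `k` in coalition `S` at noise level `σ`:
`η_k(S,σ) = h_k² P / ((σ²/(1−ρ))·(1+ρ(|S|−2))/(1+ρ(|S|−1))
  + (ρ/(1+ρ(|S|−1)))² ∑_{j∉S} h_j² P)`. -/
noncomputable def decorrSinr {K : ℕ} (ρ P : ℝ) (h : Fin K → ℝ)
    (S : Finset (Fin K)) (k : Fin K) (σ : ℝ) : ℝ :=
  (h k) ^ 2 * P /
    ((σ ^ 2 / (1 - ρ)) * ((1 + ρ * ((S.card : ℝ) - 2)) / (1 + ρ * ((S.card : ℝ) - 1)))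
      + (ρ / (1 + ρ * ((S.card : ℝ) - 1))) ^ 2 * ∑ j ∈ Sᶜ, (h j) ^ 2 * P)

/-- Grand-coalition stability of the decorrelator game at high SNR: if
`k ∈ S ⊊ {1,…,K}`, `h_k ≠ 0`, and `∑_{j∉S} h_j² > 0`, then there is `σ₀ > 0` such
that `η_k(S,σ) < η_k({1,…,K},σ)` for all `0 < σ < σ₀`. -/
theorem decorr_grand_coalition_high_snr {K : ℕ} (ρ P : ℝ) (h : Fin K → ℝ)
    (hρ0 : 0 < ρ) (hρ1 : ρ < 1) (hP : 0 < P)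
    (k : Fin K) (S : Finset (Fin K)) (hk : k ∈ S) (hS : S ⊂ Finset.univ)
    (hhk : h k ≠ 0) (hout : 0 < ∑ j ∈ Sᶜ, (h j) ^ 2) :
    ∃ σ₀ > 0, ∀ σ : ℝ, 0 < σ → σ < σ₀ →
      decorrSinr ρ P h S k σ < decorrSinr ρ P h Finset.univ k σ := by
  have h1ρ : 0 < 1 - ρ := by linarith
  have hcard1 : (1:ℝ) ≤ (S.card:ℝ) := by
    exact_mod_cast Finset.card_pos.mpr ⟨k, hk⟩
  have hcardK : (S.card:ℝ) + 1 ≤ (K:ℝ) := by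
    have : S.card < K := by simpa using Finset.card_lt_card hS
    exact_mod_cast this
  have hK2 : (2:ℝ) ≤ (K:ℝ) := by linarith
  have hAS1 : 0 < 1 + ρ * ((S.card:ℝ) - 1) := by nlinarith
  have hAS2 : 0 < 1 + ρ * ((S.card:ℝ) - 2) := by nlinarith
  have hAK1 : 0 < 1 + ρ * ((K:ℝ) - 1) := by nlinarith
  have hAK2 : 0 < 1 + ρ * ((K:ℝ) - 2) := by nlinarith
  set AK : ℝ := (1 + ρ * ((K:ℝ) - 2)) / (1 + ρ * ((K:ℝ) - 1)) with hAKdef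
  have hAK : 0 < AK := div_pos hAK2 hAK1
  have hsum : 0 < ∑ j ∈ Sᶜ, (h j) ^ 2 * P := by
    rw [← Finset.sum_mul]; exact mul_pos hout hP
  set c : ℝ := (ρ / (1 + ρ * ((S.card : ℝ) - 1))) ^ 2 * ∑ j ∈ Sᶜ, (h j) ^ 2 * P with hcdef
  have hc : 0 < c := mul_pos (pow_pos (div_pos hρ0 hAS1) 2) hsum
  refine ⟨Real.sqrt (c * (1 - ρ) / AK), Real.sqrt_pos.mpr (by positivity), ?_⟩
  intro σ hσ0 hσ
  have hσ2 : σ ^ 2 < c * (1 - ρ) / AK := by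
    have := Real.sq_sqrt (le_of_lt (show (0:ℝ) < c * (1 - ρ) / AK by positivity))
    calc σ ^ 2 < (Real.sqrt (c * (1 - ρ) / AK)) ^ 2 :=
          pow_lt_pow_left₀ hσ (le_of_lt hσ0) two_ne_zero
      _ = c * (1 - ρ) / AK := this
  have hDK : σ ^ 2 / (1 - ρ) * AK < c := by
    rw [div_mul_eq_mul_div, div_lt_iff₀ h1ρ]
    have := (lt_div_iff₀ hAK).mp hσ2
    linarith
  have hDKpos : 0 < σ ^ 2 / (1 - ρ) * AK := by positivity
  have hDS : σ ^ 2 / (1 - ρ) * AK <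
      σ ^ 2 / (1 - ρ) * ((1 + ρ * ((S.card:ℝ) - 2)) / (1 + ρ * ((S.card:ℝ) - 1))) + c := by
    have hnn : 0 ≤ σ ^ 2 / (1 - ρ) * ((1 + ρ * ((S.card:ℝ) - 2)) / (1 + ρ * ((S.card:ℝ) - 1))) := by
      positivity
    linarith
  have hN : 0 < (h k) ^ 2 * P := by positivity
  unfold decorrSinr
  rw [Finset.card_univ, Fintype.card_fin, Finset.compl_univ, Finset.sum_empty, mul_zero, add_zero]
  exact div_lt_div_of_pos_left hN hDKpos hDS
end

section
/- Let K_x be a fixed n × n real symmetric positive semidefinite matrix. The function f(K_z) = log det(K_x + K_z) − log det(K_z) is convex on the convex set of n × n real symmetric positive definite matrices K_z; moreover, if K_x is positive definite then f is strictly convex on this set. -/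
open Matrix

namespace LogDetAux

variable {n : ℕ}

lemma conj_posDef {M B : Matrix (Fin n) (Fin n) ℝ} (hM : M.PosDef) (hB : IsUnit B.det) :
    (Bᴴ * M * B).PosDef := by
  refine Matrix.PosDef.of_dotProduct_mulVec_pos (Matrix.isHermitian_conjTranspose_mul_mul B hM.1) fun x hx => ?_
  have hBx : B *ᵥ x ≠ 0 := by
    intro h
    exact hx (Matrix.mulVec_injective_iff_isUnit.mpr (Matrix.isUnit_iff_isUnit_det B |>.2 hB)
      (by simpa using h))
  simpa only [star_mulVec, dotProduct_mulVec, vecMul_vecMul] using hM.dotProduct_mulVec_pos hBx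

lemma psd_diag_nonneg {P : Matrix (Fin n) (Fin n) ℝ} (hP : P.PosSemidef) (i : Fin n) :
    0 ≤ P i i := by
  have := hP.dotProduct_mulVec_nonneg (Pi.single i 1)
  simpa [dotProduct, Matrix.mulVec, Pi.single_apply, Finset.sum_ite_eq,
    Finset.sum_ite_eq'] using this

lemma psd_trace_nonneg {P : Matrix (Fin n) (Fin n) ℝ} (hP : P.PosSemidef) :
    0 ≤ P.trace := by
  rw [Matrix.trace]
  exact Finset.sum_nonneg fun i _ => psd_diag_nonneg hP i


open scoped MatrixOrder in
lemma trace_mul_psd_nonneg {P Q : Matrix (Fin n) (Fin n) ℝ} (hP : P.PosSemidef)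
    (hQ : Q.PosSemidef) : 0 ≤ (P * Q).trace := by
  obtain ⟨B, rfl⟩ : ∃ B : Matrix (Fin n) (Fin n) ℝ, Q = Bᴴ * B :=
    CStarAlgebra.nonneg_iff_eq_star_mul_self.mp hQ.nonneg
  have h1 : (P * (Bᴴ * B)).trace = (B * P * Bᴴ).trace := by
    rw [← Matrix.mul_assoc, Matrix.trace_mul_comm, ← Matrix.mul_assoc]
  rw [h1]
  exact psd_trace_nonneg (hP.mul_mul_conjTranspose_same B)

lemma pd_entry_pos {P B : Matrix (Fin n) (Fin n) ℝ} (hP : P.PosDef) {i : Fin n}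
    (hBi : (fun j => B i j) ≠ 0) : 0 < (B * P * Bᴴ) i i := by
  have hsym : ∀ a b : Fin n, P a b = P b a := fun a b => by
    have := congrFun (congrFun hP.1 b) a
    simpa [Matrix.conjTranspose_apply] using this
  have h := hP.dotProduct_mulVec_pos hBi
  simp only [Matrix.mul_apply, Matrix.conjTranspose_apply, dotProduct, Matrix.mulVec,
    Finset.mul_sum, Finset.sum_mul, star_trivial] at h ⊢
  refine lt_of_lt_of_le h (le_of_eq ?_)
  rw [Finset.sum_comm]
  refine Finset.sum_congr rfl fun a _ => Finset.sum_congr rfl fun b _ => by ring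

open scoped MatrixOrder in
lemma trace_mul_pd_pos {P Q : Matrix (Fin n) (Fin n) ℝ} (hP : P.PosDef)
    (hQ : Q.PosSemidef) (hQ0 : Q ≠ 0) : 0 < (P * Q).trace := by
  obtain ⟨B, rfl⟩ : ∃ B : Matrix (Fin n) (Fin n) ℝ, Q = Bᴴ * B :=
    CStarAlgebra.nonneg_iff_eq_star_mul_self.mp hQ.nonneg
  have h1 : (P * (Bᴴ * B)).trace = (B * P * Bᴴ).trace := by
    rw [← Matrix.mul_assoc, Matrix.trace_mul_comm, ← Matrix.mul_assoc]
  rw [h1, Matrix.trace]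
  have hB : B ≠ 0 := by rintro rfl; simp at hQ0
  obtain ⟨i, hi⟩ : ∃ i, (fun j => B i j) ≠ 0 := by
    by_contra h
    push_neg at h
    exact hB (by ext i j; exact congrFun (h i) j)
  refine Finset.sum_pos' (fun k _ => psd_diag_nonneg (hP.posSemidef.mul_mul_conjTranspose_same B) k)
    ⟨i, Finset.mem_univ i, pd_entry_pos hP hi⟩



lemma inv_sub_inv_eq {A C : Matrix (Fin n) (Fin n) ℝ} (hA : A.PosDef)
    (hM : (A + C).PosDef) :
    A⁻¹ - (A + C)⁻¹ = (A + C)⁻¹ * C * (A + C)⁻¹ + (A + C)⁻¹ * C * A⁻¹ * C * (A + C)⁻¹ := by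
  set M := A + C with hMdef
  have hAu : IsUnit A.det := hA.det_pos.ne'.isUnit
  have hMu : IsUnit M.det := hM.det_pos.ne'.isUnit
  have h1 : A⁻¹ = M⁻¹ + M⁻¹ * C * A⁻¹ := by
    have : M⁻¹ * M * A⁻¹ = A⁻¹ := by rw [Matrix.nonsing_inv_mul M hMu, Matrix.one_mul]
    calc A⁻¹ = M⁻¹ * M * A⁻¹ := this.symm
    _ = M⁻¹ * (A + C) * A⁻¹ := by rw [hMdef]
    _ = M⁻¹ * (A * A⁻¹) + M⁻¹ * C * A⁻¹ := by
        rw [Matrix.mul_add, Matrix.add_mul]; rw [Matrix.mul_assoc]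
    _ = M⁻¹ + M⁻¹ * C * A⁻¹ := by rw [Matrix.mul_nonsing_inv A hAu, Matrix.mul_one]
  have h2 : A⁻¹ = M⁻¹ + A⁻¹ * C * M⁻¹ := by
    have : A⁻¹ * M * M⁻¹ = A⁻¹ := by
      rw [Matrix.mul_assoc, Matrix.mul_nonsing_inv M hMu, Matrix.mul_one]
    calc A⁻¹ = A⁻¹ * M * M⁻¹ := this.symm
    _ = A⁻¹ * (A + C) * M⁻¹ := by rw [hMdef]
    _ = A⁻¹ * A * M⁻¹ + A⁻¹ * C * M⁻¹ := by rw [Matrix.mul_add, Matrix.add_mul]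
    _ = M⁻¹ + A⁻¹ * C * M⁻¹ := by rw [Matrix.nonsing_inv_mul A hAu, Matrix.one_mul]
  -- A⁻¹ - M⁻¹ = M⁻¹ * C * A⁻¹, then substitute h2 into the A⁻¹ factor
  have h3 : A⁻¹ - M⁻¹ = M⁻¹ * C * A⁻¹ := by nth_rewrite 1 [h1]; abel
  rw [h3]
  nth_rewrite 1 [h2]
  simp only [Matrix.mul_add, Matrix.mul_assoc]








lemma inv_sub_inv_posSemidef {A C : Matrix (Fin n) (Fin n) ℝ} (hA : A.PosDef)
    (hC : C.PosSemidef) : (A⁻¹ - (A + C)⁻¹).PosSemidef := by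
  have hM : (A + C).PosDef := hA.add_posSemidef hC
  rw [inv_sub_inv_eq hA hM]
  set M := A + C
  have hMinv : (M⁻¹)ᴴ = M⁻¹ := hM.inv.1
  have t1 : (M⁻¹ * C * M⁻¹).PosSemidef := by
    have := hC.conjTranspose_mul_mul_same (M⁻¹)
    rwa [hMinv] at this
  have t2 : (M⁻¹ * C * A⁻¹ * C * M⁻¹).PosSemidef := by
    have := (hA.inv.posSemidef).conjTranspose_mul_mul_same (C * M⁻¹)
    rw [Matrix.conjTranspose_mul, hMinv, hC.1] at this
    simpa only [Matrix.mul_assoc] using this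
  have := t1.add t2
  simpa only [Matrix.mul_assoc] using this

lemma inv_sub_inv_posDef {A C : Matrix (Fin n) (Fin n) ℝ} (hA : A.PosDef)
    (hC : C.PosDef) : (A⁻¹ - (A + C)⁻¹).PosDef := by
  have hM : (A + C).PosDef := hA.add_posSemidef hC.posSemidef
  rw [inv_sub_inv_eq hA hM]
  set M := A + C
  have hMinv : (M⁻¹)ᴴ = M⁻¹ := hM.inv.1
  have t1 : (M⁻¹ * C * M⁻¹).PosDef := by
    have := conj_posDef hC (B := M⁻¹) (by
      have := hM.inv.det_pos; exact this.ne'.isUnit)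
    rwa [hMinv] at this
  have t2 : (M⁻¹ * C * A⁻¹ * C * M⁻¹).PosSemidef := by
    have := (hA.inv.posSemidef).conjTranspose_mul_mul_same (C * M⁻¹)
    rw [Matrix.conjTranspose_mul, hMinv, hC.1] at this
    simpa only [Matrix.mul_assoc] using this
  have := t1.add_posSemidef t2
  simpa only [Matrix.mul_assoc] using this

lemma trace_comparison {A C D : Matrix (Fin n) (Fin n) ℝ} (hA : A.PosDef)
    (hC : C.PosSemidef) (hD : D.IsHermitian) :
    (((A + C)⁻¹ * D) * ((A + C)⁻¹ * D)).trace ≤ ((A⁻¹ * D) * (A⁻¹ * D)).trace := by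
  have hM : (A + C).PosDef := hA.add_posSemidef hC
  set M := A + C
  set X := A⁻¹ with hXdef
  set Y := M⁻¹ with hYdef
  set R := X - Y with hRdef
  have hR : R.PosSemidef := inv_sub_inv_posSemidef hA hC
  have hXpsd : X.PosSemidef := hA.inv.posSemidef
  have hYpsd : Y.PosSemidef := hM.inv.posSemidef
  have hid : (X * D) * (X * D) - (Y * D) * (Y * D)
      = X * (D * (R * D)) + R * (D * (Y * D)) := by
    rw [hRdef]
    simp only [Matrix.sub_mul, Matrix.mul_sub, Matrix.mul_assoc]
    abel
  have e1 : (X * (D * (R * D))).trace = (R * (D * (X * D))).trace := by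
    rw [show X * (D * (R * D)) = (X * D) * (R * D) by simp [Matrix.mul_assoc],
      Matrix.trace_mul_comm,
      show (R * D) * (X * D) = R * (D * (X * D)) by simp [Matrix.mul_assoc]]
  have hDXD : (D * (X * D)).PosSemidef := by
    have := hXpsd.conjTranspose_mul_mul_same D
    rw [hD.eq] at this
    simpa only [Matrix.mul_assoc] using this
  have hDYD : (D * (Y * D)).PosSemidef := by
    have := hYpsd.conjTranspose_mul_mul_same D
    rw [hD.eq] at this
    simpa only [Matrix.mul_assoc] using this
  have key : 0 ≤ ((X * D) * (X * D)).trace - ((Y * D) * (Y * D)).trace := by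
    rw [← Matrix.trace_sub, hid, Matrix.trace_add, e1]
    exact add_nonneg (trace_mul_psd_nonneg hR hDXD) (trace_mul_psd_nonneg hR hDYD)
  linarith

lemma trace_comparison_strict {A C D : Matrix (Fin n) (Fin n) ℝ} (hA : A.PosDef)
    (hC : C.PosDef) (hD : D.IsHermitian) (hD0 : D ≠ 0) :
    (((A + C)⁻¹ * D) * ((A + C)⁻¹ * D)).trace < ((A⁻¹ * D) * (A⁻¹ * D)).trace := by
  have hM : (A + C).PosDef := hA.add_posSemidef hC.posSemidef
  set M := A + C
  set X := A⁻¹ with hXdef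
  set Y := M⁻¹ with hYdef
  set R := X - Y with hRdef
  have hR : R.PosDef := inv_sub_inv_posDef hA hC
  have hXpd : X.PosDef := hA.inv
  have hYpsd : Y.PosSemidef := hM.inv.posSemidef
  have hid : (X * D) * (X * D) - (Y * D) * (Y * D)
      = X * (D * (R * D)) + R * (D * (Y * D)) := by
    rw [hRdef]
    simp only [Matrix.sub_mul, Matrix.mul_sub, Matrix.mul_assoc]
    abel
  have e1 : (X * (D * (R * D))).trace = (R * (D * (X * D))).trace := by
    rw [show X * (D * (R * D)) = (X * D) * (R * D) by simp [Matrix.mul_assoc],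
      Matrix.trace_mul_comm,
      show (R * D) * (X * D) = R * (D * (X * D)) by simp [Matrix.mul_assoc]]
  have hDXD : (D * (X * D)).PosSemidef := by
    have := hXpd.posSemidef.conjTranspose_mul_mul_same D
    rw [hD.eq] at this
    simpa only [Matrix.mul_assoc] using this
  have hDYD : (D * (Y * D)).PosSemidef := by
    have := hYpsd.conjTranspose_mul_mul_same D
    rw [hD.eq] at this
    simpa only [Matrix.mul_assoc] using this
  have hDXD0 : D * (X * D) ≠ 0 := by
    intro hzero
    apply hD0
    have hvec : ∀ x : Fin n → ℝ, D *ᵥ x = 0 := by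
      intro x
      by_contra h
      have hq := hXpd.dotProduct_mulVec_pos h
      have swap : ∀ w : Fin n → ℝ, star x ⬝ᵥ (D *ᵥ w) = star (D *ᵥ x) ⬝ᵥ w := by
        intro w
        rw [star_mulVec, dotProduct_mulVec, hD.eq]
      have : dotProduct (star x) ((D * (X * D)) *ᵥ x) = 0 := by rw [hzero]; simp
      rw [← Matrix.mulVec_mulVec, ← Matrix.mulVec_mulVec, swap] at this
      exact hq.ne' this
    ext i j
    have := congrFun (hvec (Pi.single j 1)) i
    simpa [Matrix.mulVec_single] using this
  have key : 0 < ((X * D) * (X * D)).trace - ((Y * D) * (Y * D)).trace := by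
    rw [← Matrix.trace_sub, hid, Matrix.trace_add, e1]
    have h1 := trace_mul_pd_pos hR hDXD hDXD0
    have h2 := trace_mul_psd_nonneg hR.posSemidef hDYD
    linarith
  linarith


open scoped MatrixOrder in
lemma exists_diag {A D : Matrix (Fin n) (Fin n) ℝ} (hA : A.PosDef) (hD : D.IsHermitian) :
    ∃ (P : Matrix (Fin n) (Fin n) ℝ) (μ : Fin n → ℝ), IsUnit P.det ∧
      A = Pᴴ * P ∧ D = Pᴴ * Matrix.diagonal μ * P := by
  classical
  set Q := CFC.sqrt A with hQdef
  have hQQ : Q * Q = A := CFC.sqrt_mul_sqrt_self A hA.posSemidef.nonneg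
  have hQherm : Qᴴ = Q := (Matrix.nonneg_iff_posSemidef.mp (CFC.sqrt_nonneg A)).1
  have hQdet : Q.det ≠ 0 := by
    intro h
    have : A.det = 0 := by rw [← hQQ, Matrix.det_mul, h, mul_zero]
    exact hA.det_pos.ne' this
  have hQunit : IsUnit Q.det := isUnit_iff_ne_zero.mpr hQdet
  set E := Q⁻¹ * D * Q⁻¹ with hEdef
  have hQinvherm : (Q⁻¹)ᴴ = Q⁻¹ := by rw [Matrix.conjTranspose_nonsing_inv, hQherm]
  have hE : E.IsHermitian := by
    unfold E
    rw [Matrix.IsHermitian, Matrix.conjTranspose_mul, Matrix.conjTranspose_mul,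
      hQinvherm, hD.eq, Matrix.mul_assoc]
  set V : Matrix (Fin n) (Fin n) ℝ := (hE.eigenvectorUnitary : Matrix (Fin n) (Fin n) ℝ)
    with hVdef
  have hVmem := (hE.eigenvectorUnitary).2
  have hVsV : star V * V = 1 := Matrix.mem_unitaryGroup_iff'.mp hVmem
  have hVVs : V * star V = 1 := Matrix.mem_unitaryGroup_iff.mp hVmem
  have hspec : E = V * Matrix.diagonal (hE.eigenvalues) * star V := by
    have := hE.spectral_theorem
    simpa using this
  refine ⟨star V * Q, hE.eigenvalues, ?_, ?_, ?_⟩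
  · rw [Matrix.det_mul]
    have : (star V).det * V.det = 1 := by rw [← Matrix.det_mul, hVsV, Matrix.det_one]
    exact (IsUnit.of_mul_eq_one _ this).mul hQunit
  · have h1 : (star V * Q)ᴴ = Q * V := by
      rw [Matrix.conjTranspose_mul, hQherm, Matrix.star_eq_conjTranspose,
        Matrix.conjTranspose_conjTranspose]
    rw [h1, show Q * V * (star V * Q) = Q * (V * star V) * Q by simp only [Matrix.mul_assoc],
      hVVs, Matrix.mul_one, hQQ]
  · have h1 : (star V * Q)ᴴ = Q * V := by
      rw [Matrix.conjTranspose_mul, hQherm, Matrix.star_eq_conjTranspose,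
        Matrix.conjTranspose_conjTranspose]
    rw [h1, show Q * V * Matrix.diagonal hE.eigenvalues * (star V * Q)
        = Q * (V * Matrix.diagonal hE.eigenvalues * star V) * Q by simp only [Matrix.mul_assoc],
      ← hspec, hEdef,
      show Q * (Q⁻¹ * D * Q⁻¹) * Q = (Q * Q⁻¹) * D * (Q⁻¹ * Q) by simp only [Matrix.mul_assoc],
      Matrix.mul_nonsing_inv Q hQunit, Matrix.nonsing_inv_mul Q hQunit,
      Matrix.one_mul, Matrix.mul_one]




lemma det_conj_diag (P : Matrix (Fin n) (Fin n) ℝ) (w : Fin n → ℝ) :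
    (Pᴴ * Matrix.diagonal w * P).det = (Pᴴ * P).det * ∏ i, w i := by
  simp only [Matrix.det_mul, Matrix.det_diagonal]
  ring

lemma isUnit_det_conjTranspose' {P : Matrix (Fin n) (Fin n) ℝ} (hP : IsUnit P.det) :
    IsUnit (Pᴴ).det := by
  rw [Matrix.det_conjTranspose]
  simpa using hP

lemma isUnit_det_inv' {P : Matrix (Fin n) (Fin n) ℝ} (hP : IsUnit P.det) :
    IsUnit (P⁻¹).det := by
  rw [Matrix.det_nonsing_inv, Ring.inverse_eq_inv]
  exact (isUnit_iff_ne_zero.mpr (inv_ne_zero (isUnit_iff_ne_zero.mp hP)))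

lemma pd_conj_diag_entries {P : Matrix (Fin n) (Fin n) ℝ} (hP : IsUnit P.det)
    {w : Fin n → ℝ} (h : (Pᴴ * Matrix.diagonal w * P).PosDef) : ∀ i, 0 < w i := by
  have hPH : IsUnit (Pᴴ).det := isUnit_det_conjTranspose' hP
  have hconj := conj_posDef h (B := P⁻¹) (isUnit_det_inv' hP)
  have heq : (P⁻¹)ᴴ * (Pᴴ * Matrix.diagonal w * P) * P⁻¹ = Matrix.diagonal w := by
    rw [Matrix.conjTranspose_nonsing_inv,
      show (Pᴴ)⁻¹ * (Pᴴ * Matrix.diagonal w * P) * P⁻¹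
        = ((Pᴴ)⁻¹ * Pᴴ) * Matrix.diagonal w * (P * P⁻¹) by simp only [Matrix.mul_assoc],
      Matrix.nonsing_inv_mul _ hPH, Matrix.mul_nonsing_inv _ hP,
      Matrix.one_mul, Matrix.mul_one]
  rw [heq] at hconj
  exact fun i => (Matrix.posDef_diagonal_iff.mp hconj) i

lemma inv_conj_diag {P : Matrix (Fin n) (Fin n) ℝ} (hP : IsUnit P.det)
    {w : Fin n → ℝ} (hw : ∀ i, w i ≠ 0) :
    (Pᴴ * Matrix.diagonal w * P)⁻¹
      = P⁻¹ * Matrix.diagonal (fun i => (w i)⁻¹) * (Pᴴ)⁻¹ := by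
  apply Matrix.inv_eq_right_inv
  rw [show Pᴴ * Matrix.diagonal w * P * (P⁻¹ * Matrix.diagonal (fun i => (w i)⁻¹) * (Pᴴ)⁻¹)
      = Pᴴ * (Matrix.diagonal w * ((P * P⁻¹) * Matrix.diagonal (fun i => (w i)⁻¹))) * (Pᴴ)⁻¹
      by simp only [Matrix.mul_assoc],
    Matrix.mul_nonsing_inv _ hP, Matrix.one_mul, Matrix.diagonal_mul_diagonal,
    show (fun i => w i * (w i)⁻¹) = fun _ : Fin n => (1:ℝ) from funext fun i => mul_inv_cancel₀ (hw i),
    Matrix.diagonal_one, Matrix.mul_one, Matrix.mul_nonsing_inv _ (isUnit_det_conjTranspose' hP)]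

lemma mulinv_conj_diag {P : Matrix (Fin n) (Fin n) ℝ} (hP : IsUnit P.det)
    {w : Fin n → ℝ} (hw : ∀ i, w i ≠ 0) (v : Fin n → ℝ) :
    (Pᴴ * Matrix.diagonal w * P)⁻¹ * (Pᴴ * Matrix.diagonal v * P)
      = P⁻¹ * Matrix.diagonal (fun i => v i / w i) * P := by
  rw [inv_conj_diag hP hw,
    show P⁻¹ * Matrix.diagonal (fun i => (w i)⁻¹) * (Pᴴ)⁻¹ * (Pᴴ * Matrix.diagonal v * P)
      = P⁻¹ * (Matrix.diagonal (fun i => (w i)⁻¹) * (((Pᴴ)⁻¹ * Pᴴ) * Matrix.diagonal v)) * P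
      by simp only [Matrix.mul_assoc],
    Matrix.nonsing_inv_mul _ (isUnit_det_conjTranspose' hP), Matrix.one_mul,
    Matrix.diagonal_mul_diagonal,
    show (fun i => (w i)⁻¹ * v i) = (fun i => v i / w i)
      from funext fun i => (div_eq_inv_mul (v i) (w i)).symm]

lemma trace_conj_diag {P : Matrix (Fin n) (Fin n) ℝ} (hP : IsUnit P.det)
    {w : Fin n → ℝ} (hw : ∀ i, w i ≠ 0) (v : Fin n → ℝ) :
    (((Pᴴ * Matrix.diagonal w * P)⁻¹ * (Pᴴ * Matrix.diagonal v * P))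
      * ((Pᴴ * Matrix.diagonal w * P)⁻¹ * (Pᴴ * Matrix.diagonal v * P))).trace
      = ∑ i, (v i / w i) ^ 2 := by
  rw [mulinv_conj_diag hP hw v]
  rw [show (P⁻¹ * Matrix.diagonal (fun i => v i / w i) * P)
        * (P⁻¹ * Matrix.diagonal (fun i => v i / w i) * P)
      = P⁻¹ * (Matrix.diagonal (fun i => v i / w i) * ((P * P⁻¹)
        * Matrix.diagonal (fun i => v i / w i))) * P by simp only [Matrix.mul_assoc],
    Matrix.mul_nonsing_inv _ hP, Matrix.one_mul, Matrix.diagonal_mul_diagonal]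
  rw [show P⁻¹ * Matrix.diagonal (fun i => v i / w i * (v i / w i)) * P
      = P⁻¹ * (Matrix.diagonal (fun i => v i / w i * (v i / w i)) * P)
      by simp only [Matrix.mul_assoc],
    Matrix.trace_mul_comm, Matrix.mul_assoc, Matrix.mul_nonsing_inv _ hP, Matrix.mul_one,
    Matrix.trace_diagonal]
  exact Finset.sum_congr rfl fun i _ => (sq _).symm


lemma strictConvexOn_of_hasDerivWithinAt2_pos {s : Set ℝ} (hs : Convex ℝ s) {f f' f'' : ℝ → ℝ}
    (hf : ContinuousOn f s) (hf' : ∀ x ∈ interior s, HasDerivWithinAt f (f' x) (interior s) x)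
    (hf'' : ∀ x ∈ interior s, HasDerivWithinAt f' (f'' x) (interior s) x)
    (h0 : ∀ x ∈ interior s, 0 < f'' x) : StrictConvexOn ℝ s f := by
  have heq : (interior s).EqOn (deriv f) f' := deriv_eqOn isOpen_interior hf'
  refine strictConvexOn_of_deriv2_pos hs hf fun x hx => ?_
  convert h0 x hx using 1
  dsimp
  rw [deriv_eqOn isOpen_interior (fun y hy => (hf'' y hy).congr heq (heq hy)) hx]

section scalar

variable {ν μ : Fin n → ℝ} {c₁ c₂ : ℝ}

private lemma hd1 (a t : ℝ) (h : 1 + t * a ≠ 0) :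
    HasDerivAt (fun t => Real.log (1 + t * a)) (a / (1 + t * a)) t := by
  have h1 : HasDerivAt (fun t : ℝ => 1 + t * a) a t := by
    simpa using (hasDerivAt_mul_const a).const_add 1
  simpa using h1.log h

private lemma hd2 (a t : ℝ) (h : 1 + t * a ≠ 0) :
    HasDerivAt (fun t => a / (1 + t * a)) (-(a / (1 + t * a)) ^ 2) t := by
  have h1 : HasDerivAt (fun t : ℝ => 1 + t * a) a t := by
    simpa using (hasDerivAt_mul_const a).const_add 1
  have h2 := (h1.inv h).const_mul a
  have he : a * (-a / (1 + t * a) ^ 2) = -(a / (1 + t * a)) ^ 2 := by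
    field_simp
  rw [he] at h2
  have hfe : (fun y => a * (fun t : ℝ => 1 + t * a)⁻¹ y) = fun y => a / (1 + y * a) := by
    funext y; simp [div_eq_mul_inv]
  rwa [hfe] at h2


noncomputable def Gfun (c₁ c₂ : ℝ) (ν μ : Fin n → ℝ) : ℝ → ℝ := fun t =>
  (c₁ + ∑ i, Real.log (1 + t * ν i)) - (c₂ + ∑ i, Real.log (1 + t * μ i))

noncomputable def Gfun' (ν μ : Fin n → ℝ) : ℝ → ℝ := fun t =>
  (∑ i, ν i / (1 + t * ν i)) - ∑ i, μ i / (1 + t * μ i)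

noncomputable def Gfun'' (ν μ : Fin n → ℝ) : ℝ → ℝ := fun t =>
  (∑ i, (μ i / (1 + t * μ i)) ^ 2) - ∑ i, (ν i / (1 + t * ν i)) ^ 2

lemma Gfun_continuousOn (hν : ∀ t ∈ Set.Icc (0:ℝ) 1, ∀ i, 0 < 1 + t * ν i)
    (hμ : ∀ t ∈ Set.Icc (0:ℝ) 1, ∀ i, 0 < 1 + t * μ i) :
    ContinuousOn (Gfun c₁ c₂ ν μ) (Set.Icc 0 1) := by
  apply ContinuousOn.sub
  · apply ContinuousOn.add continuousOn_const
    apply continuousOn_finset_sum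
    intro i _
    exact ContinuousOn.log
      ((continuous_const.add (continuous_id.mul continuous_const)).continuousOn)
      (fun t ht => (hν t ht i).ne')
  · apply ContinuousOn.add continuousOn_const
    apply continuousOn_finset_sum
    intro i _
    exact ContinuousOn.log
      ((continuous_const.add (continuous_id.mul continuous_const)).continuousOn)
      (fun t ht => (hμ t ht i).ne')

lemma Gfun_hasDeriv (hν : ∀ t ∈ Set.Icc (0:ℝ) 1, ∀ i, 0 < 1 + t * ν i)
    (hμ : ∀ t ∈ Set.Icc (0:ℝ) 1, ∀ i, 0 < 1 + t * μ i)
    {x : ℝ} (hx : x ∈ Set.Ioo (0:ℝ) 1) :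
    HasDerivAt (Gfun c₁ c₂ ν μ) (Gfun' ν μ x) x := by
  have hxI : x ∈ Set.Icc (0:ℝ) 1 := Set.Ioo_subset_Icc_self hx
  have h1 : HasDerivAt (fun t => ∑ i, Real.log (1 + t * ν i))
      (∑ i, ν i / (1 + x * ν i)) x :=
    HasDerivAt.fun_sum fun i _ => hd1 (ν i) x (hν x hxI i).ne'
  have h2 : HasDerivAt (fun t => ∑ i, Real.log (1 + t * μ i))
      (∑ i, μ i / (1 + x * μ i)) x :=
    HasDerivAt.fun_sum fun i _ => hd1 (μ i) x (hμ x hxI i).ne'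
  exact (h1.const_add c₁).sub (h2.const_add c₂)

lemma Gfun'_hasDeriv (hν : ∀ t ∈ Set.Icc (0:ℝ) 1, ∀ i, 0 < 1 + t * ν i)
    (hμ : ∀ t ∈ Set.Icc (0:ℝ) 1, ∀ i, 0 < 1 + t * μ i)
    {x : ℝ} (hx : x ∈ Set.Ioo (0:ℝ) 1) :
    HasDerivAt (Gfun' ν μ) (Gfun'' ν μ x) x := by
  have hxI : x ∈ Set.Icc (0:ℝ) 1 := Set.Ioo_subset_Icc_self hx
  have h1 : HasDerivAt (fun t => ∑ i, ν i / (1 + t * ν i))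
      (∑ i, -(ν i / (1 + x * ν i)) ^ 2) x :=
    HasDerivAt.fun_sum fun i _ => hd2 (ν i) x (hν x hxI i).ne'
  have h2 : HasDerivAt (fun t => ∑ i, μ i / (1 + t * μ i))
      (∑ i, -(μ i / (1 + x * μ i)) ^ 2) x :=
    HasDerivAt.fun_sum fun i _ => hd2 (μ i) x (hμ x hxI i).ne'
  have h3 := h1.sub h2
  have : (∑ i, -(ν i / (1 + x * ν i)) ^ 2) - ∑ i, -(μ i / (1 + x * μ i)) ^ 2
      = Gfun'' ν μ x := by
    simp only [Gfun'', Finset.sum_neg_distrib]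
    ring
  rwa [this] at h3

lemma Gfun_convexOn (hν : ∀ t ∈ Set.Icc (0:ℝ) 1, ∀ i, 0 < 1 + t * ν i)
    (hμ : ∀ t ∈ Set.Icc (0:ℝ) 1, ∀ i, 0 < 1 + t * μ i)
    (hcomp : ∀ t ∈ Set.Ioo (0:ℝ) 1,
      (∑ i, (ν i / (1 + t * ν i)) ^ 2) ≤ ∑ i, (μ i / (1 + t * μ i)) ^ 2) :
    ConvexOn ℝ (Set.Icc 0 1) (Gfun c₁ c₂ ν μ) := by
  refine convexOn_of_hasDerivWithinAt2_nonneg (convex_Icc 0 1)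
    (Gfun_continuousOn hν hμ) (f' := Gfun' ν μ) (f'' := Gfun'' ν μ) ?_ ?_ ?_
  · intro x hx; rw [interior_Icc] at hx
    exact (Gfun_hasDeriv hν hμ hx).hasDerivWithinAt
  · intro x hx; rw [interior_Icc] at hx
    exact (Gfun'_hasDeriv hν hμ hx).hasDerivWithinAt
  · intro x hx; rw [interior_Icc] at hx
    have := hcomp x hx
    simp only [Gfun'']
    linarith

lemma Gfun_strictConvexOn (hν : ∀ t ∈ Set.Icc (0:ℝ) 1, ∀ i, 0 < 1 + t * ν i)
    (hμ : ∀ t ∈ Set.Icc (0:ℝ) 1, ∀ i, 0 < 1 + t * μ i)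
    (hcomp : ∀ t ∈ Set.Ioo (0:ℝ) 1,
      (∑ i, (ν i / (1 + t * ν i)) ^ 2) < ∑ i, (μ i / (1 + t * μ i)) ^ 2) :
    StrictConvexOn ℝ (Set.Icc 0 1) (Gfun c₁ c₂ ν μ) := by
  refine strictConvexOn_of_hasDerivWithinAt2_pos (convex_Icc 0 1)
    (Gfun_continuousOn hν hμ) (f' := Gfun' ν μ) (f'' := Gfun'' ν μ) ?_ ?_ ?_
  · intro x hx; rw [interior_Icc] at hx
    exact (Gfun_hasDeriv hν hμ hx).hasDerivWithinAt
  · intro x hx; rw [interior_Icc] at hx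
    exact (Gfun'_hasDeriv hν hμ hx).hasDerivWithinAt
  · intro x hx; rw [interior_Icc] at hx
    have := hcomp x hx
    simp only [Gfun'']
    linarith

end scalar


lemma posDef_smul_add {A B : Matrix (Fin n) (Fin n) ℝ} (hA : A.PosDef) (hB : B.PosDef)
    {a b : ℝ} (ha : 0 ≤ a) (hb : 0 ≤ b) (hab : a + b = 1) : (a • A + b • B).PosDef := by
  refine Matrix.PosDef.of_dotProduct_mulVec_pos ?_ ?_
  · rw [Matrix.IsHermitian, Matrix.conjTranspose_add, Matrix.conjTranspose_smul,
      Matrix.conjTranspose_smul, hA.1.eq, hB.1.eq]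
    simp
  · intro x hx
    have qa := hA.dotProduct_mulVec_pos hx
    have qb := hB.dotProduct_mulVec_pos hx
    have hq : dotProduct (star x) ((a • A + b • B) *ᵥ x)
        = a * dotProduct (star x) (A *ᵥ x) + b * dotProduct (star x) (B *ᵥ x) := by
      rw [Matrix.add_mulVec, dotProduct_add]
      congr 1 <;> rw [Matrix.smul_mulVec, dotProduct_smul, smul_eq_mul]
    rw [hq]
    rcases ha.eq_or_lt with h | h
    · have hb1 : b = 1 := by linarith
      rw [← h, hb1]; simpa using qb
    · exact add_pos_of_pos_of_nonneg (mul_pos h qa) (mul_nonneg hb qb.le)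

lemma posDef_convex : Convex ℝ {K : Matrix (Fin n) (Fin n) ℝ | K.PosDef} :=
  fun A hA B hB a b ha hb hab => posDef_smul_add hA hB ha hb hab


lemma segment_master {Kx K₀ K₁ : Matrix (Fin n) (Fin n) ℝ} (hKx : Kx.PosSemidef)
    (h₀ : K₀.PosDef) (h₁ : K₁.PosDef) :
    (∀ a b : ℝ, 0 ≤ a → 0 ≤ b → a + b = 1 →
      Real.log (Kx + (a • K₀ + b • K₁)).det - Real.log (a • K₀ + b • K₁).det
        ≤ a * (Real.log (Kx + K₀).det - Real.log K₀.det)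
          + b * (Real.log (Kx + K₁).det - Real.log K₁.det)) ∧
    (Kx.PosDef → K₀ ≠ K₁ → ∀ a b : ℝ, 0 < a → 0 < b → a + b = 1 →
      Real.log (Kx + (a • K₀ + b • K₁)).det - Real.log (a • K₀ + b • K₁).det
        < a * (Real.log (Kx + K₀).det - Real.log K₀.det)
          + b * (Real.log (Kx + K₁).det - Real.log K₁.det)) := by
  classical
  set D := K₁ - K₀ with hDdef
  have hD : D.IsHermitian := h₁.1.sub h₀.1
  obtain ⟨P, μ, hPu, hK0eq, hDeq⟩ := exists_diag h₀ hD
  have hMpd : (Kx + K₀).PosDef := Matrix.PosDef.posSemidef_add hKx h₀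
  obtain ⟨Pm, ν, hPmu, hMeq, hDeqm⟩ := exists_diag hMpd hD
  have hline : ∀ t : ℝ, K₀ + t • D = Pᴴ * Matrix.diagonal (fun i => 1 + t * μ i) * P := by
    intro t
    have hdiag : Matrix.diagonal (fun i => 1 + t * μ i)
        = (1 : Matrix (Fin n) (Fin n) ℝ) + t • Matrix.diagonal μ := by
      ext i j
      rcases eq_or_ne i j with rfl | hij
      · simp [Matrix.diagonal_apply_eq, Matrix.one_apply_eq, Matrix.add_apply,
          Matrix.smul_apply, smul_eq_mul]
      · simp [Matrix.diagonal_apply_ne _ hij, Matrix.one_apply_ne hij, Matrix.add_apply,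
          Matrix.smul_apply]
    rw [hdiag, Matrix.mul_add, Matrix.mul_one, Matrix.add_mul, Matrix.mul_smul,
      Matrix.smul_mul, ← hK0eq, ← hDeq]
  have hlinem : ∀ t : ℝ,
      (Kx + K₀) + t • D = Pmᴴ * Matrix.diagonal (fun i => 1 + t * ν i) * Pm := by
    intro t
    have hdiag : Matrix.diagonal (fun i => 1 + t * ν i)
        = (1 : Matrix (Fin n) (Fin n) ℝ) + t • Matrix.diagonal ν := by
      ext i j
      rcases eq_or_ne i j with rfl | hij
      · simp [Matrix.diagonal_apply_eq, Matrix.one_apply_eq, Matrix.add_apply,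
          Matrix.smul_apply, smul_eq_mul]
      · simp [Matrix.diagonal_apply_ne _ hij, Matrix.one_apply_ne hij, Matrix.add_apply,
          Matrix.smul_apply]
    rw [hdiag, Matrix.mul_add, Matrix.mul_one, Matrix.add_mul, Matrix.mul_smul,
      Matrix.smul_mul, ← hMeq, ← hDeqm]
  have hseg : ∀ t ∈ Set.Icc (0:ℝ) 1, (K₀ + t • D).PosDef := by
    intro t ht
    have hco : K₀ + t • D = (1 - t) • K₀ + t • K₁ := by rw [hDdef]; module
    rw [hco]
    exact posDef_smul_add h₀ h₁ (by linarith [ht.2]) ht.1 (by ring)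
  have hsegm : ∀ t ∈ Set.Icc (0:ℝ) 1, ((Kx + K₀) + t • D).PosDef := by
    intro t ht
    rw [add_assoc]
    exact Matrix.PosDef.posSemidef_add hKx (hseg t ht)
  have hμpos : ∀ t ∈ Set.Icc (0:ℝ) 1, ∀ i, 0 < 1 + t * μ i := by
    intro t ht
    exact pd_conj_diag_entries hPu (by rw [← hline t]; exact hseg t ht)
  have hνpos : ∀ t ∈ Set.Icc (0:ℝ) 1, ∀ i, 0 < 1 + t * ν i := by
    intro t ht
    exact pd_conj_diag_entries hPmu (by rw [← hlinem t]; exact hsegm t ht)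
  set c₁ := Real.log (Kx + K₀).det with hc₁
  set c₂ := Real.log K₀.det with hc₂
  have hval : ∀ t ∈ Set.Icc (0:ℝ) 1,
      Real.log (Kx + (K₀ + t • D)).det - Real.log (K₀ + t • D).det
        = Gfun c₁ c₂ ν μ t := by
    intro t ht
    have e1 : (Kx + (K₀ + t • D)).det = (Kx + K₀).det * ∏ i, (1 + t * ν i) := by
      rw [← add_assoc, hlinem t, det_conj_diag, ← hMeq]
    have e2 : (K₀ + t • D).det = K₀.det * ∏ i, (1 + t * μ i) := by
      rw [hline t, det_conj_diag, ← hK0eq]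
    have hprodν : (∏ i, (1 + t * ν i)) ≠ 0 :=
      (Finset.prod_pos fun i _ => hνpos t ht i).ne'
    have hprodμ : (∏ i, (1 + t * μ i)) ≠ 0 :=
      (Finset.prod_pos fun i _ => hμpos t ht i).ne'
    rw [e1, e2, Real.log_mul hMpd.det_pos.ne' hprodν, Real.log_mul h₀.det_pos.ne' hprodμ,
      Real.log_prod (fun i _ => (hνpos t ht i).ne'),
      Real.log_prod (fun i _ => (hμpos t ht i).ne')]
    rfl
  have htrμ : ∀ t ∈ Set.Ioo (0:ℝ) 1,
      (∑ i, (μ i / (1 + t * μ i)) ^ 2)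
        = (((K₀ + t • D)⁻¹ * D) * ((K₀ + t • D)⁻¹ * D)).trace := by
    intro t ht
    have htI := Set.Ioo_subset_Icc_self ht
    rw [hline t]
    rw [hDeq]
    exact (trace_conj_diag hPu (fun i => (hμpos t htI i).ne') μ).symm
  have htrν : ∀ t ∈ Set.Ioo (0:ℝ) 1,
      (∑ i, (ν i / (1 + t * ν i)) ^ 2)
        = ((((Kx + K₀) + t • D)⁻¹ * D) * (((Kx + K₀) + t • D)⁻¹ * D)).trace := by
    intro t ht
    have htI := Set.Ioo_subset_Icc_self ht
    rw [hlinem t]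
    rw [hDeqm]
    exact (trace_conj_diag hPmu (fun i => (hνpos t htI i).ne') ν).symm
  have haddc : ∀ t : ℝ, (K₀ + t • D) + Kx = (Kx + K₀) + t • D := fun t => by abel
  constructor
  · intro a b ha hb hab
    have hcomp : ∀ t ∈ Set.Ioo (0:ℝ) 1,
        (∑ i, (ν i / (1 + t * ν i)) ^ 2) ≤ ∑ i, (μ i / (1 + t * μ i)) ^ 2 := by
      intro t ht
      have htI := Set.Ioo_subset_Icc_self ht
      have h3 := trace_comparison (hseg t htI) hKx hD
      rw [haddc t] at h3
      rw [htrμ t ht, htrν t ht]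
      exact h3
    have hG := Gfun_convexOn (c₁ := c₁) (c₂ := c₂) hνpos hμpos hcomp
    have h0m : (0:ℝ) ∈ Set.Icc (0:ℝ) 1 := ⟨le_rfl, zero_le_one⟩
    have h1m : (1:ℝ) ∈ Set.Icc (0:ℝ) 1 := ⟨zero_le_one, le_rfl⟩
    have hineq := hG.2 h0m h1m ha hb hab
    have hb01 : a • (0:ℝ) + b • (1:ℝ) = b := by simp
    rw [hb01, smul_eq_mul, smul_eq_mul] at hineq
    have hbI : b ∈ Set.Icc (0:ℝ) 1 := ⟨hb, by linarith⟩
    have E0 : Real.log (Kx + K₀).det - Real.log K₀.det = Gfun c₁ c₂ ν μ 0 := by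
      have := hval 0 h0m
      simpa using this
    have E1 : Real.log (Kx + K₁).det - Real.log K₁.det = Gfun c₁ c₂ ν μ 1 := by
      have h := hval 1 h1m
      rw [show K₀ + (1:ℝ) • D = K₁ by rw [hDdef]; module] at h
      exact h
    have hcomb : a • K₀ + b • K₁ = K₀ + b • D := by
      have ha' : a = 1 - b := by linarith
      rw [ha', hDdef]; module
    rw [hcomb, hval b hbI, E0, E1]
    exact hineq
  · intro hKxpd hne a b ha hb hab
    have hD0 : D ≠ 0 := sub_ne_zero_of_ne (fun h => hne h.symm)
    have hcomp : ∀ t ∈ Set.Ioo (0:ℝ) 1,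
        (∑ i, (ν i / (1 + t * ν i)) ^ 2) < ∑ i, (μ i / (1 + t * μ i)) ^ 2 := by
      intro t ht
      have htI := Set.Ioo_subset_Icc_self ht
      have h3 := trace_comparison_strict (hseg t htI) hKxpd hD hD0
      rw [haddc t] at h3
      rw [htrμ t ht, htrν t ht]
      exact h3
    have hG := Gfun_strictConvexOn (c₁ := c₁) (c₂ := c₂) hνpos hμpos hcomp
    have h0m : (0:ℝ) ∈ Set.Icc (0:ℝ) 1 := ⟨le_rfl, zero_le_one⟩
    have h1m : (1:ℝ) ∈ Set.Icc (0:ℝ) 1 := ⟨zero_le_one, le_rfl⟩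
    have hineq := hG.2 h0m h1m (by norm_num : (0:ℝ) ≠ 1) ha hb hab
    have hb01 : a • (0:ℝ) + b • (1:ℝ) = b := by simp
    rw [hb01, smul_eq_mul, smul_eq_mul] at hineq
    have hbI : b ∈ Set.Icc (0:ℝ) 1 := ⟨hb.le, by linarith⟩
    have E0 : Real.log (Kx + K₀).det - Real.log K₀.det = Gfun c₁ c₂ ν μ 0 := by
      have := hval 0 h0m
      simpa using this
    have E1 : Real.log (Kx + K₁).det - Real.log K₁.det = Gfun c₁ c₂ ν μ 1 := by
      have h := hval 1 h1m
      rw [show K₀ + (1:ℝ) • D = K₁ by rw [hDdef]; module] at h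
      exact h
    have hcomb : a • K₀ + b • K₁ = K₀ + b • D := by
      have ha' : a = 1 - b := by linarith
      rw [ha', hDdef]; module
    rw [hcomb, hval b hbI, E0, E1]
    exact hineq


end LogDetAux

/-- For a fixed real symmetric positive semidefinite `K_x`, the function
`K_z ↦ log det(K_x + K_z) − log det K_z` is convex on the set of symmetric positive
definite matrices; if moreover `K_x` is positive definite, it is strictly convex. -/
theorem logdet_ratio_convexOn {n : ℕ} (Kx : Matrix (Fin n) (Fin n) ℝ)
    (hKx : Kx.PosSemidef) :
    ConvexOn ℝ {Kz : Matrix (Fin n) (Fin n) ℝ | Kz.PosDef}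
      (fun Kz => Real.log (Kx + Kz).det - Real.log Kz.det) ∧
    (Kx.PosDef →
      StrictConvexOn ℝ {Kz : Matrix (Fin n) (Fin n) ℝ | Kz.PosDef}
        (fun Kz => Real.log (Kx + Kz).det - Real.log Kz.det)) := by
  constructor
  · refine ⟨LogDetAux.posDef_convex, ?_⟩
    intro x hx y hy a b ha hb hab
    have := (LogDetAux.segment_master hKx hx hy).1 a b ha hb hab
    simpa [smul_eq_mul] using this
  · intro hKxpd
    refine ⟨LogDetAux.posDef_convex, ?_⟩
    intro x hx y hy hxy a b ha hb hab
    have := (LogDetAux.segment_master hKx hx hy).2 hKxpd hxy a b ha hb hab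
    simpa [smul_eq_mul] using this
end

section
/- (Cohesiveness of the transmitter cooperation jamming game.) Define the value of a coalition S ⊆ {1,…,K} as v(S) = min_{Q₂∈C(Sᶜ)} max_{Q₁∈C(S)} [ log det(I_K + H_S Q₁ H_S† + H_{Sᶜ} Q₂ H_{Sᶜ}†) − log det(I_K + H_{Sᶜ} Q₂ H_{Sᶜ}†) ], so that v({1,…,K}) = max_{Q∈C({1,…,K})} log det(I_K + H Q H†). Then for every partition S₁, …, S_N of {1,…,K} with 2 ≤ N ≤ K, Σ_{n=1}^{N} v(S_n) ≤ v({1,…,K}). -/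
open Matrix ComplexOrder

/-- Admissible covariance set
`C(T) = {Q Hermitian PSD : Q_{kk} ≤ P_k for all k ∈ T}` for the users in `T`. -/
def covSet {K : ℕ} (P : Fin K → ℝ) (T : Finset (Fin K)) :
    Set (Matrix ↥T ↥T ℂ) :=
  {Q | Q.PosSemidef ∧ ∀ k : ↥T, Q k k ≤ (P k.1 : ℂ)}

/-- Payoff of the transmitter cooperation jamming game for coalition `S`:
`l(Q₁,Q₂) = log det(I_K + H_S Q₁ H_S† + H_{Sᶜ} Q₂ H_{Sᶜ}†)
          − log det(I_K + H_{Sᶜ} Q₂ H_{Sᶜ}†)`,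
where `H_T` is the submatrix of the columns of `H` indexed by `T`. -/
noncomputable def jamPayoff {K : ℕ} (H : Matrix (Fin K) (Fin K) ℂ)
    (S : Finset (Fin K)) (Q₁ : Matrix ↥S ↥S ℂ) (Q₂ : Matrix ↥Sᶜ ↥Sᶜ ℂ) : ℝ :=
  let HS : Matrix (Fin K) ↥S ℂ := Matrix.of fun i k => H i k.1
  let HSc : Matrix (Fin K) ↥Sᶜ ℂ := Matrix.of fun i k => H i k.1
  Real.log ((1 + HS * Q₁ * HSᴴ + HSc * Q₂ * HScᴴ).det.re)
    - Real.log ((1 + HSc * Q₂ * HScᴴ).det.re)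

/-- Value of a coalition `S` in the transmitter cooperation jamming game:
`v(S) = min_{Q₂ ∈ C(Sᶜ)} max_{Q₁ ∈ C(S)} l(Q₁,Q₂)`. -/
noncomputable def jamValue {K : ℕ} (H : Matrix (Fin K) (Fin K) ℂ)
    (P : Fin K → ℝ) (S : Finset (Fin K)) : ℝ :=
  ⨅ Q₂ : covSet P Sᶜ, ⨆ Q₁ : covSet P S, jamPayoff H S Q₁ Q₂

namespace JamAux

variable {K : ℕ}

/-- The submatrix of the columns of `H` indexed by `T`. -/
def cols (H : Matrix (Fin K) (Fin K) ℂ) (T : Finset (Fin K)) :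
    Matrix (Fin K) ↥T ℂ := Matrix.of fun i k => H i k.1

lemma jamPayoff_eq (H : Matrix (Fin K) (Fin K) ℂ) (S : Finset (Fin K))
    (Q₁ : Matrix ↥S ↥S ℂ) (Q₂ : Matrix ↥Sᶜ ↥Sᶜ ℂ) :
    jamPayoff H S Q₁ Q₂ =
      Real.log ((1 + cols H S * Q₁ * (cols H S)ᴴ
          + cols H Sᶜ * Q₂ * (cols H Sᶜ)ᴴ).det.re)
        - Real.log ((1 + cols H Sᶜ * Q₂ * (cols H Sᶜ)ᴴ).det.re) := rfl

lemma zero_mem_covSet {P : Fin K → ℝ} (hP : ∀ k, 0 < P k) {T : Finset (Fin K)} :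
    (0 : Matrix ↥T ↥T ℂ) ∈ covSet P T :=
  ⟨Matrix.PosSemidef.zero, fun k => by
    rw [Matrix.zero_apply]; exact Complex.zero_le_real.2 (hP _).le⟩

lemma jamPayoff_zero (H : Matrix (Fin K) (Fin K) ℂ) (S : Finset (Fin K))
    (Q₂ : Matrix ↥Sᶜ ↥Sᶜ ℂ) :
    jamPayoff H S (0 : Matrix ↥S ↥S ℂ) Q₂ = 0 := by
  rw [jamPayoff_eq]
  simp

lemma sup_nonneg' (H : Matrix (Fin K) (Fin K) ℂ) {P : Fin K → ℝ}
    (hP : ∀ k, 0 < P k) (S : Finset (Fin K)) (Q₂ : Matrix ↥Sᶜ ↥Sᶜ ℂ) :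
    0 ≤ ⨆ Q₁ : covSet P S, jamPayoff H S Q₁ Q₂ := by
  by_cases hb : BddAbove (Set.range fun Q₁ : covSet P S => jamPayoff H S Q₁ Q₂)
  · have h := le_ciSup hb (⟨0, zero_mem_covSet hP⟩ : covSet P S)
    rw [jamPayoff_zero] at h
    exact h
  · rw [Real.iSup_of_not_bddAbove hb]

lemma jamValue_le_sup (H : Matrix (Fin K) (Fin K) ℂ) {P : Fin K → ℝ}
    (hP : ∀ k, 0 < P k) (S : Finset (Fin K)) (Q₂ : Matrix ↥Sᶜ ↥Sᶜ ℂ)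
    (hQ₂ : Q₂ ∈ covSet P Sᶜ) :
    jamValue H P S ≤ ⨆ Q₁ : covSet P S, jamPayoff H S Q₁ Q₂ := by
  have hbb : BddBelow (Set.range fun Q₂ : covSet P Sᶜ =>
      ⨆ Q₁ : covSet P S, jamPayoff H S Q₁ Q₂) := by
    refine ⟨0, ?_⟩
    rintro y ⟨Q₂', rfl⟩
    exact sup_nonneg' H hP S Q₂'
  exact ciInf_le hbb ⟨Q₂, hQ₂⟩

lemma exists_eps (H : Matrix (Fin K) (Fin K) ℂ) {P : Fin K → ℝ}
    (hP : ∀ k, 0 < P k) (S : Finset (Fin K)) (Q₂ : Matrix ↥Sᶜ ↥Sᶜ ℂ)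
    {ε : ℝ} (hε : 0 < ε) :
    ∃ Q₁, Q₁ ∈ covSet P S ∧
      (⨆ Q₁' : covSet P S, jamPayoff H S Q₁' Q₂) ≤ jamPayoff H S Q₁ Q₂ + ε := by
  haveI : Nonempty ↥(covSet P S) := ⟨⟨0, zero_mem_covSet hP⟩⟩
  by_cases hb : BddAbove (Set.range fun Q₁ : covSet P S => jamPayoff H S Q₁ Q₂)
  · obtain ⟨Q₁, hQ₁⟩ := exists_lt_of_lt_ciSup
      (sub_lt_self (⨆ Q₁' : covSet P S, jamPayoff H S Q₁' Q₂) hε)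
    exact ⟨Q₁, Q₁.2, by linarith⟩
  · refine ⟨0, zero_mem_covSet hP, ?_⟩
    rw [Real.iSup_of_not_bddAbove hb, jamPayoff_zero]
    linarith

/-! ### Embedding of covariance matrices -/

/-- The 0-1 inclusion matrix from `↥T` into `↥U`. -/
noncomputable def inclM (T U : Finset (Fin K)) : Matrix ↥U ↥T ℂ :=
  Matrix.of fun u t => if (u : Fin K) = (t : Fin K) then (1 : ℂ) else 0

lemma inclM_apply (T U : Finset (Fin K)) (u : ↥U) (t : ↥T) :
    inclM T U u t = if (u : Fin K) = (t : Fin K) then (1 : ℂ) else 0 := rfl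

/-- Zero-padded embedding of a `T × T` matrix into a `U × U` matrix. -/
noncomputable def embedCov (T U : Finset (Fin K)) (Q : Matrix ↥T ↥T ℂ) : Matrix ↥U ↥U ℂ :=
  inclM T U * Q * (inclM T U)ᴴ

lemma inclM_mul_apply {T U : Finset (Fin K)} (Q : Matrix ↥T ↥T ℂ)
    (u : ↥U) (t' : ↥T) (hu : (u : Fin K) ∈ T) :
    (inclM T U * Q) u t' = Q ⟨u, hu⟩ t' := by
  rw [Matrix.mul_apply, Fintype.sum_eq_single (⟨(u : Fin K), hu⟩ : ↥T)]
  · rw [inclM_apply, if_pos rfl, one_mul]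
  · intro b hb
    rw [inclM_apply, if_neg (fun h => hb (Subtype.ext h.symm)), zero_mul]

lemma inclM_mul_apply_zero {T U : Finset (Fin K)} (Q : Matrix ↥T ↥T ℂ)
    (u : ↥U) (t' : ↥T) (hu : (u : Fin K) ∉ T) :
    (inclM T U * Q) u t' = 0 := by
  rw [Matrix.mul_apply]
  apply Finset.sum_eq_zero
  intro t _
  rw [inclM_apply, if_neg (fun h => hu (by rw [h]; exact t.2)), zero_mul]

lemma embedCov_apply {T U : Finset (Fin K)} (Q : Matrix ↥T ↥T ℂ) (u u' : ↥U) :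
    embedCov T U Q u u' =
      if h : (u : Fin K) ∈ T ∧ (u' : Fin K) ∈ T then Q ⟨u, h.1⟩ ⟨u', h.2⟩ else 0 := by
  unfold embedCov
  by_cases hu : (u : Fin K) ∈ T
  · by_cases hu' : (u' : Fin K) ∈ T
    · rw [dif_pos ⟨hu, hu'⟩, Matrix.mul_apply,
        Fintype.sum_eq_single (⟨(u' : Fin K), hu'⟩ : ↥T)]
      · rw [inclM_mul_apply Q u _ hu, Matrix.conjTranspose_apply, inclM_apply,
          if_pos rfl, star_one, mul_one]
      · intro b hb
        rw [Matrix.conjTranspose_apply, inclM_apply,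
          if_neg (fun h => hb (Subtype.ext h.symm)), star_zero, mul_zero]
    · rw [dif_neg (fun h => hu' h.2), Matrix.mul_apply]
      apply Finset.sum_eq_zero
      intro t _
      rw [Matrix.conjTranspose_apply, inclM_apply,
        if_neg (fun h => hu' (by rw [h]; exact t.2)), star_zero, mul_zero]
  · rw [dif_neg (fun h => hu h.1), Matrix.mul_apply]
    apply Finset.sum_eq_zero
    intro t _
    rw [inclM_mul_apply_zero Q u _ hu, zero_mul]

lemma embedCov_mem {P : Fin K → ℝ} (hP : ∀ k, 0 < P k) {T U : Finset (Fin K)}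
    {Q : Matrix ↥T ↥T ℂ} (hQ : Q ∈ covSet P T) :
    embedCov T U Q ∈ covSet P U := by
  refine ⟨hQ.1.mul_mul_conjTranspose_same _, fun u => ?_⟩
  rw [embedCov_apply]
  split
  · exact hQ.2 _
  · exact Complex.zero_le_real.2 (hP _).le

lemma cols_mul_inclM (H : Matrix (Fin K) (Fin K) ℂ) {T U : Finset (Fin K)}
    (hTU : T ⊆ U) : cols H U * inclM T U = cols H T := by
  ext i t
  rw [Matrix.mul_apply, Fintype.sum_eq_single (⟨(t : Fin K), hTU t.2⟩ : ↥U)]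
  · rw [inclM_apply, if_pos rfl, mul_one]; rfl
  · intro b hb
    rw [inclM_apply, if_neg (fun h => hb (Subtype.ext h)), mul_zero]

lemma cols_embedCov (H : Matrix (Fin K) (Fin K) ℂ) {T U : Finset (Fin K)}
    (hTU : T ⊆ U) (Q : Matrix ↥T ↥T ℂ) :
    cols H U * embedCov T U Q * (cols H U)ᴴ = cols H T * Q * (cols H T)ᴴ := by
  have h1 : cols H U * inclM T U = cols H T := cols_mul_inclM H hTU
  calc cols H U * (inclM T U * Q * (inclM T U)ᴴ) * (cols H U)ᴴ
      = (cols H U * inclM T U) * Q * ((inclM T U)ᴴ * (cols H U)ᴴ) := by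
        simp only [Matrix.mul_assoc]
    _ = cols H T * Q * (cols H T)ᴴ := by
        rw [h1, ← Matrix.conjTranspose_mul, h1]

lemma combine_mem {P : Fin K → ℝ} (hP : ∀ k, 0 < P k)
    {T S' U : Finset (Fin K)} (hdisj : Disjoint T S')
    {Q : Matrix ↥T ↥T ℂ} {Qn : Matrix ↥S' ↥S' ℂ}
    (hQ : Q ∈ covSet P T) (hQn : Qn ∈ covSet P S') :
    embedCov T U Q + embedCov S' U Qn ∈ covSet P U := by
  refine ⟨(hQ.1.mul_mul_conjTranspose_same _).add
    (hQn.1.mul_mul_conjTranspose_same _), fun u => ?_⟩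
  rw [Matrix.add_apply, embedCov_apply, embedCov_apply]
  by_cases hu : (u : Fin K) ∈ T
  · rw [dif_pos ⟨hu, hu⟩,
      dif_neg (fun h => (Finset.disjoint_left.mp hdisj hu) h.1), add_zero]
    exact hQ.2 _
  · rw [dif_neg (fun h => hu h.1), zero_add]
    by_cases hu' : (u : Fin K) ∈ S'
    · rw [dif_pos ⟨hu', hu'⟩]
      exact hQn.2 _
    · rw [dif_neg (fun h => hu' h.1)]
      exact Complex.zero_le_real.2 (hP _).le

/-! ### Entry bounds for PSD matrices and boundedness of the payoff -/

lemma psd_diag_re_nonneg {n : Type*} [Fintype n] [DecidableEq n]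
    {Q : Matrix n n ℂ} (hQ : Q.PosSemidef) (j : n) : 0 ≤ (Q j j).re := by
  have h := hQ.dotProduct_mulVec_nonneg (Pi.single j 1)
  have hval : star (Pi.single j 1 : n → ℂ) ⬝ᵥ Q.mulVec (Pi.single j 1) = Q j j := by
    simp [dotProduct, Matrix.mulVec, Pi.single_apply, apply_ite, mul_ite, ite_mul,
      Finset.sum_ite_eq, Finset.sum_ite_eq']
  rw [hval] at h
  simpa using (Complex.le_def.mp h).1

lemma psd_entry_le {n : Type*} [Fintype n] [DecidableEq n]
    {Q : Matrix n n ℂ} (hQ : Q.PosSemidef) (j k : n) :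
    ‖Q j k‖ ≤ ((Q j j).re + (Q k k).re) / 2 := by
  rcases eq_or_ne (Q j k) 0 with h0 | h0
  · rw [h0, norm_zero]
    have h1 := psd_diag_re_nonneg hQ j
    have h2 := psd_diag_re_nonneg hQ k
    linarith
  · set m : ℝ := ‖Q j k‖ with hm
    have hm0 : 0 < m := by
      rw [hm]; exact (norm_pos_iff.mpr h0)
    have hm' : (m : ℂ) ≠ 0 := Complex.ofReal_ne_zero.2 hm0.ne'
    set c : ℂ := -((starRingEnd ℂ) (Q j k)) / m with hc
    have hqc : Q j k * ((starRingEnd ℂ) (Q j k)) = (m : ℂ) ^ 2 := by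
      rw [Complex.mul_conj, Complex.normSq_eq_norm_sq]
      push_cast
      rfl
    have hkj : Q k j = (starRingEnd ℂ) (Q j k) := by
      conv_lhs => rw [← hQ.1]
      rfl
    set e : Fin 2 → n := ![j, k] with he
    have hsub := (hQ.submatrix e).dotProduct_mulVec_nonneg ![1, c]
    have hval : star (![1, c]) ⬝ᵥ (Q.submatrix e e).mulVec ![1, c]
        = Q j j + Q k k - 2 * m := by
      have h1 : Q j k * c = -(m : ℂ) := by
        rw [hc]
        field_simp
        rw [hqc]
      have h2 : (starRingEnd ℂ) c = -(Q j k) / (m : ℂ) := by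
        rw [hc]
        simp [map_div₀, Complex.conj_ofReal]
      have h3 : (starRingEnd ℂ) c * ((starRingEnd ℂ) (Q j k)) = -(m : ℂ) := by
        rw [h2]
        field_simp
        rw [hqc]
      have h4 : (starRingEnd ℂ) c * c = 1 := by
        rw [h2, hc]
        field_simp
        rw [hqc]
      have hexp : star (![1, c]) ⬝ᵥ (Q.submatrix e e).mulVec ![1, c]
          = Q j j + Q j k * c + (starRingEnd ℂ) c * ((starRingEnd ℂ) (Q j k))
            + (starRingEnd ℂ) c * c * Q k k := by
        simp [dotProduct, Matrix.mulVec, Fin.sum_univ_two, he, hkj,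
          Matrix.submatrix_apply, Complex.star_def]
        ring
      rw [hexp, h1, h3, h4]
      ring
    rw [hval] at hsub
    have hre := (Complex.le_def.mp hsub).1
    simp only [Complex.zero_re, Complex.sub_re, Complex.add_re, Complex.mul_re,
      Complex.ofReal_re, Complex.ofReal_im] at hre
    norm_num at hre
    linarith

lemma covSet_entry_le {P : Fin K → ℝ} (hP : ∀ k, 0 < P k)
    {Q : Matrix ↥(Finset.univ : Finset (Fin K)) ↥(Finset.univ : Finset (Fin K)) ℂ}
    (hQ : Q ∈ covSet P Finset.univ) (t t' : ↥(Finset.univ : Finset (Fin K))) :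
    ‖Q t t'‖ ≤ ∑ l, P l := by
  have h1 := psd_entry_le hQ.1 t t'
  have h2 : (Q t t).re ≤ P t.1 := by
    have := (Complex.le_def.mp (hQ.2 t)).1
    simpa using this
  have h3 : (Q t' t').re ≤ P t'.1 := by
    have := (Complex.le_def.mp (hQ.2 t')).1
    simpa using this
  have h4 : P t.1 ≤ ∑ l, P l :=
    Finset.single_le_sum (fun l _ => (hP l).le) (Finset.mem_univ _)
  have h5 : P t'.1 ≤ ∑ l, P l :=
    Finset.single_le_sum (fun l _ => (hP l).le) (Finset.mem_univ _)
  linarith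

set_option maxHeartbeats 1000000 in
lemma bdd (H : Matrix (Fin K) (Fin K) ℂ) (P : Fin K → ℝ) (hP : ∀ k, 0 < P k) :
    ∃ M : ℝ, ∀ Q ∈ covSet P (Finset.univ : Finset (Fin K)),
      Real.log ((1 + cols H Finset.univ * Q * (cols H Finset.univ)ᴴ).det.re) ≤ M := by
  classical
  obtain ⟨PS, hPS⟩ : ∃ PS : ℝ, PS = ∑ l, P l := ⟨_, rfl⟩
  obtain ⟨HB, hHB⟩ : ∃ HB : ℝ, HB = 1 + ∑ p : Fin K × Fin K, ‖H p.1 p.2‖ := ⟨_, rfl⟩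
  have hHB1 : ∀ a b, ‖H a b‖ ≤ HB := by
    intro a b
    have h1 : ‖H a b‖ ≤ ∑ p : Fin K × Fin K, ‖H p.1 p.2‖ :=
      Finset.single_le_sum (f := fun p : Fin K × Fin K => ‖H p.1 p.2‖)
        (fun _ _ => norm_nonneg _) (Finset.mem_univ (a, b))
    rw [hHB]; linarith
  have hHB0 : 0 ≤ HB := by
    have h2 : (0:ℝ) ≤ ∑ p : Fin K × Fin K, ‖H p.1 p.2‖ :=
      Finset.sum_nonneg fun _ _ => norm_nonneg _
    rw [hHB]; linarith
  have hPS0 : 0 ≤ PS := by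
    rw [hPS]; exact Finset.sum_nonneg fun l _ => (hP l).le
  obtain ⟨x, hx⟩ : ∃ x : ℝ, x = 1 + ((K : ℝ) * ((K : ℝ) * (HB * PS * HB))) := ⟨_, rfl⟩
  refine ⟨(Nat.factorial K) • x ^ K, ?_⟩
  intro Q hQ
  obtain ⟨A, hA⟩ : ∃ A : Matrix (Fin K) (Fin K) ℂ,
      A = 1 + cols H Finset.univ * Q * (cols H Finset.univ)ᴴ := ⟨_, rfl⟩
  have hcard : (Finset.univ : Finset ↥(Finset.univ : Finset (Fin K))).card = (K : ℕ) := by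
    rw [Finset.card_univ, Fintype.card_coe, Finset.card_univ, Fintype.card_fin]
  have hQe : ∀ t t' : ↥(Finset.univ : Finset (Fin K)), ‖Q t t'‖ ≤ PS := by
    intro t t'
    rw [hPS]; exact covSet_entry_le hP hQ t t'
  have hent : ∀ i i', ‖A i i'‖ ≤ x := by
    intro i i'
    rw [hA, Matrix.add_apply]
    have hAe : ‖(cols H Finset.univ * Q * (cols H Finset.univ)ᴴ) i i'‖
        ≤ (K : ℝ) * ((K : ℝ) * (HB * PS * HB)) := by
      rw [Matrix.mul_apply]
      refine le_trans (norm_sum_le _ _) ?_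
      have hterm : ∀ t' ∈ (Finset.univ : Finset ↥(Finset.univ : Finset (Fin K))),
          ‖(cols H Finset.univ * Q) i t' * (cols H Finset.univ)ᴴ t' i'‖
            ≤ (K : ℝ) * (HB * PS * HB) := by
        intro t' _
        rw [norm_mul]
        have hinner : ‖(cols H Finset.univ * Q) i t'‖ ≤ (K : ℝ) * (HB * PS) := by
          rw [Matrix.mul_apply]
          refine le_trans (norm_sum_le _ _) ?_
          have hpt : ∀ t ∈ (Finset.univ : Finset ↥(Finset.univ : Finset (Fin K))),
              ‖cols H Finset.univ i t * Q t t'‖ ≤ HB * PS := by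
            intro t _
            rw [norm_mul]
            exact mul_le_mul (hHB1 _ _) (hQe t t') (norm_nonneg _) hHB0
          refine le_trans (Finset.sum_le_card_nsmul _ _ _ hpt) ?_
          rw [hcard, nsmul_eq_mul]
        have houter : ‖(cols H Finset.univ)ᴴ t' i'‖ ≤ HB := by
          rw [Matrix.conjTranspose_apply]
          calc ‖star (cols H Finset.univ i' t')‖
              = ‖cols H Finset.univ i' t'‖ := by
                rw [Complex.star_def, Complex.norm_conj]
            _ ≤ HB := hHB1 _ _
        calc ‖(cols H Finset.univ * Q) i t'‖
              * ‖(cols H Finset.univ)ᴴ t' i'‖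
            ≤ ((K : ℝ) * (HB * PS)) * HB := by
              refine mul_le_mul hinner houter (norm_nonneg _) ?_
              positivity
          _ = (K : ℝ) * (HB * PS * HB) := by ring
      refine le_trans (Finset.sum_le_card_nsmul _ _ _ hterm) ?_
      rw [hcard, nsmul_eq_mul]
    have h1e : ‖(1 : Matrix (Fin K) (Fin K) ℂ) i i'‖ ≤ 1 := by
      rw [Matrix.one_apply]
      split <;> simp
    calc ‖(1 : Matrix (Fin K) (Fin K) ℂ) i i'
            + (cols H Finset.univ * Q * (cols H Finset.univ)ᴴ) i i'‖
        ≤ ‖(1 : Matrix (Fin K) (Fin K) ℂ) i i'‖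
            + ‖(cols H Finset.univ * Q * (cols H Finset.univ)ᴴ) i i'‖ :=
          norm_add_le _ _
      _ ≤ 1 + ((K : ℝ) * ((K : ℝ) * (HB * PS * HB))) := add_le_add h1e hAe
      _ = x := hx.symm
  have hdet : ‖A.det‖ ≤ (Nat.factorial (Fintype.card (Fin K))) • x ^ Fintype.card (Fin K) :=
    Matrix.det_le (abv := { toFun := fun z : ℂ => ‖z‖, map_mul' := norm_mul, nonneg' := norm_nonneg, eq_zero' := fun _ => norm_eq_zero, add_le' := norm_add_le }) (A := A) hent
  have hlogabs : ∀ y : ℝ, Real.log y ≤ |y| := by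
    intro y
    rcases eq_or_ne y 0 with rfl | hy
    · simp
    · calc Real.log y = Real.log |y| := (Real.log_abs y).symm
        _ ≤ |y| - 1 := Real.log_le_sub_one_of_pos (abs_pos.2 hy)
        _ ≤ |y| := by linarith
  rw [← hA]
  calc Real.log (A.det.re) ≤ |A.det.re| := hlogabs _
    _ ≤ ‖A.det‖ := Complex.abs_re_le_norm _
    _ ≤ (Nat.factorial K) • x ^ K := by
        simpa [Fintype.card_fin] using hdet

lemma compl_univ_isEmpty : IsEmpty ↥((Finset.univ : Finset (Fin K))ᶜ) := by
  constructor
  rintro ⟨a, ha⟩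
  simp at ha

lemma cols_compl_univ_zero (H : Matrix (Fin K) (Fin K) ℂ)
    (Q₂ : Matrix ↥((Finset.univ : Finset (Fin K))ᶜ) ↥((Finset.univ : Finset (Fin K))ᶜ) ℂ) :
    cols H (Finset.univ : Finset (Fin K))ᶜ * Q₂ * (cols H (Finset.univ : Finset (Fin K))ᶜ)ᴴ = 0 := by
  haveI := compl_univ_isEmpty (K := K)
  ext i j
  rw [Matrix.mul_apply]
  simp

lemma jamPayoff_univ (H : Matrix (Fin K) (Fin K) ℂ)
    (Q₁ : Matrix ↥(Finset.univ : Finset (Fin K)) ↥(Finset.univ : Finset (Fin K)) ℂ)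
    (Q₂ : Matrix ↥((Finset.univ : Finset (Fin K))ᶜ) ↥((Finset.univ : Finset (Fin K))ᶜ) ℂ) :
    jamPayoff H Finset.univ Q₁ Q₂ =
      Real.log ((1 + cols H Finset.univ * Q₁ * (cols H Finset.univ)ᴴ).det.re) := by
  rw [jamPayoff_eq, cols_compl_univ_zero]
  simp

lemma log_le_jamValue (H : Matrix (Fin K) (Fin K) ℂ) (P : Fin K → ℝ)
    (hP : ∀ k, 0 < P k) {W : Finset (Fin K)} (hW : W = Finset.univ)
    (Q : Matrix ↥W ↥W ℂ) (hQ : Q ∈ covSet P W) :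
    Real.log ((1 + cols H W * Q * (cols H W)ᴴ).det.re) ≤ jamValue H P Finset.univ := by
  subst hW
  haveI : Nonempty ↥(covSet P (Finset.univ : Finset (Fin K))ᶜ) :=
    ⟨⟨0, zero_mem_covSet hP⟩⟩
  apply le_ciInf
  intro Q₂
  have hbdd : BddAbove (Set.range fun Q₁ : covSet P (Finset.univ : Finset (Fin K)) =>
      jamPayoff H Finset.univ Q₁ Q₂) := by
    obtain ⟨M, hM⟩ := bdd H P hP
    refine ⟨M, ?_⟩
    rintro y ⟨Q₁, rfl⟩
    show jamPayoff H Finset.univ ↑Q₁ ↑Q₂ ≤ M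
    rw [jamPayoff_univ]
    exact hM _ Q₁.2
  have h := le_ciSup hbdd (⟨Q, hQ⟩ : covSet P (Finset.univ : Finset (Fin K)))
  rw [jamPayoff_univ] at h
  exact h

end JamAux

open JamAux

/-- Cohesiveness of the transmitter cooperation jamming game: for every partition
`S₁, …, S_N` of `{1,…,K}` with `2 ≤ N ≤ K`, `∑ₙ v(Sₙ) ≤ v({1,…,K})`. -/
theorem jamming_game_cohesive {K N : ℕ} (H : Matrix (Fin K) (Fin K) ℂ)
    (P : Fin K → ℝ) (hP : ∀ k, 0 < P k)
    (hN2 : 2 ≤ N) (hNK : N ≤ K)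
    (S : Fin N → Finset (Fin K)) (hne : ∀ n, (S n).Nonempty)
    (hdisj : ∀ i j, i ≠ j → Disjoint (S i) (S j))
    (hcover : Finset.univ.biUnion S = Finset.univ) :
    ∑ n, jamValue H P (S n) ≤ jamValue H P Finset.univ := by
  classical
  set T : ℕ → Finset (Fin K) :=
    fun n => (Finset.univ.filter fun m : Fin N => (m : ℕ) < n).biUnion S with hTdef
  have key : ∀ n, n ≤ N → ∀ ε : ℝ, 0 < ε → ∃ Q, Q ∈ covSet P (T n) ∧
      ∑ m ∈ Finset.univ.filter (fun m : Fin N => (m : ℕ) < n), jamValue H P (S m)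
        ≤ Real.log ((1 + cols H (T n) * Q * (cols H (T n))ᴴ).det.re) + n * ε := by
    intro n
    induction n with
    | zero =>
      intro _ ε hε
      refine ⟨0, zero_mem_covSet hP, ?_⟩
      have h1 : (Finset.univ.filter fun m : Fin N => (m : ℕ) < 0) = ∅ := by
        apply Finset.filter_false_of_mem
        intro m _
        omega
      rw [h1, Finset.sum_empty]
      simp
    | succ n ih =>
      intro hn1 ε hε
      have hn : n < N := hn1
      obtain ⟨Q, hQmem, hQ⟩ := ih (le_of_lt hn) ε hε
      set n' : Fin N := ⟨n, hn⟩ with hn'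
      have hdisjT : Disjoint (T n) (S n') := by
        rw [hTdef]
        rw [Finset.disjoint_biUnion_left]
        intro m hm
        apply hdisj
        intro hmn
        have := (Finset.mem_filter.mp hm).2
        rw [hmn] at this
        simp [hn'] at this
      have hsub : T n ⊆ (S n')ᶜ := fun y hy =>
        Finset.mem_compl.2 fun hy' => (Finset.disjoint_left.mp hdisjT hy) hy'
      have hjam : embedCov (T n) (S n')ᶜ Q ∈ covSet P (S n')ᶜ := embedCov_mem hP hQmem
      have hv : jamValue H P (S n') ≤
          ⨆ Q₁ : covSet P (S n'), jamPayoff H (S n') Q₁ (embedCov (T n) (S n')ᶜ Q) :=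
        jamValue_le_sup H hP _ _ hjam
      obtain ⟨Qn, hQnmem, hQn⟩ := exists_eps H hP (S n') (embedCov (T n) (S n')ᶜ Q) hε
      have hpay : jamPayoff H (S n') Qn (embedCov (T n) (S n')ᶜ Q) =
          Real.log ((1 + cols H (S n') * Qn * (cols H (S n'))ᴴ
              + cols H (T n) * Q * (cols H (T n))ᴴ).det.re)
            - Real.log ((1 + cols H (T n) * Q * (cols H (T n))ᴴ).det.re) := by
        rw [jamPayoff_eq, cols_embedCov H hsub]
      have hTsub : T n ⊆ T (n + 1) := by
        rw [hTdef]
        apply Finset.biUnion_subset_biUnion_of_subset_left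
        intro m hm
        rw [Finset.mem_filter] at hm ⊢
        exact ⟨hm.1, by omega⟩
      have hSsub : S n' ⊆ T (n + 1) := by
        rw [hTdef]
        apply Finset.subset_biUnion_of_mem
        rw [Finset.mem_filter]
        exact ⟨Finset.mem_univ _, by simp [hn']⟩
      refine ⟨embedCov (T n) (T (n + 1)) Q + embedCov (S n') (T (n + 1)) Qn,
        combine_mem hP hdisjT hQmem hQnmem, ?_⟩
      have hprod : cols H (T (n + 1))
          * (embedCov (T n) (T (n + 1)) Q + embedCov (S n') (T (n + 1)) Qn)
          * (cols H (T (n + 1)))ᴴ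
          = cols H (T n) * Q * (cols H (T n))ᴴ + cols H (S n') * Qn * (cols H (S n'))ᴴ := by
        rw [Matrix.mul_add, Matrix.add_mul, cols_embedCov H hTsub, cols_embedCov H hSsub]
      rw [hprod]
      have hfil : Finset.univ.filter (fun m : Fin N => (m : ℕ) < n + 1)
          = insert n' (Finset.univ.filter fun m : Fin N => (m : ℕ) < n) := by
        ext m
        simp only [Finset.mem_filter, Finset.mem_insert, Finset.mem_univ, true_and]
        constructor
        · intro hm
          by_cases hmn : m = n'
          · exact Or.inl hmn
          · right
            have : (m : ℕ) ≠ n := fun h => hmn (Fin.ext h)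
            omega
        · rintro (rfl | hm)
          · simp [hn']
          · omega
      rw [hfil, Finset.sum_insert (by simp [Finset.mem_filter, hn'])]
      have hchain := hv.trans hQn
      rw [hpay] at hchain
      have hcomm : (1 : Matrix (Fin K) (Fin K) ℂ)
          + (cols H (T n) * Q * (cols H (T n))ᴴ + cols H (S n') * Qn * (cols H (S n'))ᴴ)
          = 1 + cols H (S n') * Qn * (cols H (S n'))ᴴ
            + cols H (T n) * Q * (cols H (T n))ᴴ := by
        rw [← add_assoc, add_right_comm]
      rw [hcomm]
      push_cast
      linarith
  have hfilN : Finset.univ.filter (fun m : Fin N => (m : ℕ) < N) = Finset.univ :=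
    Finset.filter_true_of_mem fun m _ => m.isLt
  have hTN : T N = Finset.univ := by
    show (Finset.univ.filter fun m : Fin N => (m : ℕ) < N).biUnion S = Finset.univ
    rw [hfilN, hcover]
  by_contra hcon
  push_neg at hcon
  have hN0 : (0 : ℝ) < (N : ℝ) := by
    have : 0 < N := by omega
    exact_mod_cast this
  set δ : ℝ := (∑ n, jamValue H P (S n) - jamValue H P Finset.univ) / 2 with hδ
  have hδ0 : 0 < δ := by
    rw [hδ]; linarith
  obtain ⟨Q, hQmem, hQ⟩ := key N le_rfl (δ / N) (div_pos hδ0 hN0)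
  rw [hfilN] at hQ
  have hlog := log_le_jamValue H P hP hTN Q hQmem
  have hNδ : (N : ℝ) * (δ / N) = δ := by
    field_simp
  rw [hNδ] at hQ
  rw [hδ] at hQ
  linarith
end

section
/- Let M₁, …, M_N be n × n complex Hermitian positive semidefinite matrices. Then Σ_{i=1}^{N} [ log det(I + Σ_{j=1}^{N} M_j) − log det(I + Σ_{j≠i} M_j) ] ≤ log det(I + Σ_{j=1}^{N} M_j); that is, the sum over the coalitions of a partition of each coalition's Gaussian mutual information with all other coalitions treated as noise is at most the total Gaussian mutual information. -/
open Matrix ComplexOrder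

section SqrtCompat

open MatrixOrder

noncomputable def Matrix.PosSemidef.sqrt {n : ℕ} {A : Matrix (Fin n) (Fin n) ℂ}
    (_ : A.PosSemidef) : Matrix (Fin n) (Fin n) ℂ := CFC.sqrt A

lemma Matrix.PosSemidef.posSemidef_sqrt {n : ℕ} {A : Matrix (Fin n) (Fin n) ℂ}
    (hA : A.PosSemidef) : hA.sqrt.PosSemidef := (CFC.sqrt_nonneg A).posSemidef

lemma Matrix.PosSemidef.sqrt_mul_self {n : ℕ} {A : Matrix (Fin n) (Fin n) ℂ}
    (hA : A.PosSemidef) : hA.sqrt * hA.sqrt = A := CFC.sqrt_mul_sqrt_self A hA.nonneg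

end SqrtCompat

namespace LogDetAux

variable {n : ℕ}

/-- det of `1 + E` for psd `E` is a real number `≥ 1`. -/
lemma det_one_add_psd {E : Matrix (Fin n) (Fin n) ℂ} (hE : E.PosSemidef) :
    ∃ r : ℝ, (1 + E).det = (r : ℂ) ∧ 1 ≤ r := by
  have hH := hE.isHermitian
  set U : Matrix (Fin n) (Fin n) ℂ := (hH.eigenvectorUnitary : Matrix (Fin n) (Fin n) ℂ) with hU
  have hUU : U * star U = 1 := (Matrix.mem_unitaryGroup_iff).mp hH.eigenvectorUnitary.2
  have hUU' : star U * U = 1 := (Matrix.mem_unitaryGroup_iff').mp hH.eigenvectorUnitary.2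
  set D : Matrix (Fin n) (Fin n) ℂ := diagonal (RCLike.ofReal ∘ hH.eigenvalues) with hD
  have h1 : (1 : Matrix (Fin n) (Fin n) ℂ) + E = U * (1 + D) * star U := by
    have : U * (1 + D) * star U = U * star U + U * D * star U := by
      rw [mul_add, mul_one, add_mul]
    rw [this, hUU, hH.spectral_theorem, Unitary.conjStarAlgAut_apply]
  refine ⟨∏ i, (1 + hH.eigenvalues i), ?_, ?_⟩
  · rw [h1, det_mul, det_mul]
    have h2 : (1 : Matrix (Fin n) (Fin n) ℂ) + D
        = diagonal (fun i => 1 + (hH.eigenvalues i : ℂ)) := by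
      rw [hD, ← Matrix.diagonal_one, Matrix.diagonal_add]
      rfl
    rw [h2, det_diagonal]
    rw [mul_comm U.det _, mul_assoc, ← det_mul, hUU, det_one, mul_one]
    push_cast
    rfl
  · calc (1:ℝ) = ∏ _i : Fin n, 1 := by simp
      _ ≤ ∏ i, (1 + hH.eigenvalues i) :=
        Finset.prod_le_prod (fun i _ => zero_le_one)
          (fun i _ => le_add_of_nonneg_right (hE.eigenvalues_nonneg i))

lemma one_le_det_re {E : Matrix (Fin n) (Fin n) ℂ} (hE : E.PosSemidef) :
    1 ≤ (1 + E).det.re := by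
  obtain ⟨r, h, hr⟩ := det_one_add_psd hE
  rw [h]; simpa using hr

lemma det_pos_re {E : Matrix (Fin n) (Fin n) ℂ} (hE : E.PosSemidef) :
    0 < (1 + E).det.re := lt_of_lt_of_le one_pos (one_le_det_re hE)

lemma conj_psd {R X : Matrix (Fin n) (Fin n) ℂ} (hR : R.IsHermitian) (hX : X.PosSemidef) :
    (R * X * R).PosSemidef := by
  have := hX.conjTranspose_mul_mul_same R
  rwa [hR.eq] at this

/-- For psd `Q` with invertible determinant, there is a Hermitian `R` with
`R * R = Q⁻¹` and `R * Q * R = 1`. -/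
lemma exists_conj_inv {Q : Matrix (Fin n) (Fin n) ℂ} (hQ : Q.PosSemidef)
    (hu : IsUnit Q.det) :
    ∃ R : Matrix (Fin n) (Fin n) ℂ, R.IsHermitian ∧ IsUnit R.det ∧
      R.PosSemidef ∧ R * R = Q⁻¹ ∧ R * Q * R = 1 := by
  have hQi : Q⁻¹.PosSemidef := hQ.inv
  refine ⟨hQi.sqrt, hQi.posSemidef_sqrt.isHermitian, ?_, hQi.posSemidef_sqrt,
    hQi.sqrt_mul_self, ?_⟩
  · have hdet : hQi.sqrt.det * hQi.sqrt.det = Q⁻¹.det := by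
      rw [← det_mul, hQi.sqrt_mul_self]
    exact isUnit_of_mul_isUnit_left (hdet ▸ Q.isUnit_nonsing_inv_det hu)
  · set R := hQi.sqrt with hR
    have hRR : R * R = Q⁻¹ := hQi.sqrt_mul_self
    have hRu : IsUnit R.det :=
      isUnit_of_mul_isUnit_left ((by rw [← det_mul, hRR] : R.det * R.det = Q⁻¹.det) ▸
        Q.isUnit_nonsing_inv_det hu)
    have hQeq : Q = R⁻¹ * R⁻¹ := by
      rw [← Matrix.mul_inv_rev, hRR, Q.nonsing_inv_nonsing_inv hu]
    calc R * Q * R = R * (R⁻¹ * R⁻¹) * R := by rw [← hQeq]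
      _ = (R * R⁻¹) * (R⁻¹ * R) := by simp only [Matrix.mul_assoc]
      _ = 1 := by rw [R.mul_nonsing_inv hRu, R.nonsing_inv_mul hRu, one_mul]

end LogDetAux

namespace LogDetAux

variable {n : ℕ}

/-- Loewner anti-monotonicity of the inverse. -/
lemma inv_sub_inv_psd {P Q : Matrix (Fin n) (Fin n) ℂ}
    (hP : P.PosSemidef) (hPu : IsUnit P.det) (hQ : Q.PosSemidef) (hQu : IsUnit Q.det)
    (h : (Q - P).PosSemidef) : (P⁻¹ - Q⁻¹).PosSemidef := by
  obtain ⟨R, hRh, hRu, hRpsd, hRR, hRQR⟩ := exists_conj_inv hQ hQu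
  set C : Matrix (Fin n) (Fin n) ℂ := R * P * R with hC
  have hCpsd : C.PosSemidef := conj_psd hRh hP
  have hCu : IsUnit C.det := by
    rw [hC, det_mul, det_mul]
    exact (hRu.mul hPu).mul hRu
  have h1C : ((1 : Matrix (Fin n) (Fin n) ℂ) - C).PosSemidef := by
    have : R * (Q - P) * R = 1 - C := by
      rw [Matrix.mul_sub, Matrix.sub_mul, hRQR, hC]
    rw [← this]
    exact conj_psd hRh h
  obtain ⟨T, hTh, hTu, hTpsd, hTT, hTCT⟩ := exists_conj_inv hCpsd hCu
  have hCinv : (C⁻¹ - 1).PosSemidef := by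
    have : T * (1 - C) * T = C⁻¹ - 1 := by
      rw [Matrix.mul_sub, Matrix.sub_mul, hTCT, mul_one, hTT]
    rw [← this]
    exact conj_psd hTh h1C
  have hfin : R * (C⁻¹ - 1) * R = P⁻¹ - Q⁻¹ := by
    have hC' : C⁻¹ = R⁻¹ * P⁻¹ * R⁻¹ := by
      rw [hC, Matrix.mul_inv_rev, Matrix.mul_inv_rev, Matrix.mul_assoc]
    rw [Matrix.mul_sub, Matrix.sub_mul, mul_one, hRR, hC']
    congr 1
    calc R * (R⁻¹ * P⁻¹ * R⁻¹) * R = (R * R⁻¹) * P⁻¹ * (R⁻¹ * R) := by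
          simp only [Matrix.mul_assoc]
      _ = P⁻¹ := by rw [R.mul_nonsing_inv hRu, R.nonsing_inv_mul hRu, one_mul, mul_one]
  rw [← hfin]
  exact conj_psd hRh hCinv

/-- Determinant factorization: `det(1+X+M) = det(1+X) · det(1 + √M (1+X)⁻¹ √M)`. -/
lemma det_factor {X M : Matrix (Fin n) (Fin n) ℂ} (hX : X.PosSemidef) (hM : M.PosSemidef) :
    (1 + (X + M)).det
      = (1 + X).det * (1 + hM.sqrt * (1 + X)⁻¹ * hM.sqrt).det := by
  have h1X : ((1 : Matrix (Fin n) (Fin n) ℂ) + X).PosDef := Matrix.PosDef.one.add_posSemidef hX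
  have hu : IsUnit (1 + X).det := h1X.det_pos.ne'.isUnit
  have hsplit : (1 : Matrix (Fin n) (Fin n) ℂ) + (X + M)
      = (1 + X) * (1 + (1 + X)⁻¹ * M) := by
    rw [Matrix.mul_add, mul_one, ← Matrix.mul_assoc, Matrix.mul_nonsing_inv _ hu, one_mul,
      add_assoc]
  rw [hsplit, det_mul]
  congr 1
  conv_lhs => rw [← hM.sqrt_mul_self, ← Matrix.mul_assoc]
  rw [Matrix.det_one_add_mul_comm, Matrix.mul_assoc]

/-- Real-part version of the factorization. -/
lemma det_re_factor {X M : Matrix (Fin n) (Fin n) ℂ} (hX : X.PosSemidef) (hM : M.PosSemidef) :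
    (1 + (X + M)).det.re
      = (1 + X).det.re * (1 + hM.sqrt * (1 + X)⁻¹ * hM.sqrt).det.re := by
  have hG : (hM.sqrt * (1 + X)⁻¹ * hM.sqrt).PosSemidef := by
    have h1X : ((1 : Matrix (Fin n) (Fin n) ℂ) + X).PosSemidef := Matrix.PosSemidef.one.add hX
    exact conj_psd hM.posSemidef_sqrt.isHermitian h1X.inv
  obtain ⟨a, ha, _⟩ := det_one_add_psd hX
  obtain ⟨b, hb, _⟩ := det_one_add_psd hG
  rw [det_factor hX hM, ha, hb, ← Complex.ofReal_mul]
  simp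

/-- Monotonicity of `det(1+·).re` in the Loewner order. -/
lemma det_re_mono {E F : Matrix (Fin n) (Fin n) ℂ} (hE : E.PosSemidef) (hD : (F - E).PosSemidef) :
    (1 + E).det.re ≤ (1 + F).det.re := by
  have hEF : E + (F - E) = F := by abel
  have hG : (hD.sqrt * (1 + E)⁻¹ * hD.sqrt).PosSemidef := by
    have h1E : ((1 : Matrix (Fin n) (Fin n) ℂ) + E).PosSemidef := Matrix.PosSemidef.one.add hE
    exact conj_psd hD.posSemidef_sqrt.isHermitian h1E.inv
  have := det_re_factor hE hD
  rw [hEF] at this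
  rw [this]
  nlinarith [one_le_det_re hE, one_le_det_re hG]

end LogDetAux

namespace LogDetAux

variable {n : ℕ}

/-- Key exchange inequality: for psd `A ⪯ B` and psd `M`,
`det(1+B+M)·det(1+A) ≤ det(1+A+M)·det(1+B)` (real parts). -/
lemma key_ineq {A B M : Matrix (Fin n) (Fin n) ℂ} (hA : A.PosSemidef) (hB : B.PosSemidef)
    (hBA : (B - A).PosSemidef) (hM : M.PosSemidef) :
    (1 + (B + M)).det.re * (1 + A).det.re ≤ (1 + (A + M)).det.re * (1 + B).det.re := by
  have hsh : (hM.sqrt).IsHermitian := hM.posSemidef_sqrt.isHermitian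
  have h1A : ((1 : Matrix (Fin n) (Fin n) ℂ) + A).PosDef := Matrix.PosDef.one.add_posSemidef hA
  have h1B : ((1 : Matrix (Fin n) (Fin n) ℂ) + B).PosDef := Matrix.PosDef.one.add_posSemidef hB
  have hGA : (hM.sqrt * (1 + A)⁻¹ * hM.sqrt).PosSemidef := conj_psd hsh h1A.posSemidef.inv
  have hGB : (hM.sqrt * (1 + B)⁻¹ * hM.sqrt).PosSemidef := conj_psd hsh h1B.posSemidef.inv
  have hdiff : ((1 + A)⁻¹ - (1 + B)⁻¹).PosSemidef := by
    refine inv_sub_inv_psd h1A.posSemidef h1A.det_pos.ne'.isUnit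
      h1B.posSemidef h1B.det_pos.ne'.isUnit ?_
    have : (1 : Matrix (Fin n) (Fin n) ℂ) + B - (1 + A) = B - A := by abel
    rw [this]; exact hBA
  have hGdiff : (hM.sqrt * (1 + A)⁻¹ * hM.sqrt - hM.sqrt * (1 + B)⁻¹ * hM.sqrt).PosSemidef := by
    have : hM.sqrt * ((1 + A)⁻¹ - (1 + B)⁻¹) * hM.sqrt
        = hM.sqrt * (1 + A)⁻¹ * hM.sqrt - hM.sqrt * (1 + B)⁻¹ * hM.sqrt := by
      rw [Matrix.mul_sub, Matrix.sub_mul]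
    rw [← this]; exact conj_psd hsh hdiff
  have hmono : (1 + hM.sqrt * (1 + B)⁻¹ * hM.sqrt).det.re
      ≤ (1 + hM.sqrt * (1 + A)⁻¹ * hM.sqrt).det.re :=
    det_re_mono hGB hGdiff
  rw [det_re_factor hA hM, det_re_factor hB hM]
  have h1 := one_le_det_re hA
  have h2 := one_le_det_re hB
  have h3 := one_le_det_re hGB
  have hab : (0:ℝ) ≤ (1 + A).det.re * (1 + B).det.re :=
    mul_nonneg (by linarith) (by linarith)
  nlinarith [mul_le_mul_of_nonneg_left hmono hab]

end LogDetAux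


open ComplexOrder
/-- For Hermitian positive semidefinite matrices `M₁, …, M_N`, the sum over `i` of
`log det(I + ∑ⱼ Mⱼ) − log det(I + ∑_{j≠i} Mⱼ)` (each coalition's mutual information
with all other coalitions treated as noise) is at most the total mutual information
`log det(I + ∑ⱼ Mⱼ)`. -/
theorem sum_logdet_diff_le_logdet {n N : ℕ}
    (M : Fin N → Matrix (Fin n) (Fin n) ℂ) (hM : ∀ i, (M i).PosSemidef) :
    ∑ i, (Real.log ((1 + ∑ j, M j).det.re)
        - Real.log ((1 + ∑ j ∈ Finset.univ.erase i, M j).det.re))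
      ≤ Real.log ((1 + ∑ j, M j).det.re) := by
  open LogDetAux in
  classical
  have psd_sum : ∀ s : Finset (Fin N), (∑ j ∈ s, M j).PosSemidef := fun s =>
    Finset.sum_induction M _ (fun _ _ ha hb => ha.add hb) Matrix.PosSemidef.zero
      (fun j _ => hM j)
  -- partial sums
  set P : ℕ → Matrix (Fin n) (Fin n) ℂ :=
    fun k => ∑ j ∈ Finset.univ.filter (fun j : Fin N => (j : ℕ) < k), M j with hP
  have hPpsd : ∀ k, (P k).PosSemidef := fun k => psd_sum _
  have hP0 : P 0 = 0 := by simp [hP]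
  have hPN : P N = ∑ j, M j := by
    simp only [hP]
    refine Finset.sum_congr ?_ fun _ _ => rfl
    exact Finset.filter_true_of_mem fun j _ => j.isLt
  have hPsucc : ∀ i : Fin N, P ((i : ℕ) + 1) = P (i : ℕ) + M i := by
    intro i
    have hfil : Finset.univ.filter (fun j : Fin N => (j : ℕ) < (i : ℕ) + 1)
        = insert i (Finset.univ.filter fun j : Fin N => (j : ℕ) < (i : ℕ)) := by
      ext j
      simp only [Finset.mem_filter, Finset.mem_univ, true_and, Finset.mem_insert,
        Nat.lt_succ_iff_lt_or_eq]
      constructor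
      · rintro (h | h)
        · exact Or.inr h
        · exact Or.inl (Fin.ext h)
      · rintro (rfl | h)
        · exact Or.inr rfl
        · exact Or.inl h
    have hnotmem : i ∉ Finset.univ.filter fun j : Fin N => (j : ℕ) < (i : ℕ) := by simp
    simp only [hP]
    rw [hfil, Finset.sum_insert hnotmem, add_comm]
  -- per-index inequality
  have hterm : ∀ i : Fin N,
      Real.log ((1 + ∑ j, M j).det.re)
        - Real.log ((1 + ∑ j ∈ Finset.univ.erase i, M j).det.re)
      ≤ Real.log ((1 + P ((i : ℕ) + 1)).det.re) - Real.log ((1 + P (i : ℕ)).det.re) := by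
    intro i
    set E : Matrix (Fin n) (Fin n) ℂ := ∑ j ∈ Finset.univ.erase i, M j with hE
    have hEpsd : E.PosSemidef := psd_sum _
    have hEM : E + M i = ∑ j, M j := Finset.sum_erase_add _ _ (Finset.mem_univ i)
    have hsub : Finset.univ.filter (fun j : Fin N => (j : ℕ) < (i : ℕ))
        ⊆ Finset.univ.erase i := by
      intro j hj
      simp only [Finset.mem_filter, Finset.mem_univ, true_and] at hj
      exact Finset.mem_erase.mpr ⟨fun h => absurd hj (by simp [h]), Finset.mem_univ j⟩
    have hdiffpsd : (E - P (i : ℕ)).PosSemidef := by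
      have := Finset.sum_sdiff (f := M) hsub
      have heq : E - P (i : ℕ)
          = ∑ j ∈ Finset.univ.erase i \
              (Finset.univ.filter fun j : Fin N => (j : ℕ) < (i : ℕ)), M j := by
        simp only [hE, hP]
        rw [← this]; abel
      rw [heq]; exact psd_sum _
    have hkey := key_ineq (hPpsd (i : ℕ)) hEpsd hdiffpsd (hM i)
    rw [hEM, ← hPsucc i] at hkey
    have d1 := det_pos_re (hPpsd (i : ℕ))
    have d2 := det_pos_re hEpsd
    have d3 := det_pos_re (hPpsd ((i : ℕ) + 1))
    have d4 : (0:ℝ) < (1 + ∑ j, M j).det.re := det_pos_re (psd_sum _)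
    have hlog := Real.log_le_log (by positivity) hkey
    rw [Real.log_mul (by positivity) (by positivity),
      Real.log_mul (by positivity) (by positivity)] at hlog
    linarith
  set g : ℕ → ℝ := fun k => Real.log ((1 + P k).det.re) with hg
  calc ∑ i, (Real.log ((1 + ∑ j, M j).det.re)
        - Real.log ((1 + ∑ j ∈ Finset.univ.erase i, M j).det.re))
      ≤ ∑ i : Fin N, (g ((i : ℕ) + 1) - g (i : ℕ)) :=
        Finset.sum_le_sum fun i _ => hterm i
    _ = ∑ k ∈ Finset.range N, (g (k + 1) - g k) :=
        Fin.sum_univ_eq_sum_range (fun k => g (k + 1) - g k) N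
    _ = g N - g 0 := Finset.sum_range_sub g N
    _ = Real.log ((1 + ∑ j, M j).det.re) := by
        rw [hg]
        simp only [hPN, hP0]
        simp
end

section
/- (Key inequality for the partial decode-and-forward power allocation.) Let S be a finite set of users, Sₙ ⊆ S, and m ∈ S \ Sₙ. Let h_{m,j} ≥ 0 and h_{d,j} ≥ 0 be real gains with h_{m,j} ≥ h_{d,j} for every j ∈ S, and let p_{j,c} ≥ 0 and p_{j,d} ≥ 0 with p̃_j = p_{j,c} + p_{j,d}. Then 1 + ( Σ_{i∈Sₙ} h_{m,i} p_{i,c} ) / ( 1 + Σ_{j∈S, j≠m} h_{m,j} p_{j,d} ) ≤ ( 1 + Σ_{i∈Sₙ} h_{m,i} p̃_i ) / ( 1 + Σ_{i∈Sₙ} h_{d,i} p_{i,d} ). -/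
/-- Key inequality for the partial decode-and-forward power allocation: for a
coalition `S`, a subset `Sₙ ⊆ S`, a decoder `m ∈ S \ Sₙ`, clustered gains
`h_{m,j} ≥ h_{d,j} ≥ 0`, and nonnegative powers `p_{j,c}, p_{j,d}` with
`p̃_j = p_{j,c} + p_{j,d}`,
`1 + (∑_{i∈Sₙ} h_{m,i} p_{i,c}) / (1 + ∑_{j∈S, j≠m} h_{m,j} p_{j,d})
   ≤ (1 + ∑_{i∈Sₙ} h_{m,i} p̃_i) / (1 + ∑_{i∈Sₙ} h_{d,i} p_{i,d})`. -/
theorem pdf_key_inequality {ι : Type*} [DecidableEq ι]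
    (S Sn : Finset ι) (hSn : Sn ⊆ S) (m : ι) (hmS : m ∈ S) (hmn : m ∉ Sn)
    (hm hd : ι → ℝ)
    (hm_nonneg : ∀ j ∈ S, 0 ≤ hm j) (hd_nonneg : ∀ j ∈ S, 0 ≤ hd j)
    (hcluster : ∀ j ∈ S, hd j ≤ hm j)
    (pc pd : ι → ℝ) (hpc : ∀ j ∈ S, 0 ≤ pc j) (hpd : ∀ j ∈ S, 0 ≤ pd j) :
    1 + (∑ i ∈ Sn, hm i * pc i) / (1 + ∑ j ∈ S.erase m, hm j * pd j)
      ≤ (1 + ∑ i ∈ Sn, hm i * (pc i + pd i))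
        / (1 + ∑ i ∈ Sn, hd i * pd i) := by
  set A := ∑ i ∈ Sn, hm i * pc i with hA
  set B := ∑ j ∈ S.erase m, hm j * pd j with hB
  set D := ∑ i ∈ Sn, hd i * pd i with hD
  have hSnE : Sn ⊆ S.erase m := Finset.subset_erase.mpr ⟨hSn, hmn⟩
  have hAnn : 0 ≤ A :=
    Finset.sum_nonneg fun i hi =>
      mul_nonneg (hm_nonneg i (hSn hi)) (hpc i (hSn hi))
  have hDnn : 0 ≤ D :=
    Finset.sum_nonneg fun i hi =>
      mul_nonneg (hd_nonneg i (hSn hi)) (hpd i (hSn hi))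
  have hDB : D ≤ B := by
    calc D ≤ ∑ i ∈ Sn, hm i * pd i :=
          Finset.sum_le_sum fun i hi =>
            mul_le_mul_of_nonneg_right (hcluster i (hSn hi)) (hpd i (hSn hi))
      _ ≤ B :=
          Finset.sum_le_sum_of_subset_of_nonneg hSnE fun j hj _ =>
            mul_nonneg (hm_nonneg j (Finset.mem_of_mem_erase hj))
              (hpd j (Finset.mem_of_mem_erase hj))
  have hDpos : (0:ℝ) < 1 + D := by linarith
  have hBpos : (0:ℝ) < 1 + B := by linarith
  have hAC : A + D ≤ ∑ i ∈ Sn, hm i * (pc i + pd i) := by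
    have : ∑ i ∈ Sn, hm i * (pc i + pd i)
        = A + ∑ i ∈ Sn, hm i * pd i := by
      rw [hA, ← Finset.sum_add_distrib]
      exact Finset.sum_congr rfl fun i _ => by ring
    rw [this]
    have : D ≤ ∑ i ∈ Sn, hm i * pd i :=
      Finset.sum_le_sum fun i hi =>
        mul_le_mul_of_nonneg_right (hcluster i (hSn hi)) (hpd i (hSn hi))
    linarith
  calc 1 + A / (1 + B) ≤ 1 + A / (1 + D) := by gcongr
    _ = (1 + D + A) / (1 + D) := by field_simp
    _ ≤ (1 + ∑ i ∈ Sn, hm i * (pc i + pd i)) / (1 + D) := by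
        exact (div_le_div_iff_of_pos_right hDpos).mpr (by linarith)
    _ = _ := rfl
end

section
/- Let S be a finite set of users partitioned into nonempty sets S₁, …, S_N, and for each n let mₙ ∈ S \ Sₙ. Let h_{m,j} ≥ 0 and h_{d,j} ≥ 0 be real gains with h_{m,j} ≥ h_{d,j} for all m, j ∈ S with m ≠ j, and let p_{j,c} ≥ 0, p_{j,d} ≥ 0 with p̃_j = p_{j,c} + p_{j,d}. Then ∏_{n=1}^{N} [ ( 1 + Σ_{i∈Sₙ} h_{mₙ,i} p̃_i ) / ( 1 + ( Σ_{i∈Sₙ} h_{mₙ,i} p_{i,c} ) / ( 1 + Σ_{j∈S, j≠mₙ} h_{mₙ,j} p_{j,d} ) ) ] ≥ ∏_{n=1}^{N} ( 1 + Σ_{i∈Sₙ} h_{d,i} p_{i,d} ). -/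
/-- Product form of the PDF power-allocation inequality: for a partition
`S₁, …, S_N` of the coalition `S` with decoders `mₙ ∈ S \ Sₙ`, clustered
nonnegative gains (`h_{m,j} ≥ h_{d,j}` for `m ≠ j`), and nonnegative powers with
`p̃_j = p_{j,c} + p_{j,d}`,
`∏ₙ (1 + ∑_{i∈Sₙ} h_{mₙ,i} p̃_i) /
     (1 + (∑_{i∈Sₙ} h_{mₙ,i} p_{i,c})/(1 + ∑_{j∈S, j≠mₙ} h_{mₙ,j} p_{j,d}))
   ≥ ∏ₙ (1 + ∑_{i∈Sₙ} h_{d,i} p_{i,d})`. -/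
theorem pdf_product_inequality {ι : Type*} [DecidableEq ι]
    (S : Finset ι) (N : ℕ) (Sn : Fin N → Finset ι) (m : Fin N → ι)
    (hSsub : ∀ n, Sn n ⊆ S) (hne : ∀ n, (Sn n).Nonempty)
    (hdisj : ∀ i j, i ≠ j → Disjoint (Sn i) (Sn j))
    (hcover : Finset.univ.biUnion Sn = S)
    (hmS : ∀ n, m n ∈ S) (hmn : ∀ n, m n ∉ Sn n)
    (h : ι → ι → ℝ) (hd : ι → ℝ)
    (h_nonneg : ∀ m' ∈ S, ∀ j ∈ S, 0 ≤ h m' j)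
    (hd_nonneg : ∀ j ∈ S, 0 ≤ hd j)
    (hcluster : ∀ m' ∈ S, ∀ j ∈ S, m' ≠ j → hd j ≤ h m' j)
    (pc pd : ι → ℝ) (hpc : ∀ j ∈ S, 0 ≤ pc j) (hpd : ∀ j ∈ S, 0 ≤ pd j) :
    ∏ n, ((1 + ∑ i ∈ Sn n, h (m n) i * (pc i + pd i))
        / (1 + (∑ i ∈ Sn n, h (m n) i * pc i)
            / (1 + ∑ j ∈ S.erase (m n), h (m n) j * pd j)))
      ≥ ∏ n, (1 + ∑ i ∈ Sn n, hd i * pd i) := by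
  rw [ge_iff_le]
  apply Finset.prod_le_prod
  · intro n _
    have hB : 0 ≤ ∑ i ∈ Sn n, hd i * pd i :=
      Finset.sum_nonneg fun i hi =>
        mul_nonneg (hd_nonneg i (hSsub n hi)) (hpd i (hSsub n hi))
    linarith
  · intro n _
    set B := ∑ i ∈ Sn n, hd i * pd i with hBdef
    set C := ∑ i ∈ Sn n, h (m n) i * pc i with hCdef
    set A := ∑ i ∈ Sn n, h (m n) i * pd i with hAdef
    set D := ∑ j ∈ S.erase (m n), h (m n) j * pd j with hDdef
    have hC0 : 0 ≤ C :=
      Finset.sum_nonneg fun i hi =>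
        mul_nonneg (h_nonneg _ (hmS n) i (hSsub n hi)) (hpc i (hSsub n hi))
    have hA0 : 0 ≤ A :=
      Finset.sum_nonneg fun i hi =>
        mul_nonneg (h_nonneg _ (hmS n) i (hSsub n hi)) (hpd i (hSsub n hi))
    have hBA : B ≤ A := by
      apply Finset.sum_le_sum
      intro i hi
      have hne' : m n ≠ i := fun he => hmn n (he ▸ hi)
      exact mul_le_mul_of_nonneg_right
        (hcluster _ (hmS n) i (hSsub n hi) hne') (hpd i (hSsub n hi))
    have hsub : Sn n ⊆ S.erase (m n) := by
      rw [Finset.subset_erase]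
      exact ⟨hSsub n, fun he => hmn n he⟩
    have hAD : A ≤ D := by
      apply Finset.sum_le_sum_of_subset_of_nonneg hsub
      intro j hj _
      exact mul_nonneg (h_nonneg _ (hmS n) j (Finset.mem_of_mem_erase hj))
        (hpd j (Finset.mem_of_mem_erase hj))
    have hD0 : 0 ≤ D := le_trans hA0 hAD
    have hD1 : (0:ℝ) < 1 + D := by linarith
    have hq0 : 0 ≤ C / (1 + D) := div_nonneg hC0 hD1.le
    have hden : (0:ℝ) < 1 + C / (1 + D) := by linarith
    have hsum : ∑ i ∈ Sn n, h (m n) i * (pc i + pd i) = C + A := by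
      rw [hCdef, hAdef, ← Finset.sum_add_distrib]
      exact Finset.sum_congr rfl fun i _ => by ring
    rw [le_div_iff₀ hden, hsum]
    have hq : C / (1 + D) * (1 + D) = C := div_mul_cancel₀ C hD1.ne'
    nlinarith [mul_le_mul_of_nonneg_right (le_trans hBA hAD) hq0]
end

section
/- (Sum-rate part of the theorem that setting all direct-stream powers to zero maximizes the PDF rate region for clustered users.) Let S be a finite set of users partitioned into nonempty sets S₁, …, S_N with decoders mₙ ∈ S \ Sₙ, let h_{m,j} ≥ 0 and h_{d,j} ≥ 0 be real gains with h_{m,j} ≥ h_{d,j} for all m, j ∈ S with m ≠ j, and let p_{j,c} ≥ 0, p_{j,d} ≥ 0 with p̃_j = p_{j,c} + p_{j,d}. Then the PDF sum-rate bound with direct powers p_{j,d} is no larger than the corresponding bound with all direct power moved to the cooperative streams: log( 1 + Σ_{i∈S} h_{d,i} p_{i,d} ) + Σ_{n=1}^{N} log( 1 + ( Σ_{i∈Sₙ} h_{mₙ,i} p_{i,c} ) / ( 1 + Σ_{j∈S, j≠mₙ} h_{mₙ,j} p_{j,d} ) ) ≤ Σ_{n=1}^{N} log( 1 + Σ_{i∈Sₙ}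 h_{mₙ,i} p̃_i ). -/
lemma one_add_sum_le_prod_one_add {α : Type*} [DecidableEq α] (s : Finset α) (g : α → ℝ)
    (hg : ∀ a ∈ s, 0 ≤ g a) : 1 + ∑ a ∈ s, g a ≤ ∏ a ∈ s, (1 + g a) := by
  induction s using Finset.induction with
  | empty => simp
  | @insert a s ha ih =>
    rw [Finset.sum_insert ha, Finset.prod_insert ha]
    have h1 : 1 + ∑ x ∈ s, g x ≤ ∏ x ∈ s, (1 + g x) :=
      ih fun x hx => hg x (Finset.mem_insert_of_mem hx)
    have h2 : 0 ≤ g a := hg a (Finset.mem_insert_self a s)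
    have h3 : 0 ≤ ∑ x ∈ s, g x :=
      Finset.sum_nonneg fun x hx => hg x (Finset.mem_insert_of_mem hx)
    nlinarith

/-- Sum-rate part of the theorem that zero direct-stream power maximizes the PDF
rate region for clustered users: for a partition `S₁, …, S_N` of the coalition `S`
with decoders `mₙ ∈ S \ Sₙ`, clustered nonnegative gains (`h_{m,j} ≥ h_{d,j}` for
`m ≠ j`), and nonnegative powers with `p̃_j = p_{j,c} + p_{j,d}`,
`log(1 + ∑_{i∈S} h_{d,i} p_{i,d})
   + ∑ₙ log(1 + (∑_{i∈Sₙ} h_{mₙ,i} p_{i,c})/(1 + ∑_{j∈S, j≠mₙ} h_{mₙ,j} p_{j,d}))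
 ≤ ∑ₙ log(1 + ∑_{i∈Sₙ} h_{mₙ,i} p̃_i)`. -/
theorem pdf_zero_direct_power_sum_rate {ι : Type*} [DecidableEq ι]
    (S : Finset ι) (N : ℕ) (Sn : Fin N → Finset ι) (m : Fin N → ι)
    (hSsub : ∀ n, Sn n ⊆ S) (hne : ∀ n, (Sn n).Nonempty)
    (hdisj : ∀ i j, i ≠ j → Disjoint (Sn i) (Sn j))
    (hcover : Finset.univ.biUnion Sn = S)
    (hmS : ∀ n, m n ∈ S) (hmn : ∀ n, m n ∉ Sn n)
    (h : ι → ι → ℝ) (hd : ι → ℝ)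
    (h_nonneg : ∀ m' ∈ S, ∀ j ∈ S, 0 ≤ h m' j)
    (hd_nonneg : ∀ j ∈ S, 0 ≤ hd j)
    (hcluster : ∀ m' ∈ S, ∀ j ∈ S, m' ≠ j → hd j ≤ h m' j)
    (pc pd : ι → ℝ) (hpc : ∀ j ∈ S, 0 ≤ pc j) (hpd : ∀ j ∈ S, 0 ≤ pd j) :
    Real.log (1 + ∑ i ∈ S, hd i * pd i)
      + ∑ n, Real.log (1 + (∑ i ∈ Sn n, h (m n) i * pc i)
          / (1 + ∑ j ∈ S.erase (m n), h (m n) j * pd j))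
      ≤ ∑ n, Real.log (1 + ∑ i ∈ Sn n, h (m n) i * (pc i + pd i)) := by
  set A : ℝ := ∑ i ∈ S, hd i * pd i with hA
  set B : Fin N → ℝ := fun n => ∑ i ∈ Sn n, h (m n) i * pd i with hB
  set C : Fin N → ℝ := fun n => ∑ i ∈ Sn n, h (m n) i * pc i with hC
  set D : Fin N → ℝ := fun n => ∑ j ∈ S.erase (m n), h (m n) j * pd j with hD
  have hBnn : ∀ n, 0 ≤ B n := fun n =>
    Finset.sum_nonneg fun i hi =>
      mul_nonneg (h_nonneg _ (hmS n) _ (hSsub n hi)) (hpd _ (hSsub n hi))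
  have hCnn : ∀ n, 0 ≤ C n := fun n =>
    Finset.sum_nonneg fun i hi =>
      mul_nonneg (h_nonneg _ (hmS n) _ (hSsub n hi)) (hpc _ (hSsub n hi))
  have hBD : ∀ n, B n ≤ D n := by
    intro n
    apply Finset.sum_le_sum_of_subset_of_nonneg
    · intro i hi
      exact Finset.mem_erase.mpr ⟨fun he => hmn n (he ▸ hi), hSsub n hi⟩
    · intro j hj _
      exact mul_nonneg (h_nonneg _ (hmS n) _ (Finset.mem_of_mem_erase hj))
        (hpd _ (Finset.mem_of_mem_erase hj))
  have hAnn : 0 ≤ A :=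
    Finset.sum_nonneg fun i hi => mul_nonneg (hd_nonneg _ hi) (hpd _ hi)
  have hAB : A ≤ ∑ n, B n := by
    rw [hA, ← hcover, Finset.sum_biUnion]
    · apply Finset.sum_le_sum
      intro n _
      apply Finset.sum_le_sum
      intro i hi
      have hne' : m n ≠ i := fun he => hmn n (he ▸ hi)
      exact mul_le_mul_of_nonneg_right
        (hcluster _ (hmS n) _ (hSsub n hi) hne') (hpd _ (hSsub n hi))
    · intro i _ j _ hij
      exact hdisj i j hij
  -- Step b: log(1+A) ≤ ∑ log(1+B n)
  have step_b : Real.log (1 + A) ≤ ∑ n, Real.log (1 + B n) := by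
    have h1 : 1 + A ≤ ∏ n, (1 + B n) := by
      calc 1 + A ≤ 1 + ∑ n, B n := by linarith
        _ ≤ ∏ n, (1 + B n) :=
          one_add_sum_le_prod_one_add _ _ fun n _ => hBnn n
    calc Real.log (1 + A) ≤ Real.log (∏ n, (1 + B n)) :=
          Real.log_le_log (by linarith) h1
      _ = ∑ n, Real.log (1 + B n) := by
          rw [Real.log_prod]
          intro n _
          have := hBnn n; positivity
  -- Step a: termwise
  have step_a : ∀ n : Fin N, Real.log (1 + C n / (1 + D n))
      ≤ Real.log (1 + C n + B n) - Real.log (1 + B n) := by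
    intro n
    have hBp : (0:ℝ) < 1 + B n := by have := hBnn n; linarith
    have hDp : (0:ℝ) < 1 + D n := by have := (hBnn n).trans (hBD n); linarith
    have h1 : C n / (1 + D n) ≤ C n / (1 + B n) := by
      apply div_le_div_of_nonneg_left (hCnn n) hBp
      linarith [hBD n]
    have h2 : (1:ℝ) + C n / (1 + B n) = (1 + B n + C n) / (1 + B n) := by
      field_simp
    calc Real.log (1 + C n / (1 + D n))
        ≤ Real.log (1 + C n / (1 + B n)) := by
          apply Real.log_le_log _ (by linarith)
          have : 0 ≤ C n / (1 + D n) := div_nonneg (hCnn n) hDp.le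
          linarith
      _ = Real.log ((1 + B n + C n) / (1 + B n)) := by rw [h2]
      _ = Real.log (1 + B n + C n) - Real.log (1 + B n) := by
          rw [Real.log_div (by nlinarith [hCnn n]) (by linarith)]
      _ = Real.log (1 + C n + B n) - Real.log (1 + B n) := by ring_nf
  have hRHS : ∀ n : Fin N, (1 + ∑ i ∈ Sn n, h (m n) i * (pc i + pd i))
      = 1 + C n + B n := by
    intro n
    simp only [hB, hC, mul_add, Finset.sum_add_distrib]
    ring
  calc Real.log (1 + A)
        + ∑ n, Real.log (1 + C n / (1 + D n))
      ≤ (∑ n, Real.log (1 + B n))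
        + ∑ n, (Real.log (1 + C n + B n) - Real.log (1 + B n)) :=
        add_le_add step_b (Finset.sum_le_sum fun n _ => step_a n)
    _ = ∑ n, Real.log (1 + C n + B n) := by
        rw [Finset.sum_sub_distrib]; ring
    _ = ∑ n, Real.log (1 + ∑ i ∈ Sn n, h (m n) i * (pc i + pd i)) := by
        exact Finset.sum_congr rfl fun n _ => by rw [hRHS n]
end
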